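/- arXiv:2510.25581 — 7 statements merged into one kernel-verified Lean document; each statement's English description precedes it below -/
import Mathlib

section
/- Let $M, N \colon [-1,0] \to \mathcal{M}_d(\mathbb{R})$ be normalized functions of bounded variation, and let $\alpha \in \mathbb{R}$, $R > 0$ be such that $\mathrm{Var}(M) \le R$ and $\mathrm{Var}(N) \le R$. Then there exists a constant $C = C(\alpha, R, d) > 0$ such that $\sup_{\mathrm{Re}\, s \ge \alpha} |\Delta_M(s) - \Delta_N(s)| \le C \, \mathrm{Var}(M - N)$, where $\Delta_M(s) = \det(I - \int_{-1}^0 e^{s\theta}\, dM(\theta))$. -/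
open MeasureTheory Set ENNReal NNReal Complex

attribute [local instance] Matrix.normedAddCommGroup Matrix.normedSpace

/-- Lebesgue–Stieltjes-style integral of a complex function against a signed measure,
over the interval `[a,b]`. -/
noncomputable def sInt (a b : ℝ) (s : SignedMeasure ℝ) (ψ : ℝ → ℂ) : ℂ :=
  (∫ θ in Set.Icc a b, ψ θ ∂s.toJordanDecomposition.posPart) -
  (∫ θ in Set.Icc a b, ψ θ ∂s.toJordanDecomposition.negPart)

/-- Entrywise integral of a complex function against a matrix-valued measure. -/
noncomputable def mInt {d : ℕ} (a b : ℝ) (μ : Fin d → Fin d → SignedMeasure ℝ)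
    (ψ : ℝ → ℂ) : Matrix (Fin d) (Fin d) ℂ :=
  Matrix.of fun i j => sInt a b (μ i j) ψ

/-- Characteristic function `Δ(s) = det(I - ∫ e^{sθ} dM(θ))` of the matrix measure `μ`. -/
noncomputable def charFn {d : ℕ} (μ : Fin d → Fin d → SignedMeasure ℝ) (s : ℂ) : ℂ :=
  Matrix.det (1 - mInt (-1) 0 μ (fun θ => Complex.exp (s * θ)))

/-- The matrix measure `μ` is the measure associated with `M` via `M t = μ([a,t])`. -/
def IsLinked {d : ℕ} (M : ℝ → Matrix (Fin d) (Fin d) ℝ)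
    (μ : Fin d → Fin d → SignedMeasure ℝ) (a b : ℝ) : Prop :=
  ∀ t ∈ Set.Icc a b, ∀ i j, M t i j = μ i j (Set.Icc a t)

/-- `M` is normalized: `M a = 0` and `M` is right-continuous on `(a,b)`. -/
def Normalized {d : ℕ} (M : ℝ → Matrix (Fin d) (Fin d) ℝ) (a b : ℝ) : Prop :=
  M a = 0 ∧ ∀ t ∈ Set.Ioo a b, ContinuousWithinAt M (Set.Ici t) t

/-- Total variation of a matrix-valued measure over finite Borel partitions of `[a,b]`. -/
noncomputable def measVar {d : ℕ} (μ : Fin d → Fin d → SignedMeasure ℝ) (a b : ℝ) : ℝ≥0∞ :=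
  ⨆ p : {p : Σ k : ℕ, Fin k → Set ℝ //
      (∀ i, MeasurableSet (p.2 i)) ∧ (Pairwise fun i j => Disjoint (p.2 i) (p.2 j)) ∧
      (⋃ i, p.2 i) = Set.Icc a b},
    ∑ i, (‖Matrix.of fun r c => (μ r c) (p.1.2 i)‖₊ : ℝ≥0∞)

/-- The Hale–Silkowski quantity `ρ_HS`. -/
noncomputable def rhoHS {d : ℕ} (μ : Fin d → Fin d → SignedMeasure ℝ) : ℝ≥0∞ :=
  ⨆ ξ : {ξ : ℝ → ℝ // Measurable ξ},
    spectralRadius ℂ (mInt (-1) 0 μ (fun θ => Complex.exp (Complex.I * (ξ.1 θ : ℂ))))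


noncomputable def Complex.abs : AbsoluteValue ℂ ℝ where
  toFun z := ‖z‖
  map_mul' := norm_mul
  nonneg' := norm_nonneg
  eq_zero' _ := norm_eq_zero
  add_le' := norm_add_le

lemma Complex.norm_eq_abs (z : ℂ) : ‖z‖ = Complex.abs z := rfl

lemma sm_apply (s : SignedMeasure ℝ) {A : Set ℝ} (hA : MeasurableSet A) :
    s A = (s.toJordanDecomposition.posPart A).toReal
      - (s.toJordanDecomposition.negPart A).toReal := by
  conv_lhs => rw [← s.toSignedMeasure_toJordanDecomposition]
  haveI := s.toJordanDecomposition.posPart_finite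
  haveI := s.toJordanDecomposition.negPart_finite
  rw [JordanDecomposition.toSignedMeasure, VectorMeasure.sub_apply,
    Measure.toSignedMeasure_apply_measurable hA, Measure.toSignedMeasure_apply_measurable hA]
  rfl

lemma evar_entry_le {d : ℕ} (M : ℝ → Matrix (Fin d) (Fin d) ℝ) (i j : Fin d) (s : Set ℝ) :
    eVariationOn (fun t => M t i j) s ≤ eVariationOn M s := by
  have hL : LipschitzWith 1 (fun A : Matrix (Fin d) (Fin d) ℝ => A i j) := by
    apply LipschitzWith.of_dist_le_mul
    intro A B
    rw [NNReal.coe_one, one_mul]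
    simpa [dist_eq_norm] using Matrix.norm_entry_le_entrywise_sup_norm (A - B) (i := i) (j := j)
  have h2 : LipschitzOnWith 1 (fun A : Matrix (Fin d) (Fin d) ℝ => A i j)
      (Set.univ : Set (Matrix (Fin d) (Fin d) ℝ)) := hL.lipschitzOnWith
  have := h2.comp_eVariationOn_le (g := M) (s := s) (Set.mapsTo_univ _ _)
  simpa [Function.comp_def] using this

lemma evar_sub_le {E : Type*} [NormedAddCommGroup E] (f g : ℝ → E) (s : Set ℝ) :
    eVariationOn (fun t => f t - g t) s ≤ eVariationOn f s + eVariationOn g s := by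
  apply iSup_le
  rintro ⟨n, u, hu, us⟩
  calc ∑ i ∈ Finset.range n, edist (f (u (i+1)) - g (u (i+1))) (f (u i) - g (u i))
      ≤ ∑ i ∈ Finset.range n,
        (edist (f (u (i+1))) (f (u i)) + edist (g (u (i+1))) (g (u i))) := by
        apply Finset.sum_le_sum
        intro k _
        simp only [edist_dist]
        rw [← ENNReal.ofReal_add dist_nonneg dist_nonneg]
        exact ENNReal.ofReal_le_ofReal (dist_sub_sub_le _ _ _ _)
    _ = ∑ i ∈ Finset.range n, edist (f (u (i+1))) (f (u i))
        + ∑ i ∈ Finset.range n, edist (g (u (i+1))) (g (u i)) := Finset.sum_add_distrib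
    _ ≤ _ := add_le_add (eVariationOn.sum_le (f := f) (n := n) hu us) (eVariationOn.sum_le (f := g) (n := n) hu us)

lemma prod_diff_bound {ι : Type*} (s : Finset ι) (a b : ι → ℂ) (K : ℝ) (hK : 1 ≤ K)
    (ha : ∀ i ∈ s, Complex.abs (a i) ≤ K) (hb : ∀ i ∈ s, Complex.abs (b i) ≤ K) :
    Complex.abs (∏ i ∈ s, a i - ∏ i ∈ s, b i) ≤ K ^ s.card * ∑ i ∈ s, Complex.abs (a i - b i) := by
  classical
  induction s using Finset.induction_on with
  | empty => simp
  | @insert i s his IH =>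
    have hprod : ∀ c : ι → ℂ, (∀ k ∈ insert i s, Complex.abs (c k) ≤ K) →
        Complex.abs (∏ k ∈ s, c k) ≤ K ^ s.card := by
      intro c hc
      calc Complex.abs (∏ k ∈ s, c k) = ∏ k ∈ s, Complex.abs (c k) := map_prod _ _ _
        _ ≤ ∏ k ∈ s, K := Finset.prod_le_prod (fun _ _ => AbsoluteValue.nonneg _ _)
            (fun k hk => hc k (Finset.mem_insert_of_mem hk))
        _ = K ^ s.card := by rw [Finset.prod_const]
    rw [Finset.prod_insert his, Finset.prod_insert his]
    have key : a i * ∏ k ∈ s, a k - b i * ∏ k ∈ s, b k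
        = (a i - b i) * ∏ k ∈ s, a k + b i * (∏ k ∈ s, a k - ∏ k ∈ s, b k) := by ring
    rw [key]
    have h1 : Complex.abs ((a i - b i) * ∏ k ∈ s, a k)
        ≤ Complex.abs (a i - b i) * K ^ s.card := by
      rw [map_mul]
      exact mul_le_mul_of_nonneg_left (hprod a ha) (AbsoluteValue.nonneg _ _)
    have h2 : Complex.abs (b i * (∏ k ∈ s, a k - ∏ k ∈ s, b k))
        ≤ K * (K ^ s.card * ∑ k ∈ s, Complex.abs (a k - b k)) := by
      rw [map_mul]
      exact mul_le_mul (hb i (Finset.mem_insert_self i s))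
        (IH (fun k hk => ha k (Finset.mem_insert_of_mem hk))
            (fun k hk => hb k (Finset.mem_insert_of_mem hk)))
        (AbsoluteValue.nonneg _ _) (le_trans zero_le_one hK)
    calc Complex.abs _ ≤ _ := AbsoluteValue.add_le _ _ _
      _ ≤ Complex.abs (a i - b i) * K ^ s.card
          + K * (K ^ s.card * ∑ k ∈ s, Complex.abs (a k - b k)) := add_le_add h1 h2
      _ ≤ K ^ (insert i s).card * ∑ k ∈ insert i s, Complex.abs (a k - b k) := by
        rw [Finset.card_insert_of_notMem his, Finset.sum_insert his, pow_succ]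
        have hKp : (0:ℝ) ≤ K ^ s.card := pow_nonneg (le_trans zero_le_one hK) _
        have : Complex.abs (a i - b i) * K ^ s.card ≤ K ^ s.card * K * Complex.abs (a i - b i) := by
          rw [mul_comm]
          have := mul_le_mul_of_nonneg_right (le_mul_of_one_le_right hKp hK)
            (AbsoluteValue.nonneg Complex.abs (a i - b i))
          linarith [this]
        nlinarith [Finset.sum_nonneg (fun k (_ : k ∈ s) => AbsoluteValue.nonneg Complex.abs (a k - b k)),
          AbsoluteValue.nonneg Complex.abs (a i - b i)]

lemma det_diff_bound {d : ℕ} (X Y : Matrix (Fin d) (Fin d) ℂ) (K t : ℝ) (hK : 1 ≤ K) (ht : 0 ≤ t)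
    (hX : ∀ i j, Complex.abs (X i j) ≤ K) (hY : ∀ i j, Complex.abs (Y i j) ≤ K)
    (hXY : ∀ i j, Complex.abs (X i j - Y i j) ≤ t) :
    Complex.abs (X.det - Y.det) ≤ (d.factorial : ℝ) * K ^ d * (d * t) := by
  rw [Matrix.det_apply, Matrix.det_apply, ← Finset.sum_sub_distrib]
  calc Complex.abs (∑ σ : Equiv.Perm (Fin d),
        (Equiv.Perm.sign σ • ∏ i, X (σ i) i - Equiv.Perm.sign σ • ∏ i, Y (σ i) i))
      ≤ ∑ σ : Equiv.Perm (Fin d), Complex.abs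
        (Equiv.Perm.sign σ • ∏ i, X (σ i) i - Equiv.Perm.sign σ • ∏ i, Y (σ i) i) := by
        exact AbsoluteValue.sum_le _ _ _
    _ ≤ ∑ _σ : Equiv.Perm (Fin d), K ^ d * (d * t) := by
        apply Finset.sum_le_sum
        intro σ _
        rw [← smul_sub]
        have habs : Complex.abs (Equiv.Perm.sign σ •
            (∏ i, X (σ i) i - ∏ i, Y (σ i) i))
            = Complex.abs (∏ i, X (σ i) i - ∏ i, Y (σ i) i) := by
          rcases Int.units_eq_one_or (Equiv.Perm.sign σ) with h | h <;> rw [h] <;>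
            simp [map_sub, AbsoluteValue.map_sub]
        rw [habs]
        calc Complex.abs (∏ i, X (σ i) i - ∏ i, Y (σ i) i)
            ≤ K ^ (Finset.univ : Finset (Fin d)).card
              * ∑ i, Complex.abs (X (σ i) i - Y (σ i) i) :=
            prod_diff_bound Finset.univ _ _ K hK (fun i _ => hX _ _) (fun i _ => hY _ _)
          _ ≤ K ^ d * (d * t) := by
            rw [Finset.card_univ, Fintype.card_fin]
            apply mul_le_mul_of_nonneg_left _ (pow_nonneg (le_trans zero_le_one hK) _)
            calc ∑ i : Fin d, Complex.abs (X (σ i) i - Y (σ i) i)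
                ≤ ∑ _i : Fin d, t := Finset.sum_le_sum (fun i _ => hXY _ _)
              _ = d * t := by simp [mul_comm]
    _ = (d.factorial : ℝ) * K ^ d * (d * t) := by
        rw [Finset.sum_const, Finset.card_univ, Fintype.card_perm, Fintype.card_fin,
          nsmul_eq_mul, mul_assoc]

lemma integral_Icc_split (μ : Measure ℝ) (φ : ℝ → ℝ)
    (hφi : Integrable φ μ) (n : ℕ) (hn : n ≠ 0) :
    ∫ x in Icc (-1:ℝ) 0, φ x ∂μ
      = (∫ x in ({-1} : Set ℝ), φ x ∂μ)
        + ∑ k ∈ Finset.range n,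
            ∫ x in Ioc (-1 + (k:ℝ)/(n:ℝ)) (-1 + ((k+1:ℕ):ℝ)/(n:ℝ)), φ x ∂μ := by
  have hnR : (0:ℝ) < n := by positivity
  set t : ℕ → ℝ := fun k => -1 + (k:ℝ)/n with ht
  have htmono : Monotone t := by
    intro a b hab
    simp only [ht, add_le_add_iff_left]
    gcongr
  have key : ∀ m, ∫ x in Icc (-1:ℝ) (t m), φ x ∂μ
      = (∫ x in ({-1} : Set ℝ), φ x ∂μ)
        + ∑ k ∈ Finset.range m, ∫ x in Ioc (t k) (t (k+1)), φ x ∂μ := by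
    intro m
    induction m with
    | zero => simp [ht, Icc_self]
    | succ m ih =>
      have h1 : (-1:ℝ) ≤ t m := by
        simp only [ht, le_add_iff_nonneg_right]
        positivity
      have h2 : t m ≤ t (m+1) := htmono (Nat.le_succ m)
      rw [← Icc_union_Ioc_eq_Icc h1 h2]
      rw [setIntegral_union ?disj measurableSet_Ioc hφi.integrableOn hφi.integrableOn, ih,
        Finset.sum_range_succ, add_assoc]
      case disj =>
        rw [Set.disjoint_left]
        rintro x ⟨_, hx2⟩ ⟨hx3, _⟩
        exact absurd hx2 (not_le.mpr hx3)
  have htn : t n = 0 := by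
    simp only [ht]
    rw [div_self (ne_of_gt hnR)]
    ring
  have := key n
  rw [htn] at this
  simpa only [ht] using this

lemma clamp_dist_le (a b : ℝ) (ha1 : -1 ≤ a) (ha2 : a ≤ 1) :
    |a - max (-1) (min 1 b)| ≤ |a - b| := by
  rcases le_total b (-1) with hb | hb
  · rw [min_eq_right (hb.trans (by norm_num)), max_eq_left hb,
      _root_.abs_of_nonneg (by linarith), _root_.abs_of_nonneg (by linarith)]
    linarith
  · rcases le_total (1:ℝ) b with hb2 | hb2
    · rw [min_eq_left hb2, max_eq_right (by norm_num : (-1:ℝ) ≤ 1),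
        _root_.abs_of_nonpos (by linarith), _root_.abs_of_nonpos (by linarith)]
      linarith
    · rw [min_eq_right hb2, max_eq_right hb]

lemma totalVariation_le_evar (s : SignedMeasure ℝ) (f : ℝ → ℝ)
    (hf : ∀ t ∈ Icc (-1:ℝ) 0, f t = s (Icc (-1) t)) (h0 : f (-1) = 0) :
    s.totalVariation (Icc (-1) 0) ≤ eVariationOn f (Icc (-1) 0) := by
  classical
  by_cases hVtop : eVariationOn f (Icc (-1) 0) = ⊤
  · rw [hVtop]; exact le_top
  set p := s.toJordanDecomposition.posPart with hp
  set q := s.toJordanDecomposition.negPart with hq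
  haveI : IsFiniteMeasure p := s.toJordanDecomposition.posPart_finite
  haveI : IsFiniteMeasure q := s.toJordanDecomposition.negPart_finite
  set I := Icc (-1:ℝ) 0 with hI
  have hIm : MeasurableSet I := measurableSet_Icc
  have hsapp : ∀ A : Set ℝ, MeasurableSet A → s A = (p A).toReal - (q A).toReal := by
    intro A hA; rw [sm_apply s hA]
  rw [SignedMeasure.totalVariation, Measure.add_apply]
  rw [← ENNReal.toReal_le_toReal (by finiteness) hVtop,
    ENNReal.toReal_add (measure_ne_top _ _) (measure_ne_top _ _)]
  set V := (eVariationOn f I).toReal with hV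
  set T := (p I).toReal + (q I).toReal with hT
  show T ≤ V
  have hT0 : 0 ≤ T := by positivity
  refine le_of_forall_pos_le_add ?_
  intro ε hε
  obtain ⟨u, hum, hpu, hqu⟩ := s.toJordanDecomposition.mutuallySingular
  rw [← hp] at hpu; rw [← hq] at hqu
  set g : ℝ → ℝ := fun x => if x ∈ u then -1 else 1 with hg
  have hgm : Measurable g := Measurable.ite hum measurable_const measurable_const
  have hgb : ∀ x, ‖g x‖ ≤ 1 := by
    intro x; simp only [hg, Real.norm_eq_abs]; split <;> norm_num
  have hgint : Integrable g (p + q) :=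
    (integrable_const (1:ℝ)).mono' hgm.aestronglyMeasurable (Filter.Eventually.of_forall hgb)
  have hgint_p : Integrable g p := hgint.mono_measure (Measure.le_add_right le_rfl)
  have hgint_q : Integrable g q := hgint.mono_measure (Measure.le_add_left le_rfl)
  obtain ⟨h, hhap, hhint⟩ := hgint.exists_boundedContinuous_integral_sub_le (half_pos hε)
  set h' : ℝ → ℝ := fun x => max (-1) (min 1 (h x)) with hh'
  have hh'c : Continuous h' := continuous_const.max (continuous_const.min h.continuous)
  have hh'b : ∀ x, ‖h' x‖ ≤ 1 := by
    intro x
    simp only [hh', Real.norm_eq_abs, abs_le]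
    exact ⟨le_max_left _ _, max_le (by norm_num) (min_le_left _ _)⟩
  have hh'int : ∀ (μ : Measure ℝ) [IsFiniteMeasure μ], Integrable h' μ := fun μ _ =>
    (integrable_const (1:ℝ)).mono' hh'c.aestronglyMeasurable (Filter.Eventually.of_forall hh'b)
  have hgh' : ∀ x, |g x - h' x| ≤ |g x - h x| := by
    intro x
    apply clamp_dist_le
    · simp only [hg]; split <;> norm_num
    · simp only [hg]; split <;> norm_num
  -- step 1 : T as integral of g
  have hpIu : p (I ∩ u) = 0 := measure_mono_null inter_subset_right hpu
  have hqIu : q (I ∩ u) = q I := by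
    have h1 : q (I \ u) = 0 := measure_mono_null (fun x hx => hx.2) hqu
    have h2 := measure_inter_add_diff (μ := q) I hum
    rw [h1, add_zero] at h2
    exact h2
  have hintg : ∀ (μ : Measure ℝ) [IsFiniteMeasure μ],
      ∫ x in I, g x ∂μ = (μ I).toReal - 2 * (μ (I ∩ u)).toReal := by
    intro μ _
    have hge : ∀ x, g x = 1 - 2 * u.indicator (fun _ => (1:ℝ)) x := by
      intro x
      simp only [hg, Set.indicator]
      split <;> norm_num
    have hind : Integrable (fun x => 2 * u.indicator (fun _ => (1:ℝ)) x) μ :=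
      ((integrable_const (1:ℝ)).indicator hum).const_mul 2
    calc ∫ x in I, g x ∂μ = ∫ x in I, (1 - 2 * u.indicator (fun _ => (1:ℝ)) x) ∂μ := by
          simp_rw [hge]
      _ = (∫ _x in I, (1:ℝ) ∂μ) - ∫ x in I, 2 * u.indicator (fun _ => (1:ℝ)) x ∂μ :=
          integral_sub (integrable_const _).integrableOn hind.integrableOn
      _ = (μ I).toReal - 2 * (μ (I ∩ u)).toReal := by
          rw [setIntegral_const, integral_const_mul, setIntegral_indicator hum, setIntegral_const]
          simp
          rfl
  have step1 : T = (∫ x in I, g x ∂p) - ∫ x in I, g x ∂q := by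
    rw [hintg p, hintg q, hpIu, hqIu, hT]
    simp
    ring
  -- step 2 : pass from g to h'
  have keyA : ∀ (μ : Measure ℝ) [IsFiniteMeasure μ], Integrable g μ →
      |(∫ x in I, g x ∂μ) - ∫ x in I, h' x ∂μ| ≤ ∫ x in I, |g x - h' x| ∂μ := by
    intro μ _ hgi
    rw [← integral_sub hgi.integrableOn (hh'int μ).integrableOn]
    simpa [Real.norm_eq_abs] using
      norm_integral_le_integral_norm (μ := μ.restrict I) (f := fun x => g x - h' x)
  have habs_int : Integrable (fun x => |g x - h' x|) (p + q) := (hgint.sub (hh'int _)).abs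
  have hsum2 : (∫ x in I, |g x - h' x| ∂p) + (∫ x in I, |g x - h' x| ∂q) ≤ ε/2 := by
    have e1 : (∫ x in I, |g x - h' x| ∂p) + (∫ x in I, |g x - h' x| ∂q)
        = ∫ x in I, |g x - h' x| ∂(p + q) := by
      rw [Measure.restrict_add, integral_add_measure
        (habs_int.mono_measure (Measure.le_add_right le_rfl)).integrableOn
        (habs_int.mono_measure (Measure.le_add_left le_rfl)).integrableOn]
    rw [e1]
    calc ∫ x in I, |g x - h' x| ∂(p + q) ≤ ∫ x, |g x - h' x| ∂(p + q) :=
          setIntegral_le_integral habs_int (Filter.Eventually.of_forall fun x => abs_nonneg _)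
      _ ≤ ∫ x, ‖g x - h x‖ ∂(p + q) := by
          apply integral_mono habs_int (hgint.sub hhint).norm
          intro x
          simpa [Real.norm_eq_abs] using hgh' x
      _ ≤ ε/2 := hhap
  have step2 : (∫ x in I, g x ∂p) - ∫ x in I, g x ∂q
      ≤ (∫ x in I, h' x ∂p) - (∫ x in I, h' x ∂q) + ε/2 := by
    have k1 := abs_le.mp (keyA p hgint_p)
    have k2 := abs_le.mp (keyA q hgint_q)
    have i1 : (0:ℝ) ≤ ∫ x in I, |g x - h' x| ∂p :=
      integral_nonneg fun x => abs_nonneg _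
    have i2 : (0:ℝ) ≤ ∫ x in I, |g x - h' x| ∂q :=
      integral_nonneg fun x => abs_nonneg _
    linarith [k1.2, k2.1]
  -- step 3 : Riemann sums for h'
  set δ := ε / (2 * (T + 1)) with hδdef
  have hδ : 0 < δ := by positivity
  have hUC := (isCompact_Icc (a := (-2:ℝ)) (b := 1)).uniformContinuousOn_of_continuous
    hh'c.continuousOn
  obtain ⟨δ', hδ', hδ'uc⟩ := Metric.uniformContinuousOn_iff.mp hUC δ hδ
  obtain ⟨n₀, hn₀⟩ := exists_nat_one_div_lt hδ'
  set n := n₀ + 1 with hn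
  have hn0 : n ≠ 0 := Nat.succ_ne_zero _
  have hnR : (0:ℝ) < n := by positivity
  have hnδ' : 1/(n:ℝ) < δ' := by
    rw [hn]
    push_cast
    exact hn₀
  set t : ℕ → ℝ := fun k => -1 + (k:ℝ)/(n:ℝ) with ht
  have htI : ∀ k, k ≤ n → t k ∈ I := by
    intro k hk
    constructor
    · simp only [ht, le_add_iff_nonneg_right]
      positivity
    · simp only [ht]
      have : (k:ℝ)/(n:ℝ) ≤ 1 := by
        rw [div_le_one hnR]
        exact_mod_cast hk
      linarith
  have htm : ∀ k, t k ≤ t (k+1) := by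
    intro k
    simp only [ht, add_le_add_iff_left]
    gcongr <;> push_cast <;> linarith
  have hgap : ∀ k, t (k+1) - t k = 1/(n:ℝ) := by
    intro k
    simp only [ht]
    push_cast
    field_simp
    ring
  have hsA : ∀ k, k < n → s (Ioc (t k) (t (k+1))) = f (t (k+1)) - f (t k) := by
    intro k hk
    have hdis : Disjoint (Icc (-1:ℝ) (t k)) (Ioc (t k) (t (k+1))) := by
      rw [Set.disjoint_left]
      rintro x ⟨_, hx2⟩ ⟨hx3, _⟩
      exact absurd hx2 (not_le.mpr hx3)
    have := s.of_union hdis measurableSet_Icc measurableSet_Ioc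
    rw [Icc_union_Ioc_eq_Icc (htI k (le_of_lt hk)).1 (htm k)] at this
    rw [← hf _ (htI k (le_of_lt hk)), ← hf _ (htI (k+1) hk)] at this
    linarith
  have hRiem : ∀ (μ : Measure ℝ) [IsFiniteMeasure μ], ∀ k, k < n →
      |(∫ x in Ioc (t k) (t (k+1)), h' x ∂μ)
        - h' (t (k+1)) * (μ (Ioc (t k) (t (k+1)))).toReal|
      ≤ δ * (μ (Ioc (t k) (t (k+1)))).toReal := by
    intro μ _ k hk
    have heq : (∫ x in Ioc (t k) (t (k+1)), h' x ∂μ)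
        - h' (t (k+1)) * (μ (Ioc (t k) (t (k+1)))).toReal
        = ∫ x in Ioc (t k) (t (k+1)), (h' x - h' (t (k+1))) ∂μ := by
      rw [integral_sub (hh'int μ).integrableOn (integrable_const _).integrableOn,
        setIntegral_const, smul_eq_mul, mul_comm]
      rfl
    rw [heq]
    have hbnd : ∀ x ∈ Ioc (t k) (t (k+1)), ‖h' x - h' (t (k+1))‖ ≤ δ := by
      intro x hx
      have hxI : x ∈ Icc (-2:ℝ) 1 := by
        constructor
        · have := (htI k (le_of_lt hk)).1
          have := hx.1
          simp only [hI, mem_Icc] at *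
          linarith
        · have h2 := (htI (k+1) hk).2
          have := hx.2
          simp only [hI, mem_Icc] at *
          linarith
      have htkI : t (k+1) ∈ Icc (-2:ℝ) 1 := by
        have := htI (k+1) hk
        simp only [hI, mem_Icc] at *
        constructor <;> linarith [this.1, this.2]
      have hdist : dist x (t (k+1)) < δ' := by
        have h1 := hgap k
        have h2 : t k < x := hx.1
        have h3 : x ≤ t (k+1) := hx.2
        have h4 : t (k+1) - t k < δ' := by rw [hgap k]; exact hnδ'
        rw [Real.dist_eq, _root_.abs_of_nonpos (by linarith), neg_sub]
        linarith
      have := hδ'uc x hxI (t (k+1)) htkI hdist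
      rw [Real.dist_eq] at this
      simpa [Real.norm_eq_abs] using this.le
    simpa [Real.norm_eq_abs, Measure.real] using
      norm_setIntegral_le_of_norm_le_const (measure_lt_top μ _) hbnd
  -- singleton contribution vanishes
  have hsing : (∫ x in ({-1} : Set ℝ), h' x ∂p) - ∫ x in ({-1} : Set ℝ), h' x ∂q = 0 := by
    rw [integral_singleton, integral_singleton, smul_eq_mul, smul_eq_mul, ← sub_mul]
    have h1 : (p {(-1:ℝ)}).toReal - (q {(-1:ℝ)}).toReal = s {(-1:ℝ)} :=
      (hsapp _ (measurableSet_singleton _)).symm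
    have h2 : s {(-1:ℝ)} = f (-1) := by
      rw [hf (-1) (by constructor <;> norm_num), Icc_self]
    rw [show p.real {(-1:ℝ)} - q.real {(-1:ℝ)} = s {(-1:ℝ)} from h1, h2, h0, zero_mul]
  -- splitting of integrals over I
  have hsplit : ∀ (μ : Measure ℝ) [IsFiniteMeasure μ], ∀ (φ : ℝ → ℝ), Integrable φ μ →
      ∫ x in I, φ x ∂μ = (∫ x in ({-1} : Set ℝ), φ x ∂μ)
        + ∑ k ∈ Finset.range n, ∫ x in Ioc (t k) (t (k+1)), φ x ∂μ := by
    intro μ _ φ hφ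
    simp only [ht, hI]
    exact integral_Icc_split μ φ hφ n hn0
  have hkey : ∀ k, k < n →
      (∫ x in Ioc (t k) (t (k+1)), h' x ∂p) - (∫ x in Ioc (t k) (t (k+1)), h' x ∂q)
      ≤ h' (t (k+1)) * (f (t (k+1)) - f (t k))
        + δ * ((p (Ioc (t k) (t (k+1)))).toReal + (q (Ioc (t k) (t (k+1)))).toReal) := by
    intro k hk
    have h1 := abs_le.mp (hRiem p k hk)
    have h2 := abs_le.mp (hRiem q k hk)
    have h3 : h' (t (k+1)) * (p (Ioc (t k) (t (k+1)))).toReal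
        - h' (t (k+1)) * (q (Ioc (t k) (t (k+1)))).toReal
        = h' (t (k+1)) * (f (t (k+1)) - f (t k)) := by
      rw [← mul_sub, ← hsapp _ measurableSet_Ioc, hsA k hk]
    linarith [h1.2, h2.1]
  have hp1 : ∑ k ∈ Finset.range n, (p (Ioc (t k) (t (k+1)))).toReal ≤ (p I).toReal := by
    have h1 := hsplit p (fun _ => (1:ℝ)) (integrable_const 1)
    simp only [setIntegral_const, smul_eq_mul, mul_one, Measure.real] at h1
    have h2 : 0 ≤ (p ({-1} : Set ℝ)).toReal := ENNReal.toReal_nonneg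
    linarith
  have hq1 : ∑ k ∈ Finset.range n, (q (Ioc (t k) (t (k+1)))).toReal ≤ (q I).toReal := by
    have h1 := hsplit q (fun _ => (1:ℝ)) (integrable_const 1)
    simp only [setIntegral_const, smul_eq_mul, mul_one, Measure.real] at h1
    have h2 : 0 ≤ (q ({-1} : Set ℝ)).toReal := ENNReal.toReal_nonneg
    linarith
  have step3 : (∫ x in I, h' x ∂p) - (∫ x in I, h' x ∂q)
      ≤ (∑ k ∈ Finset.range n, h' (t (k+1)) * (f (t (k+1)) - f (t k))) + δ * T := by
    rw [hsplit p h' (hh'int p), hsplit q h' (hh'int q)]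
    have h6 := Finset.sum_le_sum (fun k hk => hkey k (Finset.mem_range.mp hk))
    rw [Finset.sum_add_distrib, ← Finset.mul_sum, Finset.sum_add_distrib] at h6
    have h7 : δ * ((∑ k ∈ Finset.range n, (p (Ioc (t k) (t (k+1)))).toReal)
        + (∑ k ∈ Finset.range n, (q (Ioc (t k) (t (k+1)))).toReal)) ≤ δ * T := by
      rw [hT]
      exact mul_le_mul_of_nonneg_left (add_le_add hp1 hq1) hδ.le
    have h8 : ∑ k ∈ Finset.range n,
        ((∫ x in Ioc (t k) (t (k+1)), h' x ∂p) - ∫ x in Ioc (t k) (t (k+1)), h' x ∂q)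
        = (∑ k ∈ Finset.range n, ∫ x in Ioc (t k) (t (k+1)), h' x ∂p)
          - ∑ k ∈ Finset.range n, ∫ x in Ioc (t k) (t (k+1)), h' x ∂q :=
      by rw [Finset.sum_sub_distrib]
    linarith [h6, h7, h8, hsing]
  have hSV : (∑ k ∈ Finset.range n, h' (t (k+1)) * (f (t (k+1)) - f (t k))) ≤ V := by
    have hb : ∀ k, h' (t (k+1)) * (f (t (k+1)) - f (t k)) ≤ |f (t (k+1)) - f (t k)| := by
      intro k
      have hb1 := hh'b (t (k+1))
      rw [Real.norm_eq_abs] at hb1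
      calc h' (t (k+1)) * (f (t (k+1)) - f (t k))
          ≤ |h' (t (k+1)) * (f (t (k+1)) - f (t k))| := le_abs_self _
        _ = |h' (t (k+1))| * |f (t (k+1)) - f (t k)| := abs_mul _ _
        _ ≤ 1 * |f (t (k+1)) - f (t k)| := mul_le_mul_of_nonneg_right hb1 (abs_nonneg _)
        _ = |f (t (k+1)) - f (t k)| := one_mul _
    have hmono : Monotone (fun i => t (min i n)) := by
      intro a b hab
      simp only [ht, add_le_add_iff_left]
      gcongr
    have hmem : ∀ i, t (min i n) ∈ I := fun i => htI _ (min_le_right _ _)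
    have hevar := eVariationOn.sum_le (f := f) (n := n) hmono hmem
    have heq : ∀ i ∈ Finset.range n, edist (f (t (min (i+1) n))) (f (t (min i n)))
        = ENNReal.ofReal |f (t (i+1)) - f (t i)| := by
      intro i hi
      have hi' := Finset.mem_range.mp hi
      rw [min_eq_left hi'.le, min_eq_left (Nat.succ_le_of_lt hi'), edist_dist, Real.dist_eq]
    rw [Finset.sum_congr rfl heq,
      ← ENNReal.ofReal_sum_of_nonneg (fun i _ => abs_nonneg _)] at hevar
    calc (∑ k ∈ Finset.range n, h' (t (k+1)) * (f (t (k+1)) - f (t k)))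
        ≤ ∑ k ∈ Finset.range n, |f (t (k+1)) - f (t k)| :=
          Finset.sum_le_sum (fun k _ => hb k)
      _ ≤ V := (ENNReal.ofReal_le_iff_le_toReal hVtop).mp hevar
  have hδT : δ * T ≤ ε/2 := by
    have hpos : (0:ℝ) < 2 * (T + 1) := by linarith
    rw [hδdef, div_mul_eq_mul_div, div_le_iff₀ hpos]
    nlinarith [hε.le, hT0]
  clear_value T V δ t
  linarith [step1, step2, step3, hSV, hδT]

lemma tv_ne_top (σ : SignedMeasure ℝ) (A : Set ℝ) : σ.totalVariation A ≠ ⊤ := by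
  haveI := σ.toJordanDecomposition.posPart_finite
  haveI := σ.toJordanDecomposition.negPart_finite
  rw [SignedMeasure.totalVariation, Measure.add_apply]
  exact ENNReal.add_ne_top.mpr ⟨measure_ne_top _ _, measure_ne_top _ _⟩

lemma jordan_add_eq (σ1 σ2 : SignedMeasure ℝ) :
    (σ1 - σ2).toJordanDecomposition.posPart
      + (σ1.toJordanDecomposition.negPart + σ2.toJordanDecomposition.posPart)
    = (σ1 - σ2).toJordanDecomposition.negPart
      + (σ1.toJordanDecomposition.posPart + σ2.toJordanDecomposition.negPart) := by
  haveI := (σ1 - σ2).toJordanDecomposition.posPart_finite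
  haveI := (σ1 - σ2).toJordanDecomposition.negPart_finite
  haveI := σ1.toJordanDecomposition.posPart_finite
  haveI := σ1.toJordanDecomposition.negPart_finite
  haveI := σ2.toJordanDecomposition.posPart_finite
  haveI := σ2.toJordanDecomposition.negPart_finite
  ext A hA
  simp only [Measure.add_apply]
  have h1 := sm_apply (σ1 - σ2) hA
  have h2 := sm_apply σ1 hA
  have h3 := sm_apply σ2 hA
  rw [VectorMeasure.sub_apply, h2, h3] at h1
  rw [← ENNReal.toReal_eq_toReal_iff' (by finiteness) (by finiteness),
    ENNReal.toReal_add (by finiteness) (by finiteness),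
    ENNReal.toReal_add (by finiteness) (by finiteness),
    ENNReal.toReal_add (by finiteness) (by finiteness),
    ENNReal.toReal_add (by finiteness) (by finiteness)]
  linarith

lemma integrableOn_of_cont (ψ : ℝ → ℂ) (hψ : Continuous ψ) (μ : Measure ℝ)
    [IsFiniteMeasure μ] : IntegrableOn ψ (Icc (-1:ℝ) 0) μ :=
  ContinuousOn.integrableOn_compact isCompact_Icc hψ.continuousOn

lemma sInt_sub (σ1 σ2 : SignedMeasure ℝ) (ψ : ℝ → ℂ) (hψ : Continuous ψ) :
    sInt (-1) 0 (σ1 - σ2) ψ = sInt (-1) 0 σ1 ψ - sInt (-1) 0 σ2 ψ := by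
  haveI := (σ1 - σ2).toJordanDecomposition.posPart_finite
  haveI := (σ1 - σ2).toJordanDecomposition.negPart_finite
  haveI := σ1.toJordanDecomposition.posPart_finite
  haveI := σ1.toJordanDecomposition.negPart_finite
  haveI := σ2.toJordanDecomposition.posPart_finite
  haveI := σ2.toJordanDecomposition.negPart_finite
  have key := jordan_add_eq σ1 σ2
  have h1 : ∫ θ in Icc (-1:ℝ) 0, ψ θ
        ∂((σ1 - σ2).toJordanDecomposition.posPart
          + (σ1.toJordanDecomposition.negPart + σ2.toJordanDecomposition.posPart))
      = ∫ θ in Icc (-1:ℝ) 0, ψ θ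
        ∂((σ1 - σ2).toJordanDecomposition.negPart
          + (σ1.toJordanDecomposition.posPart + σ2.toJordanDecomposition.negPart)) := by
    rw [key]
  simp only [Measure.restrict_add] at h1
  rw [integral_add_measure (integrableOn_of_cont ψ hψ _)
      (Integrable.add_measure (integrableOn_of_cont ψ hψ _) (integrableOn_of_cont ψ hψ _)),
    integral_add_measure (integrableOn_of_cont ψ hψ _)
      (Integrable.add_measure (integrableOn_of_cont ψ hψ _) (integrableOn_of_cont ψ hψ _)),
    integral_add_measure (integrableOn_of_cont ψ hψ _) (integrableOn_of_cont ψ hψ _),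
    integral_add_measure (integrableOn_of_cont ψ hψ _) (integrableOn_of_cont ψ hψ _)] at h1
  unfold sInt
  linear_combination h1

lemma sInt_abs_le (σ : SignedMeasure ℝ) (ψ : ℝ → ℂ) {c : ℝ}
    (hc : ∀ θ ∈ Icc (-1:ℝ) 0, Complex.abs (ψ θ) ≤ c) :
    Complex.abs (sInt (-1) 0 σ ψ) ≤ c * (σ.totalVariation (Icc (-1) 0)).toReal := by
  haveI := σ.toJordanDecomposition.posPart_finite
  haveI := σ.toJordanDecomposition.negPart_finite
  have h1 : ∀ (μ : Measure ℝ) [IsFiniteMeasure μ],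
      ‖∫ θ in Icc (-1:ℝ) 0, ψ θ ∂μ‖ ≤ c * (μ (Icc (-1:ℝ) 0)).toReal := by
    intro μ _
    apply norm_setIntegral_le_of_norm_le_const (measure_lt_top _ _)
    intro x hx
    simpa [Complex.norm_eq_abs] using hc x hx
  have hp := h1 σ.toJordanDecomposition.posPart
  have hq := h1 σ.toJordanDecomposition.negPart
  rw [SignedMeasure.totalVariation, Measure.add_apply,
    ENNReal.toReal_add (measure_ne_top _ _) (measure_ne_top _ _)]
  unfold sInt
  rw [← Complex.norm_eq_abs]
  calc ‖(∫ θ in Icc (-1:ℝ) 0, ψ θ ∂σ.toJordanDecomposition.posPart)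
        - ∫ θ in Icc (-1:ℝ) 0, ψ θ ∂σ.toJordanDecomposition.negPart‖
      ≤ ‖∫ θ in Icc (-1:ℝ) 0, ψ θ ∂σ.toJordanDecomposition.posPart‖
        + ‖∫ θ in Icc (-1:ℝ) 0, ψ θ ∂σ.toJordanDecomposition.negPart‖ := norm_sub_le _ _
    _ ≤ _ := by
      rw [mul_add]
      exact add_le_add hp hq


theorem stmt0 (d : ℕ) (α R : ℝ) (hR : 0 < R) :
    ∃ C > 0, ∀ (M N : ℝ → Matrix (Fin d) (Fin d) ℝ)
      (μM μN : Fin d → Fin d → SignedMeasure ℝ),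
      Normalized M (-1) 0 → Normalized N (-1) 0 →
      IsLinked M μM (-1) 0 → IsLinked N μN (-1) 0 →
      eVariationOn M (Set.Icc (-1) 0) ≤ ENNReal.ofReal R →
      eVariationOn N (Set.Icc (-1) 0) ≤ ENNReal.ofReal R →
      ∀ s : ℂ, α ≤ s.re →
        ‖charFn μM s - charFn μN s‖ ≤
          C * (eVariationOn (fun t => M t - N t) (Set.Icc (-1) 0)).toReal := by
  set E := Real.exp |α| with hE
  have hE1 : 1 ≤ E := Real.one_le_exp (abs_nonneg α)
  have hE0 : 0 ≤ E := le_trans zero_le_one hE1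
  set K := 1 + E * R with hKdef
  have hK1 : 1 ≤ K := by nlinarith
  refine ⟨(d.factorial : ℝ) * K ^ d * d * E + 1, by positivity, ?_⟩
  intro M N μM μN hMn hNn hML hNL hMV hNV s hs
  set I := Set.Icc (-1:ℝ) 0 with hI
  set ψ : ℝ → ℂ := fun θ => Complex.exp (s * θ) with hψ
  have hψc : Continuous ψ := by
    rw [hψ]
    fun_prop
  have hψb : ∀ θ ∈ I, Complex.abs (ψ θ) ≤ E := by
    intro θ hθ
    rw [hψ]
    simp only [← Complex.norm_eq_abs, Complex.norm_exp]
    apply Real.exp_le_exp.mpr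
    have hre : (s * (θ:ℂ)).re = s.re * θ := by simp [Complex.mul_re]
    rw [hre]
    have hθ1 : (-1:ℝ) ≤ θ := hθ.1
    have hθ2 : θ ≤ 0 := hθ.2
    have h1 : s.re * θ ≤ α * θ := by nlinarith
    have h2 : α * θ ≤ |α| := by
      rcases le_total 0 α with h | h
      · nlinarith [le_abs_self α]
      · nlinarith [neg_abs_le α]
    linarith
  have hWle : eVariationOn (fun t => M t - N t) I ≤ ENNReal.ofReal R + ENNReal.ofReal R :=
    le_trans (evar_sub_le M N I) (add_le_add hMV hNV)
  have hWne : eVariationOn (fun t => M t - N t) I ≠ ⊤ :=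
    ne_top_of_le_ne_top (by finiteness) hWle
  set W := (eVariationOn (fun t => M t - N t) I).toReal with hW
  have hW0 : 0 ≤ W := ENNReal.toReal_nonneg
  -- total variation bounds for μM, μN entries
  have htv : ∀ (P : ℝ → Matrix (Fin d) (Fin d) ℝ) (μP : Fin d → Fin d → SignedMeasure ℝ),
      Normalized P (-1) 0 → IsLinked P μP (-1) 0 →
      eVariationOn P I ≤ ENNReal.ofReal R →
      ∀ i j, (((μP i j).totalVariation I)).toReal ≤ R := by
    intro P μP hPn hPL hPV i j
    have h1 : (μP i j).totalVariation I ≤ eVariationOn (fun t => P t i j) I := by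
      apply totalVariation_le_evar
      · intro t ht
        exact hPL t ht i j
      · rw [show P (-1) = 0 from hPn.1]
        simp
    have h3 := le_trans h1 (le_trans (evar_entry_le P i j I) hPV)
    calc ((μP i j).totalVariation I).toReal ≤ (ENNReal.ofReal R).toReal :=
          ENNReal.toReal_mono (by finiteness) h3
      _ = R := ENNReal.toReal_ofReal hR.le
  have htvM := htv M μM hMn hML hMV
  have htvN := htv N μN hNn hNL hNV
  have htvMN : ∀ i j, ((( μM i j - μN i j).totalVariation I)).toReal ≤ W := by
    intro i j
    have h1 : (μM i j - μN i j).totalVariation I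
        ≤ eVariationOn (fun t => (M t - N t) i j) I := by
      apply totalVariation_le_evar
      · intro t ht
        rw [VectorMeasure.sub_apply]
        simp only [Matrix.sub_apply]
        rw [hML t ht i j, hNL t ht i j]
      · simp only [Matrix.sub_apply]
        rw [show M (-1) = 0 from hMn.1, show N (-1) = 0 from hNn.1]
        simp
    have h2 := evar_entry_le (fun t => M t - N t) i j I
    simp only [Matrix.sub_apply] at h2
    rw [hW]
    exact ENNReal.toReal_mono hWne (le_trans h1 h2)
  -- entries of the two matrices
  set X := (1 : Matrix (Fin d) (Fin d) ℂ) - mInt (-1) 0 μM ψ with hXdef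
  set Y := (1 : Matrix (Fin d) (Fin d) ℂ) - mInt (-1) 0 μN ψ with hYdef
  have hent : ∀ (μP : Fin d → Fin d → SignedMeasure ℝ) (i j : Fin d),
      (mInt (-1) 0 μP ψ) i j = sInt (-1) 0 (μP i j) ψ := fun _ _ _ => rfl
  have hone : ∀ i j : Fin d, Complex.abs ((1 : Matrix (Fin d) (Fin d) ℂ) i j) ≤ 1 := by
    intro i j
    rw [Matrix.one_apply]
    split <;> simp
  have hXb : ∀ (μP : Fin d → Fin d → SignedMeasure ℝ),
      (∀ i j, (((μP i j).totalVariation I)).toReal ≤ R) →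
      ∀ i j, Complex.abs (((1 : Matrix (Fin d) (Fin d) ℂ) - mInt (-1) 0 μP ψ) i j) ≤ K := by
    intro μP htvP i j
    rw [Matrix.sub_apply]
    calc Complex.abs ((1 : Matrix (Fin d) (Fin d) ℂ) i j - (mInt (-1) 0 μP ψ) i j)
        ≤ Complex.abs ((1 : Matrix (Fin d) (Fin d) ℂ) i j)
          + Complex.abs ((mInt (-1) 0 μP ψ) i j) := by
          rw [← Complex.norm_eq_abs, ← Complex.norm_eq_abs, ← Complex.norm_eq_abs]
          exact norm_sub_le _ _
      _ ≤ 1 + E * R := by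
          apply add_le_add (hone i j)
          rw [hent]
          calc Complex.abs (sInt (-1) 0 (μP i j) ψ)
              ≤ E * (((μP i j).totalVariation I)).toReal := sInt_abs_le _ _ hψb
            _ ≤ E * R := mul_le_mul_of_nonneg_left (htvP i j) hE0
      _ = K := hKdef.symm
  have hXY : ∀ i j : Fin d, Complex.abs (X i j - Y i j) ≤ E * W := by
    intro i j
    have hXYe : X i j - Y i j = -(sInt (-1) 0 (μM i j) ψ - sInt (-1) 0 (μN i j) ψ) := by
      rw [hXdef, hYdef]
      simp only [Matrix.sub_apply]
      rw [hent, hent]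
      ring
    rw [hXYe, map_neg_eq_map, ← sInt_sub _ _ ψ hψc]
    calc Complex.abs (sInt (-1) 0 (μM i j - μN i j) ψ)
        ≤ E * (((μM i j - μN i j).totalVariation I)).toReal := sInt_abs_le _ _ hψb
      _ ≤ E * W := mul_le_mul_of_nonneg_left (htvMN i j) hE0
  have hgoal : charFn μM s - charFn μN s = X.det - Y.det := rfl
  rw [hgoal]
  calc Complex.abs (X.det - Y.det)
      ≤ (d.factorial : ℝ) * K ^ d * (d * (E * W)) :=
        det_diff_bound X Y K (E * W) hK1 (by positivity)
          (hXb μM htvM) (hXb μN htvN) hXY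
    _ = ((d.factorial : ℝ) * K ^ d * d * E) * W := by ring
    _ ≤ ((d.factorial : ℝ) * K ^ d * d * E + 1) * W := by nlinarith
end

section
/- Let $C_1, \dotsc, C_N \subset \mathbb{C}$ be open sets, $f \colon C_1 \times \dotsb \times C_N \to \mathcal{M}_d(\mathbb{C})$ be analytic, and for each $j$ let $D_j$ be an open, bounded, connected set with $\overline{D_j} \subset C_j$. Then $\max_{z \in \overline{D_1} \times \dotsb \times \overline{D_N}} \rho(f(z)) = \max_{z \in \partial D_1 \times \dotsb \times \partial D_N} \rho(f(z))$, where $\rho$ denotes the spectral radius. -/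
open Set Bornology Filter ENNReal NNReal Topology

attribute [local instance] Matrix.normedAddCommGroup Matrix.normedSpace

lemma maxmod8 {E : Type*} [NormedAddCommGroup E] [NormedSpace ℂ E]
    {N : ℕ} {C D : Fin N → Set ℂ}
    (hD : ∀ j, IsOpen (D j))
    (hDb : ∀ j, IsBounded (D j)) (hDC : ∀ j, closure (D j) ⊆ C j)
    {h : (Fin N → ℂ) → E}
    (hh : ∀ z ∈ Set.univ.pi C, DifferentiableAt ℂ h z)
    {B : ℝ} (hB : ∀ w ∈ Set.univ.pi (fun j => frontier (D j)), ‖h w‖ ≤ B) :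
    ∀ z ∈ Set.univ.pi (fun j => closure (D j)), ‖h z‖ ≤ B := by
  classical
  suffices H : ∀ k : ℕ, ∀ z, z ∈ Set.univ.pi (fun j => closure (D j)) →
      (Finset.univ.filter (fun j => z j ∉ frontier (D j))).card ≤ k → ‖h z‖ ≤ B by
    intro z hz
    exact H N z hz ((Finset.card_filter_le _ _).trans (by simp))
  intro k
  induction k with
  | zero =>
    intro z hz hcard
    refine hB z fun j _ => ?_
    by_contra hj
    have : j ∈ Finset.univ.filter (fun j => z j ∉ frontier (D j)) := by simp [hj]
    have := Finset.card_pos.mpr ⟨j, this⟩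
    omega
  | succ k ih =>
    intro z hz hcard
    by_cases hall : ∀ j, z j ∈ frontier (D j)
    · exact hB z fun j _ => hall j
    push_neg at hall
    obtain ⟨j, hj⟩ := hall
    have hzcl : ∀ i, z i ∈ closure (D i) := fun i => hz i trivial
    have hzjD : z j ∈ D j := by
      rcases ((hD j).frontier_eq ▸ (fun hh3 => hj hh3) : z j ∉ closure (D j) \ D j) with h3
      by_contra hnd
      exact h3 ⟨hzcl j, hnd⟩
    have hmem : ∀ w ∈ C j, Function.update z j w ∈ Set.univ.pi C := by
      intro w hw i _
      rcases eq_or_ne i j with rfl | hne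
      · simpa using hw
      · rw [Function.update_of_ne hne]
        exact hDC i (hzcl i)
    have hupd : Differentiable ℂ (fun w : ℂ => Function.update z j w) := by
      rw [differentiable_pi]
      intro i
      have : (fun w : ℂ => Function.update z j w i) = fun w => if i = j then w else z i := by
        funext w; simp [Function.update_apply]
      rw [this]
      split_ifs
      exacts [differentiable_id, differentiable_const _]
    have hdc : DiffContOnCl ℂ (fun w => h (Function.update z j w)) (D j) := by
      constructor
      · intro w hw
        exact (((hh _ (hmem w (hDC j (subset_closure hw)))).comp w (hupd w))).differentiableWithinAt
      · intro w hw
        exact (((hh _ (hmem w (hDC j hw))).continuousAt.comp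
          (hupd w).continuousAt)).continuousWithinAt
    have hjmem : j ∈ Finset.univ.filter (fun i => z i ∉ frontier (D i)) := by simp [hj]
    have hbound : ∀ w ∈ frontier (D j), ‖h (Function.update z j w)‖ ≤ B := by
      intro w hw
      refine ih _ ?_ ?_
      · intro i _
        rcases eq_or_ne i j with rfl | hne
        · rw [Function.update_self]
          exact frontier_subset_closure hw
        · rw [Function.update_of_ne hne]; exact hzcl i
      · have hsub : Finset.univ.filter (fun i => Function.update z j w i ∉ frontier (D i)) ⊆
            (Finset.univ.filter (fun i => z i ∉ frontier (D i))).erase j := by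
          intro i hi
          simp only [Finset.mem_filter, Finset.mem_univ, true_and] at hi
          rcases eq_or_ne i j with rfl | hne
          · rw [Function.update_self] at hi; exact absurd hw hi
          · rw [Function.update_of_ne hne] at hi
            exact Finset.mem_erase.mpr ⟨hne, by simp [hi]⟩
        calc _ ≤ ((Finset.univ.filter (fun i => z i ∉ frontier (D i))).erase j).card :=
              Finset.card_le_card hsub
          _ = (Finset.univ.filter (fun i => z i ∉ frontier (D i))).card - 1 :=
              Finset.card_erase_of_mem hjmem
          _ ≤ k := by omega
    have := Complex.norm_le_of_forall_mem_frontier_norm_le (hDb j) hdc hbound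
      (subset_closure hzjD)
    simpa [Function.update_eq_self] using this

lemma radle8 {A : Type*} [NormedRing A] [NormedAlgebra ℂ A] [CompleteSpace A]
    (a : A) (r : ℝ≥0) {m : ℕ} (hm : m ≠ 0) (h1 : ‖(1 : A)‖₊ ≤ 1)
    (h : ‖a ^ m‖₊ ≤ r ^ m) : spectralRadius ℂ a ≤ r := by
  obtain ⟨m', rfl⟩ := Nat.exists_eq_succ_of_ne_zero hm
  have hle := spectrum.spectralRadius_le_pow_nnnorm_pow_one_div ℂ a m'
  have hm0 : ((m' + 1 : ℕ) : ℝ) ≠ 0 := by positivity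
  have h2 : (‖a ^ (m' + 1)‖₊ : ℝ≥0∞) ^ (1 / (m' + 1) : ℝ) ≤ r := by
    have hc : (‖a ^ (m' + 1)‖₊ : ℝ≥0∞) ≤ (r : ℝ≥0∞) ^ (m' + 1 : ℕ) := by
      exact_mod_cast ENNReal.coe_le_coe.mpr h
    calc (‖a ^ (m' + 1)‖₊ : ℝ≥0∞) ^ (1 / (m' + 1) : ℝ)
        ≤ ((r : ℝ≥0∞) ^ (m' + 1 : ℕ)) ^ (1 / (m' + 1) : ℝ) :=
          ENNReal.rpow_le_rpow hc (by positivity)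
      _ = (r : ℝ≥0∞) := by
          rw [← ENNReal.rpow_natCast, ← ENNReal.rpow_mul, mul_one_div]
          rw [show ((m' + 1 : ℕ) : ℝ) / ((m' : ℝ) + 1) = 1 by
              push_cast; rw [div_self]; positivity, ENNReal.rpow_one]
  have h3 : (‖(1 : A)‖₊ : ℝ≥0∞) ^ (1 / (m' + 1) : ℝ) ≤ 1 :=
    ENNReal.rpow_le_one (by exact_mod_cast h1) (by positivity)
  calc spectralRadius ℂ a ≤ _ := hle
    _ ≤ (r : ℝ≥0∞) * 1 := by
        refine mul_le_mul' ?_ ?_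
        · convert h2 using 2 <;> push_cast <;> ring
        · convert h3 using 2 <;> push_cast <;> ring
    _ = r := mul_one _

theorem stmt8 (d N : ℕ) (C D : Fin N → Set ℂ)
    (hC : ∀ j, IsOpen (C j)) (hD : ∀ j, IsOpen (D j))
    (hDb : ∀ j, Bornology.IsBounded (D j)) (hDc : ∀ j, IsConnected (D j))
    (hDC : ∀ j, closure (D j) ⊆ C j)
    (f : (Fin N → ℂ) → Matrix (Fin d) (Fin d) ℂ)
    (hf : AnalyticOnNhd ℂ f (Set.univ.pi C)) :
    sSup ((fun z => spectralRadius ℂ (f z)) '' Set.univ.pi (fun j => closure (D j))) =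
    sSup ((fun z => spectralRadius ℂ (f z)) ''
      Set.univ.pi (fun j => closure (D j) \ D j)) := by
  classical
  set E := EuclideanSpace ℂ (Fin d) with hE
  let φ := Matrix.toEuclideanCLM (𝕜 := ℂ) (n := Fin d)
  let lin : Matrix (Fin d) (Fin d) ℂ →ₗ[ℂ] (E →L[ℂ] E) :=
    { toFun := fun A => φ A,
      map_add' := fun A B => map_add _ A B,
      map_smul' := fun c A => map_smul _ c A }
  let L : Matrix (Fin d) (Fin d) ℂ →L[ℂ] (E →L[ℂ] E) :=
    { toLinearMap := lin, cont := lin.continuous_of_finiteDimensional }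
  set g : (Fin N → ℂ) → (E →L[ℂ] E) := fun z => φ (f z) with hg
  have hgan : ∀ z ∈ Set.univ.pi C, AnalyticAt ℂ g z := by
    intro z hz
    exact (L.analyticAt (f z)).comp (hf z hz)
  have hsr : ∀ A : Matrix (Fin d) (Fin d) ℂ, spectralRadius ℂ A = spectralRadius ℂ (φ A) := by
    intro A
    unfold spectralRadius
    rw [AlgEquiv.spectrum_eq]
  have hfr : ∀ j, frontier (D j) = closure (D j) \ D j := fun j => (hD j).frontier_eq
  set K := Set.univ.pi (fun j => closure (D j) \ D j) with hK
  set M := sSup ((fun z => spectralRadius ℂ (f z)) '' K) with hM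
  have hKC : K ⊆ Set.univ.pi C := fun w hw i hi => hDC i (hw i hi).1
  refine le_antisymm ?_ (sSup_le_sSup (Set.image_mono
    (Set.pi_mono fun i _ => diff_subset)))
  refine sSup_le ?_
  rintro x ⟨z, hz, rfl⟩
  refine le_of_forall_gt_imp_ge_of_dense fun c hc => ?_
  rcases eq_or_ne c ⊤ with rfl | hct
  · exact le_top
  lift c to ℝ≥0 using hct with r
  -- for each w in K, a power with small norm on a neighborhood
  have key : ∀ w ∈ K, ∃ n : ℕ, 1 ≤ n ∧ ∀ᶠ w' in 𝓝 w, ‖(g w') ^ n‖₊ ≤ r ^ n := by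
    intro w hw
    have hρ : spectralRadius ℂ (g w) < (r : ℝ≥0∞) := by
      refine lt_of_le_of_lt ?_ hc
      have : spectralRadius ℂ (f w) ≤ M := le_sSup ⟨w, hw, rfl⟩
      rwa [hsr] at this
    have htd := spectrum.pow_nnnorm_pow_one_div_tendsto_nhds_spectralRadius (g w)
    obtain ⟨n, hn1, hn2⟩ := ((htd.eventually_lt_const hρ).and (eventually_ge_atTop 1)).exists
    refine ⟨n, hn2, ?_⟩
    have hn0 : (0 : ℝ) < n := by exact_mod_cast hn2
    have hlt : ‖(g w) ^ n‖₊ < r ^ n := by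
      have h2 := ENNReal.rpow_lt_rpow hn1 hn0
      rw [← ENNReal.rpow_mul, one_div, inv_mul_cancel₀ hn0.ne', ENNReal.rpow_one,
        ENNReal.rpow_natCast] at h2
      exact_mod_cast h2
    have hcont : ContinuousAt (fun w' => ‖(g w') ^ n‖₊) w :=
      (((hgan w (hKC hw)).continuousAt.pow n).nnnorm)
    exact (hcont.eventually_lt continuousAt_const hlt).mono fun _ h => h.le
  choose! n hn1 hn2 using key
  have hKcomp : IsCompact K := by
    refine isCompact_univ_pi fun j => Metric.isCompact_of_isClosed_isBounded
      (isClosed_closure.sdiff (hD j)) ((hDb j).closure.subset diff_subset)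
  obtain ⟨t, htK, htcov⟩ := hKcomp.elim_nhds_subcover
    (fun w => {w' | ‖(g w') ^ (n w)‖₊ ≤ r ^ (n w)}) (fun w hw => hn2 w hw)
  set m := ∏ w ∈ t, n w with hm
  have hm1 : 1 ≤ m := Finset.one_le_prod' fun w hw => hn1 w (htK w hw)
  have hKbound : ∀ w ∈ K, ‖(g w) ^ m‖₊ ≤ r ^ m := by
    intro w hw
    obtain ⟨x, hxt, hxw⟩ := Set.mem_iUnion₂.mp (htcov hw)
    obtain ⟨q, hq⟩ := Finset.dvd_prod_of_mem n hxt
    have hq0 : q ≠ 0 := by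
      rintro rfl
      rw [mul_zero] at hq
      omega
    calc ‖(g w) ^ m‖₊ = ‖((g w) ^ (n x)) ^ q‖₊ := by rw [← pow_mul, ← hq]
      _ ≤ ‖(g w) ^ (n x)‖₊ ^ q := nnnorm_pow_le' _ (Nat.pos_of_ne_zero hq0)
      _ ≤ (r ^ (n x)) ^ q := pow_le_pow_left₀ zero_le hxw q
      _ = r ^ m := by rw [← pow_mul, ← hq]
  have hbound : ∀ z' ∈ Set.univ.pi (fun j => closure (D j)),
      ‖(g z') ^ m‖ ≤ ((r ^ m : ℝ≥0) : ℝ) := by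
    refine maxmod8 hD hDb hDC (fun z' hz' => ((hgan z' hz').differentiableAt.pow m)) ?_
    intro w hw
    have hwK : w ∈ K := by
      show w ∈ Set.univ.pi fun j => closure (D j) \ D j
      intro j hj
      show w j ∈ closure (D j) \ D j
      rw [← hfr j]
      exact hw j hj
    have h4 := hKbound w hwK
    rw [← NNReal.coe_le_coe, coe_nnnorm] at h4
    exact h4
  have hzn : ‖(g z) ^ m‖₊ ≤ r ^ m := by
    have h5 := hbound z hz
    rw [← coe_nnnorm, NNReal.coe_le_coe] at h5
    exact h5
  rw [hsr (f z)]
  exact radle8 (g z) r (by omega) (by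
    rw [← NNReal.coe_le_coe, coe_nnnorm, NNReal.coe_one, ContinuousLinearMap.one_def]
    exact ContinuousLinearMap.norm_id_le) hzn
end

section
/- For matrices $A_1, \dotsc, A_N \in \mathcal{M}_d(\mathbb{R})$, the maximum of the spectral radius over the closed polydisk equals the maximum over the torus: $\max_{t \in \overline{B}_1(0)^N} \rho\left(\sum_{k=1}^N t_k A_k\right) = \max_{\theta \in [0,2\pi]^N} \rho\left(\sum_{k=1}^N A_k e^{i\theta_k}\right)$, where $\overline{B}_1(0) = \{s \in \mathbb{C} : |s| \le 1\}$. -/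
open Complex Finset
open scoped ENNReal NNReal

lemma exists_theta {s : ℂ} (hs : ‖s‖ = 1) :
    ∃ θ ∈ Set.Icc (0:ℝ) (2*Real.pi), s = Complex.exp (Complex.I * θ) := by
  rcases le_or_gt 0 s.arg with h | h
  · refine ⟨s.arg, ⟨h, ?_⟩, ?_⟩
    · exact le_trans s.arg_le_pi (by nlinarith [Real.pi_pos])
    · rw [mul_comm]
      conv_lhs => rw [← Complex.norm_mul_exp_arg_mul_I s]
      rw [hs]; simp
  · refine ⟨s.arg + 2*Real.pi, ⟨by linarith [Complex.neg_pi_lt_arg s, Real.pi_pos],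
      by linarith [Complex.arg_le_pi s, h]⟩, ?_⟩
    push_cast
    rw [mul_add, Complex.exp_add, mul_comm Complex.I (s.arg:ℂ)]
    rw [mul_comm Complex.I ((2:ℂ)*Real.pi), Complex.exp_two_pi_mul_I, mul_one]
    conv_lhs => rw [← Complex.norm_mul_exp_arg_mul_I s]
    rw [hs]; simp

lemma geom_bound {w : ℂ} (hw : ‖w‖ ≤ 1) (hw1 : w ≠ 1) (K : ℕ) :
    ‖∑ n ∈ Finset.range K, w ^ n‖ ≤ 2 / ‖w - 1‖ := by
  have h0 : 0 < ‖w - 1‖ := norm_pos_iff.mpr (sub_ne_zero.mpr hw1)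
  rw [geom_sum_eq hw1, norm_div]
  have h2 : ‖w ^ K - 1‖ ≤ 2 := by
    calc ‖w ^ K - 1‖ ≤ ‖w ^ K‖ + 1 := by
          simpa using norm_sub_le (w ^ K) 1
      _ ≤ 2 := by
          rw [norm_pow]
          have := pow_le_one₀ (norm_nonneg w) hw (n := K)
          linarith
  gcongr

lemma powersum_bound (E : Finset ℂ) (m : ℂ → ℕ) (hm : ∀ μ ∈ E, 0 < m μ)
    {s D : ℝ} (hs : 0 ≤ s)
    (h : ∀ n : ℕ, ‖∑ μ ∈ E, (m μ : ℂ) * μ ^ n‖ ≤ D * s ^ n) :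
    ∀ μ ∈ E, ‖μ‖ ≤ s := by
  by_contra hcon
  push_neg at hcon
  obtain ⟨μ₁, hμ₁E, hμ₁⟩ := hcon
  obtain ⟨μ₀, hμ₀E, hmax⟩ := E.exists_max_image (fun z : ℂ => ‖z‖) ⟨μ₁, hμ₁E⟩
  set r : ℝ := ‖μ₀‖ with hr
  have hrs : s < r := lt_of_lt_of_le hμ₁ (hmax μ₁ hμ₁E)
  have hr0 : 0 < r := lt_of_le_of_lt hs hrs
  set σ : ℝ := s / r with hσ
  have hσ0 : 0 ≤ σ := div_nonneg hs hr0.le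
  have hσ1 : σ < 1 := (div_lt_one hr0).mpr hrs
  set ν : ℂ → ℂ := fun μ => μ / (r:ℂ) with hν
  have hν1 : ∀ μ ∈ E, ‖ν μ‖ ≤ 1 := by
    intro μ hμ
    simp only [hν, norm_div, Complex.norm_real, Real.norm_eq_abs, abs_of_pos hr0]
    rw [div_le_one hr0]
    exact hmax μ hμ
  have hν0 : ‖ν μ₀‖ = 1 := by
    simp only [hν, norm_div, Complex.norm_real, Real.norm_eq_abs, abs_of_pos hr0]
    rw [div_eq_one_iff_eq hr0.ne']
  set u : ℕ → ℂ := fun n => ∑ μ ∈ E, (m μ : ℂ) * ν μ ^ n with hu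
  have hD : 0 ≤ D := le_trans (norm_nonneg _) (by simpa using h 0)
  have huabs : ∀ n, ‖u n‖ ≤ D * σ ^ n := by
    intro n
    have he : u n = (∑ μ ∈ E, (m μ : ℂ) * μ ^ n) / (r:ℂ) ^ n := by
      rw [Finset.sum_div]
      refine Finset.sum_congr rfl fun μ _ => ?_
      simp [hν, div_pow, mul_div_assoc]
    rw [he, norm_div, norm_pow, Complex.norm_real, Real.norm_eq_abs, abs_of_pos hr0]
    rw [div_le_iff₀ (by positivity)]
    calc ‖∑ μ ∈ E, (m μ : ℂ) * μ ^ n‖ ≤ D * s ^ n := h n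
      _ = D * σ ^ n * r ^ n := by
          rw [mul_assoc, ← mul_pow, hσ, div_mul_cancel₀ _ hr0.ne']
  set W : ℂ × ℂ → ℂ := fun p => ν p.1 * (starRingEnd ℂ) (ν p.2) with hW
  have hWabs : ∀ p, ‖W p‖ = ‖ν p.1‖ * ‖ν p.2‖ := by
    intro p; rw [hW]; simp [norm_mul, Complex.norm_conj]
  -- the sum identity
  have hident : ∀ K : ℕ, ((∑ n ∈ range K, Complex.normSq (u n) : ℝ) : ℂ) =
      ∑ p ∈ E ×ˢ E, ((m p.1 : ℂ) * (m p.2 : ℂ)) * ∑ n ∈ range K, W p ^ n := by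
    intro K
    push_cast
    calc (∑ n ∈ range K, (Complex.normSq (u n) : ℂ))
        = ∑ n ∈ range K, u n * (starRingEnd ℂ) (u n) := by
          refine sum_congr rfl fun n _ => (Complex.mul_conj _).symm
      _ = ∑ n ∈ range K, ∑ p ∈ E ×ˢ E,
            ((m p.1 : ℂ) * ν p.1 ^ n) * ((m p.2 : ℂ) * (starRingEnd ℂ) (ν p.2) ^ n) := by
          refine sum_congr rfl fun n _ => ?_
          rw [hu]
          simp only [map_sum, map_mul, map_pow, map_natCast]
          rw [Finset.sum_mul_sum, ← Finset.sum_product']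
      _ = ∑ p ∈ E ×ˢ E, ((m p.1 : ℂ) * (m p.2 : ℂ)) * ∑ n ∈ range K, W p ^ n := by
          rw [Finset.sum_comm]
          refine sum_congr rfl fun p _ => ?_
          rw [Finset.mul_sum]
          refine sum_congr rfl fun n _ => ?_
          rw [hW]; rw [mul_pow]; ring
  set C1 : ℝ := ∑ p ∈ E ×ˢ E,
      (if W p = 1 then 0 else (m p.1 * m p.2 : ℝ) * (2 / ‖W p - 1‖)) with hC1
  have hW1 : W (μ₀, μ₀) = 1 := by
    show ν μ₀ * (starRingEnd ℂ) (ν μ₀) = 1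
    rw [Complex.mul_conj, Complex.normSq_eq_norm_sq, hν0]
    norm_num
  have hge : ∀ K : ℕ, (K : ℝ) - C1 ≤ ∑ n ∈ range K, Complex.normSq (u n) := by
    intro K
    have hre := congrArg Complex.re (hident K)
    rw [Complex.ofReal_re, Complex.re_sum] at hre
    rw [hre]
    have hpt : ∀ p ∈ E ×ˢ E,
        (if p = (μ₀, μ₀) then (K:ℝ) else 0)
          - (if W p = 1 then 0 else (m p.1 * m p.2 : ℝ) * (2 / ‖W p - 1‖))
        ≤ (((m p.1 : ℂ) * (m p.2 : ℂ)) * ∑ n ∈ range K, W p ^ n).re := by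
      intro p hp
      rw [Finset.mem_product] at hp
      by_cases hWp : W p = 1
      · rw [if_pos hWp, sub_zero]
        have hgs : (∑ n ∈ range K, W p ^ n) = (K:ℂ) := by rw [hWp]; simp
        have hcast : ((m p.1 : ℂ) * (m p.2 : ℂ) * (K:ℂ)) = (((m p.1 * m p.2 * K : ℝ)) : ℂ) := by
          push_cast; ring
        rw [hgs, hcast, Complex.ofReal_re]
        by_cases hpe : p = (μ₀, μ₀)
        · rw [if_pos hpe]
          have h1 : 1 ≤ (m p.1 * m p.2 : ℝ) := by
            have h2 := hm p.1 hp.1; have h3 := hm p.2 hp.2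
            have : 1 ≤ m p.1 * m p.2 := Nat.one_le_iff_ne_zero.mpr (by positivity)
            exact_mod_cast this
          nlinarith [Nat.cast_nonneg (α := ℝ) K]
        · rw [if_neg hpe]
          positivity
      · rw [if_neg hWp]
        have hpne : p ≠ (μ₀, μ₀) := fun hpe => hWp (by rw [hpe, hW1])
        rw [if_neg hpne, zero_sub]
        have hWle : ‖W p‖ ≤ 1 := by
          rw [hWabs p]
          exact mul_le_one₀ (hν1 _ hp.1) (norm_nonneg _) (hν1 _ hp.2)
        set z := (((m p.1 : ℂ) * (m p.2 : ℂ)) * ∑ n ∈ range K, W p ^ n) with hz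
        have habs : ‖z‖ ≤ (m p.1 * m p.2 : ℝ) * (2 / ‖W p - 1‖) := by
          rw [hz, norm_mul, norm_mul, Complex.norm_natCast, Complex.norm_natCast]
          gcongr
          exact geom_bound hWle hWp K
        have h2 : |z.re| ≤ (m p.1 * m p.2 : ℝ) * (2 / ‖W p - 1‖) :=
          le_trans (Complex.abs_re_le_norm z) habs
        linarith [neg_abs_le z.re]
    have hsum := Finset.sum_le_sum hpt
    have heq1 : ∑ p ∈ E ×ˢ E, ((if p = (μ₀, μ₀) then (K:ℝ) else 0)
          - (if W p = 1 then 0 else (m p.1 * m p.2 : ℝ) * (2 / ‖W p - 1‖)))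
        = (K : ℝ) - C1 := by
      rw [Finset.sum_sub_distrib, hC1]
      congr 1
      simp [Finset.sum_ite_eq', Finset.mem_product, hμ₀E]
    rw [heq1] at hsum
    exact hsum
  have hσ2 : σ^2 < 1 := by nlinarith
  have hle : ∀ K : ℕ, ∑ n ∈ range K, Complex.normSq (u n) ≤ D^2 * (1 - σ^2)⁻¹ := by
    intro K
    have : ∀ n ∈ range K, Complex.normSq (u n) ≤ D^2 * (σ^2) ^ n := by
      intro n _
      rw [← Complex.sq_norm]
      calc ‖u n‖ ^ 2 ≤ (D * σ ^ n)^2 :=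
            pow_le_pow_left₀ (norm_nonneg _) (huabs n) 2
        _ = D^2 * (σ^2)^n := by rw [mul_pow, ← pow_mul, ← pow_mul, Nat.mul_comm]
    calc ∑ n ∈ range K, Complex.normSq (u n) ≤ ∑ n ∈ range K, D^2 * (σ^2)^n :=
          Finset.sum_le_sum this
      _ = D^2 * ∑ n ∈ range K, (σ^2)^n := by rw [Finset.mul_sum]
      _ ≤ D^2 * (1 - σ^2)⁻¹ := by
          gcongr
          have hsummable := summable_geometric_of_lt_one (by positivity) hσ2
          have := Summable.sum_le_tsum (range K) (fun i _ => by positivity) hsummable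
          rwa [tsum_geometric_of_lt_one (by positivity) hσ2] at this
  obtain ⟨K, hK⟩ := exists_nat_gt (D^2 * (1 - σ^2)⁻¹ + C1)
  have := hge K
  have := hle K
  linarith

lemma end_trace_spectrum {V : Type*} [AddCommGroup V] [Module ℂ V] [FiniteDimensional ℂ V]
    (f : Module.End ℂ V) :
    ∃ (E : Finset ℂ) (m : ℂ → ℕ),
      (∀ μ ∈ E, 0 < m μ) ∧ spectrum ℂ f = ↑E ∧
      ∀ n : ℕ, LinearMap.trace ℂ V (f ^ n) = ∑ μ ∈ E, (m μ : ℂ) * μ ^ n := by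
  have hfin : {μ : ℂ | f.maxGenEigenspace μ ≠ ⊥}.Finite :=
    WellFoundedGT.finite_ne_bot_of_iSupIndep f.independent_maxGenEigenspace
  refine ⟨hfin.toFinset, fun μ => Module.finrank ℂ (f.maxGenEigenspace μ), ?_, ?_, ?_⟩
  · intro μ hμ
    rw [Set.Finite.mem_toFinset] at hμ
    have : Nontrivial (f.maxGenEigenspace μ) := Submodule.nontrivial_iff_ne_bot.mpr hμ
    exact Module.finrank_pos
  · ext μ
    rw [Finset.mem_coe, Set.Finite.mem_toFinset, Set.mem_setOf_eq]
    have h1 : μ ∈ spectrum ℂ f ↔ f.HasUnifEigenvalue μ 1 :=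
      Module.End.hasUnifEigenvalue_iff_mem_spectrum.symm
    rw [h1, ← Module.End.hasUnifEigenvalue_iff_hasUnifEigenvalue_one
      (f := f) (μ := μ) (k := ⊤) (by norm_num)]
    rw [Module.End.HasUnifEigenvalue, Module.End.maxGenEigenspace]
  · intro n
    have hds := DirectSum.isInternal_submodule_of_iSupIndep_of_iSup_eq_top
      f.independent_maxGenEigenspace (Module.End.iSup_maxGenEigenspace_eq_top f)
    have hmapsTo : ∀ μ : ℂ, Set.MapsTo (f ^ n)
        (f.maxGenEigenspace μ) (f.maxGenEigenspace μ) :=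
      fun μ => Module.End.mapsTo_maxGenEigenspace_of_comm ((Commute.refl f).pow_right n) μ
    rw [LinearMap.trace_eq_sum_trace_restrict' hds hfin hmapsTo]
    refine Finset.sum_congr rfl fun μ hμ => ?_
    have h1 : ∀ x ∈ f.maxGenEigenspace μ, f x ∈ f.maxGenEigenspace μ :=
      Module.End.mapsTo_maxGenEigenspace_of_comm (Commute.refl f) μ
    set g : Module.End ℂ (f.maxGenEigenspace μ) := f.restrict h1 with hg
    have hpow : (f ^ n).restrict (hmapsTo μ) = g ^ n := by
      rw [hg, Module.End.pow_restrict n h1]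
    rw [hpow]
    set c : Module.End ℂ (f.maxGenEigenspace μ) :=
      algebraMap ℂ (Module.End ℂ (f.maxGenEigenspace μ)) μ with hc
    have hsub : ∀ x ∈ f.maxGenEigenspace μ,
        (f - algebraMap ℂ (Module.End ℂ V) μ) x ∈ f.maxGenEigenspace μ :=
      Module.End.mapsTo_maxGenEigenspace_of_comm
        (Algebra.mul_sub_algebraMap_commutes f μ) μ
    have hN : IsNilpotent ((f - algebraMap ℂ (Module.End ℂ V) μ).restrict hsub) :=
      f.isNilpotent_restrict_maxGenEigenspace_sub_algebraMap μ hsub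
    have heq : (f - algebraMap ℂ (Module.End ℂ V) μ).restrict hsub = g - c := by
      ext x
      simp [hg, hc, LinearMap.restrict_apply, Module.algebraMap_end_apply]
    rw [heq] at hN
    -- nilpotency of g^k - c^k
    have hcomm : ∀ x : Module.End ℂ (f.maxGenEigenspace μ), Commute c x :=
      fun x => Algebra.commutes μ x
    have hnil : ∀ k : ℕ, IsNilpotent (g ^ k - c ^ k) := by
      intro k
      induction k with
      | zero => simp only [pow_zero, sub_self]; exact IsNilpotent.zero
      | succ k ih =>
        have e : g ^ (k+1) - c ^ (k+1) = g * (g ^ k - c ^ k) + (g - c) * c ^ k := by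
          rw [mul_sub, sub_mul, pow_succ', pow_succ']
          abel
        rw [e]
        have hgc : Commute g c := (hcomm g).symm
        have h2 : Commute g (g ^ k - c ^ k) :=
          ((Commute.refl g).pow_right k).sub_right (hgc.pow_right k)
        have h3 : Commute (g - c) (c ^ k) :=
          ((hcomm g).symm.pow_right k).sub_left ((Commute.refl c).pow_right k)
        have hn1 : IsNilpotent (g * (g ^ k - c ^ k)) := h2.isNilpotent_mul_left ih
        have hn2 : IsNilpotent ((g - c) * c ^ k) := h3.isNilpotent_mul_right hN
        have hcomm2 : Commute (g * (g ^ k - c ^ k)) ((g - c) * c ^ k) := by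
          have cgc : Commute g (g - c) := (Commute.refl g).sub_right hgc
          have cgd : Commute g (c ^ k) := hgc.pow_right k
          have cbc : Commute (g ^ k - c ^ k) (g - c) :=
            (((Commute.refl g).pow_left k).sub_right (hgc.pow_left k)).sub_left
              (((hcomm g).pow_left k).sub_right ((Commute.refl c).pow_left k))
          have cbd : Commute (g ^ k - c ^ k) (c ^ k) :=
            (hgc.pow_pow k k).sub_left (Commute.refl (c ^ k))
          exact (cgc.mul_right cgd).mul_left (cbc.mul_right cbd)
        exact hcomm2.isNilpotent_add hn1 hn2
    -- compute the trace
    have : g ^ n = c ^ n + (g ^ n - c ^ n) := by abel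
    rw [this, map_add]
    have ht0 : LinearMap.trace ℂ _ (g ^ n - c ^ n) = 0 :=
      (LinearMap.isNilpotent_trace_of_isNilpotent (hnil n)).eq_zero
    rw [ht0, add_zero, hc, ← map_pow, Module.algebraMap_end_eq_smul_id, map_smul,
      LinearMap.trace_id]
    simp [mul_comm]
lemma matrix_trace_spectrum (d : ℕ) (M : Matrix (Fin d) (Fin d) ℂ) :
    ∃ (E : Finset ℂ) (m : ℂ → ℕ),
      (∀ μ ∈ E, 0 < m μ) ∧ spectrum ℂ M = ↑E ∧
      ∀ n : ℕ, (M ^ n).trace = ∑ μ ∈ E, (m μ : ℂ) * μ ^ n := by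
  classical
  let b := Pi.basisFun ℂ (Fin d)
  obtain ⟨E, m, hm, hspec, htr⟩ := end_trace_spectrum (Matrix.toLinAlgEquiv b M)
  refine ⟨E, m, hm, ?_, ?_⟩
  · rw [← hspec, AlgEquiv.spectrum_eq]
  · intro n
    have h1 := htr n
    rw [← map_pow] at h1
    rw [← h1, LinearMap.trace_eq_matrix_trace ℂ b]
    congr 1
    have h2 := LinearMap.toMatrixAlgEquiv_toLinAlgEquiv b (M ^ n)
    rw [LinearMap.toMatrixAlgEquiv, AlgEquiv.ofLinearEquiv_apply] at h2
    exact h2.symm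

attribute [local instance] Matrix.linftyOpNormedAddCommGroup Matrix.linftyOpNormedRing
  Matrix.linftyOpNormedAlgebra

lemma maxmod_step (f : ℂ → ℂ) (hf : Differentiable ℂ f) {C : ℝ}
    (hC : ∀ s : ℂ, ‖s‖ = 1 → ‖f s‖ ≤ C) :
    ∀ s : ℂ, ‖s‖ ≤ 1 → ‖f s‖ ≤ C := by
  intro s hs
  have h1 : s ∈ closure (Metric.ball (0:ℂ) 1) := by
    rw [closure_ball (0:ℂ) one_ne_zero]
    simpa [Complex.dist_eq] using hs
  have := Complex.norm_le_of_forall_mem_frontier_norm_le (f := f)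
    Metric.isBounded_ball hf.diffContOnCl (C := C) ?_ h1
  · simpa using this
  · intro z hz
    rw [frontier_ball (0:ℂ) one_ne_zero] at hz
    have hz1 : ‖z‖ = 1 := by simpa [Complex.dist_eq] using hz
    simpa using hC z hz1

lemma polydisk_bound (N : ℕ) (g : (Fin N → ℂ) → ℂ)
    (hdiff : ∀ (t : Fin N → ℂ) (j : Fin N),
      Differentiable ℂ (fun s => g (Function.update t j s)))
    {C : ℝ}
    (hbase : ∀ t : Fin N → ℂ, (∀ k, ‖t k‖ = 1) → ‖g t‖ ≤ C) :
    ∀ t : Fin N → ℂ, (∀ k, ‖t k‖ ≤ 1) → ‖g t‖ ≤ C := by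
  suffices H : ∀ j : ℕ, ∀ t : Fin N → ℂ, (∀ k, ‖t k‖ ≤ 1) →
      (∀ k : Fin N, j ≤ (k:ℕ) → ‖t k‖ = 1) → ‖g t‖ ≤ C by
    intro t ht
    exact H N t ht (fun k hk => absurd k.isLt (by omega))
  intro j
  induction j with
  | zero => intro t ht h1; exact hbase t (fun k => h1 k (Nat.zero_le _))
  | succ j ih =>
    intro t ht h1
    by_cases hjN : j < N
    · set jf : Fin N := ⟨j, hjN⟩ with hjf
      have hup : g t = (fun s => g (Function.update t jf s)) (t jf) := by
        show g t = g (Function.update t jf (t jf))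
        rw [Function.update_eq_self]
      rw [hup]
      refine maxmod_step _ (hdiff t jf) ?_ (t jf) (ht jf)
      intro s hs
      apply ih (Function.update t jf s)
      · intro k
        rcases eq_or_ne k jf with rfl | hk
        · rw [Function.update_self]; exact hs.le
        · rw [Function.update_of_ne hk]; exact ht k
      · intro k hk
        rcases eq_or_ne k jf with rfl | hkj
        · rw [Function.update_self]; exact hs
        · rw [Function.update_of_ne hkj]
          apply h1
          have : (k:ℕ) ≠ j := fun h => hkj (Fin.ext (by rw [h, hjf]))
          omega
    · exact ih t ht (fun k hk => h1 k (by omega))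

lemma g_diff {d N : ℕ} (n : ℕ) (B : Fin N → Matrix (Fin d) (Fin d) ℂ) (t : Fin N → ℂ)
    (j : Fin N) :
    Differentiable ℂ (fun s : ℂ => ((∑ k, Function.update t j s k • B k) ^ n).trace) := by
  have h1 : Differentiable ℂ (fun s : ℂ => (∑ k, Function.update t j s k • B k)) := by
    apply Differentiable.fun_sum
    intro k _
    rcases eq_or_ne k j with rfl | hk
    · simp only [Function.update_self]
      exact differentiable_id.smul_const (B k)
    · simp only [Function.update_of_ne hk]
      exact differentiable_const _
  have h2 := h1.pow n
  have h3 := (LinearMap.toContinuousLinearMap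
    (Matrix.traceLinearMap (Fin d) ℂ ℂ)).differentiable.comp h2
  exact h3

theorem stmt9 (d N : ℕ) (A : Fin N → Matrix (Fin d) (Fin d) ℝ) :
    sSup ((fun t : Fin N → ℂ =>
        spectralRadius ℂ (∑ k, t k • (A k).map (Complex.ofReal))) ''
        {t | ∀ k, ‖t k‖ ≤ 1}) =
    sSup ((fun θ : Fin N → ℝ =>
        spectralRadius ℂ (∑ k, Complex.exp (Complex.I * (θ k : ℂ)) • (A k).map (Complex.ofReal))) ''
        {θ | ∀ k, θ k ∈ Set.Icc (0:ℝ) (2 * Real.pi)}) := by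
  classical
  set B : Fin N → Matrix (Fin d) (Fin d) ℂ := fun k => (A k).map Complex.ofReal with hB
  apply le_antisymm
  · apply sSup_le
    rintro x ⟨t, ht, rfl⟩
    simp only [Set.mem_setOf_eq] at ht
    set RHSet : Set ℝ≥0∞ := ((fun θ : Fin N → ℝ =>
        spectralRadius ℂ (∑ k, Complex.exp (Complex.I * (θ k : ℂ)) • B k)) ''
        {θ | ∀ k, θ k ∈ Set.Icc (0:ℝ) (2 * Real.pi)}) with hR
    show spectralRadius ℂ (∑ k, t k • B k) ≤ sSup RHSet
    by_cases hS : sSup RHSet = ⊤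
    · rw [hS]; exact le_top
    set s : ℝ := (sSup RHSet).toReal with hs
    have hs0 : 0 ≤ s := ENNReal.toReal_nonneg
    have htorus : ∀ θ : Fin N → ℝ, (∀ k, θ k ∈ Set.Icc (0:ℝ) (2*Real.pi)) → ∀ n : ℕ,
        ‖((∑ k, Complex.exp (Complex.I * (θ k : ℂ)) • B k) ^ n).trace‖
          ≤ d * s ^ n := by
      intro θ hθ n
      set Mθ : Matrix (Fin d) (Fin d) ℂ := ∑ k, Complex.exp (Complex.I * (θ k : ℂ)) • B k
        with hMθ
      obtain ⟨E, m, hm, hspec, htr⟩ := matrix_trace_spectrum d Mθ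
      have hmem : spectralRadius ℂ Mθ ∈ RHSet := ⟨θ, hθ, rfl⟩
      have hle : spectralRadius ℂ Mθ ≤ sSup RHSet := le_sSup hmem
      have hroot : ∀ μ ∈ E, ‖μ‖ ≤ s := by
        intro μ hμ
        have hμspec : μ ∈ spectrum ℂ Mθ := by rw [hspec]; exact hμ
        have h2 : (‖μ‖₊ : ℝ≥0∞) ≤ spectralRadius ℂ Mθ :=
          le_iSup₂ (f := fun k (_ : k ∈ spectrum ℂ Mθ) => (‖k‖₊ : ℝ≥0∞)) μ hμspec
        have h4 := ENNReal.toReal_mono hS (le_trans h2 hle)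
        simpa using h4
      have hcard : (∑ μ ∈ E, (m μ : ℝ)) ≤ d := by
        have h0 := htr 0
        simp only [pow_zero, mul_one, Matrix.trace_one] at h0
        have h1 : ((Fintype.card (Fin d) : ℕ) : ℂ) = ((∑ μ ∈ E, m μ : ℕ) : ℂ) := by
          push_cast
          simpa using h0
        have h2 : (Fintype.card (Fin d) : ℕ) = ∑ μ ∈ E, m μ := Nat.cast_injective h1
        rw [Fintype.card_fin] at h2
        rw [show (∑ μ ∈ E, (m μ : ℝ)) = ((∑ μ ∈ E, m μ : ℕ) : ℝ) by push_cast; rfl, ← h2]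
      calc ‖(Mθ ^ n).trace‖
          = ‖∑ μ ∈ E, (m μ : ℂ) * μ ^ n‖ := by rw [htr n]
        _ ≤ ∑ μ ∈ E, ‖(m μ : ℂ) * μ ^ n‖ := norm_sum_le _ _
        _ ≤ ∑ μ ∈ E, (m μ : ℝ) * s ^ n := by
            refine Finset.sum_le_sum fun μ hμ => ?_
            rw [norm_mul, norm_pow, Complex.norm_natCast]
            gcongr
            exact hroot μ hμ
        _ = (∑ μ ∈ E, (m μ : ℝ)) * s ^ n := by rw [Finset.sum_mul]
        _ ≤ d * s ^ n := mul_le_mul_of_nonneg_right hcard (by positivity)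
    have hpoly : ∀ n : ℕ, ‖((∑ k, t k • B k) ^ n).trace‖ ≤ d * s ^ n := by
      intro n
      refine polydisk_bound N (fun t' => ((∑ k, t' k • B k) ^ n).trace)
        (fun t' j => g_diff n B t' j) ?_ t ht
      intro t' ht'
      choose θ hθI hθe using fun k => exists_theta (ht' k)
      have he : (∑ k, t' k • B k) = ∑ k, Complex.exp (Complex.I * (θ k : ℂ)) • B k :=
        Finset.sum_congr rfl fun k _ => by rw [hθe k]
      show ‖((∑ k, t' k • B k) ^ n).trace‖ ≤ d * s ^ n
      rw [he]
      exact htorus θ hθI n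
    obtain ⟨E, m, hm, hspec, htr⟩ := matrix_trace_spectrum d (∑ k, t k • B k)
    have habs : ∀ μ ∈ E, ‖μ‖ ≤ s := by
      refine powersum_bound E m hm (D := d) hs0 fun n => ?_
      rw [← htr n]
      exact hpoly n
    have hfinal : (⨆ μ ∈ spectrum ℂ (∑ k, t k • B k), (‖μ‖₊ : ℝ≥0∞)) ≤ sSup RHSet := by
      refine iSup₂_le fun μ hμ => ?_
      rw [hspec] at hμ
      have h1 : ‖μ‖ ≤ s := habs μ hμ
      have h2 : (‖μ‖₊ : ℝ≥0∞) ≤ ENNReal.ofReal s := by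
        rw [← ENNReal.ofReal_coe_nnreal, coe_nnnorm]
        exact ENNReal.ofReal_le_ofReal h1
      calc (‖μ‖₊ : ℝ≥0∞) ≤ ENNReal.ofReal s := h2
        _ = sSup RHSet := ENNReal.ofReal_toReal hS
    exact hfinal
  · apply sSup_le_sSup
    rintro x ⟨θ, hθ, rfl⟩
    refine ⟨fun k => Complex.exp (Complex.I * (θ k : ℂ)), fun k => ?_, rfl⟩
    simp [Complex.norm_exp]
end

section
/- Let $\mu$ be a matrix-valued Borel measure with finite total variation on $[-1,0]$ and suppose $\sup_{\xi} \rho\left(\int_{-1}^0 e^{i\xi(\theta)}\, d\mu(\theta)\right) < 1$, where the supremum is over all Borel-measurable $\xi \colon [-1,0] \to \mathbb{R}$. Then $\sup_{\eta} \rho\left(\int_{-1}^0 \eta(\theta)\, d\mu(\theta)\right) \le 1$, where the supremum is over all Borel-measurable $\eta \colon [-1,0] \to \overline{B}_1(0)$ with values in the closed unit disk. -/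
open MeasureTheory Set ENNReal NNReal Complex

attribute [local instance] Matrix.normedAddCommGroup Matrix.normedSpace

noncomputable def bl (w z : ℂ) : ℂ :=
  if ‖w‖ = 1 then w else (z + w) / (1 + (starRingEnd ℂ) w * z)

noncomputable def bl' (w z : ℂ) : ℂ :=
  if ‖w‖ = 1 then 0 else
    (1 - (starRingEnd ℂ) w * w) / (1 + (starRingEnd ℂ) w * z) ^ 2

lemma bl_zero {w : ℂ} : bl w 0 = w := by
  unfold bl; split_ifs with h <;> simp

lemma bl_denom_ne {w z : ℂ} (hw : ‖w‖ < 1) (hz : ‖z‖ ≤ 1) :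
    1 + (starRingEnd ℂ) w * z ≠ 0 := by
  intro hc
  have h1 : ‖(starRingEnd ℂ) w * z‖ < 1 := by
    rw [norm_mul, Complex.norm_conj]
    calc ‖w‖ * ‖z‖ ≤ ‖w‖ * 1 :=
          mul_le_mul_of_nonneg_left hz (norm_nonneg w)
    _ < 1 := by simpa using hw
  have : (starRingEnd ℂ) w * z = -1 := by linear_combination hc
  rw [this] at h1; simp at h1

lemma bl_key (w z : ℂ) :
    Complex.normSq (1 + (starRingEnd ℂ) w * z) - Complex.normSq (z + w)
      = (1 - Complex.normSq w) * (1 - Complex.normSq z) := by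
  have key : ((Complex.normSq (1 + (starRingEnd ℂ) w * z) : ℂ)) - (Complex.normSq (z + w) : ℂ)
      = ((1 : ℂ) - Complex.normSq w) * ((1 : ℂ) - Complex.normSq z) := by
    rw [← Complex.mul_conj, ← Complex.mul_conj, ← Complex.mul_conj, ← Complex.mul_conj]
    simp only [map_add, map_mul, map_one, Complex.conj_conj]
    ring
  exact_mod_cast key

lemma abs_bl_le {w z : ℂ} (hw : ‖w‖ ≤ 1) (hz : ‖z‖ ≤ 1) :
    ‖bl w z‖ ≤ 1 := by
  unfold bl; split_ifs with h
  · exact h.le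
  · have hw1 : ‖w‖ < 1 := lt_of_le_of_ne hw h
    have hden := bl_denom_ne hw1 hz
    have hdenpos : 0 < ‖1 + (starRingEnd ℂ) w * z‖ :=
      norm_pos_iff.mpr hden
    rw [norm_div, div_le_one hdenpos]
    have h1 : Complex.normSq (z + w) ≤ Complex.normSq (1 + (starRingEnd ℂ) w * z) := by
      have := bl_key w z
      nlinarith [Complex.normSq_nonneg w, Complex.normSq_nonneg z,
        (Complex.sq_norm w) ▸ (by nlinarith [norm_nonneg w] : (‖w‖)^2 ≤ 1),
        (Complex.sq_norm z) ▸ (by nlinarith [norm_nonneg z] : (‖z‖)^2 ≤ 1)]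
    rw [Complex.norm_def, Complex.norm_def]
    exact Real.sqrt_le_sqrt h1

lemma abs_bl_eq {w z : ℂ} (hw : ‖w‖ ≤ 1) (hz : ‖z‖ = 1) :
    ‖bl w z‖ = 1 := by
  unfold bl; split_ifs with h
  · exact h
  · have hw1 : ‖w‖ < 1 := lt_of_le_of_ne hw h
    have hden := bl_denom_ne hw1 hz.le
    have h1 : Complex.normSq (z + w) = Complex.normSq (1 + (starRingEnd ℂ) w * z) := by
      have hk := bl_key w z
      have : Complex.normSq z = 1 := by
        rw [← Complex.sq_norm, hz]; norm_num
      rw [this] at hk; linarith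
    rw [norm_div, Complex.norm_def, Complex.norm_def, h1, div_self]
    exact ne_of_gt (Real.sqrt_pos.mpr (Complex.normSq_pos.mpr hden))

lemma hasDerivAt_bl {w z : ℂ} (hw : ‖w‖ ≤ 1) (hz : ‖z‖ < 1) :
    HasDerivAt (bl w) (bl' w z) z := by
  unfold bl bl'
  split_ifs with h
  · simpa using hasDerivAt_const z w
  · have hw1 : ‖w‖ < 1 := lt_of_le_of_ne hw h
    have hden := bl_denom_ne hw1 hz.le
    have h1 : HasDerivAt (fun z : ℂ => z + w) 1 z := by
      simpa using (hasDerivAt_id z).add_const w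
    have h2 : HasDerivAt (fun z : ℂ => 1 + (starRingEnd ℂ) w * z) ((starRingEnd ℂ) w) z := by
      simpa using ((hasDerivAt_id z).const_mul ((starRingEnd ℂ) w)).const_add 1
    have := h1.fun_div h2 hden
    exact this.congr_deriv (by ring)

lemma abs_bl'_le {w z : ℂ} {δ : ℝ} (hδ : 0 < δ) (hw : ‖w‖ ≤ 1)
    (hz : ‖z‖ ≤ 1 - δ) : ‖bl' w z‖ ≤ 1 / δ ^ 2 := by
  unfold bl'; split_ifs with h
  · simp; positivity
  · have hnum : ‖1 - (starRingEnd ℂ) w * w‖ ≤ 1 := by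
      have : (starRingEnd ℂ) w * w = (Complex.normSq w : ℂ) := by
        rw [mul_comm, Complex.mul_conj]
      rw [this]
      have h1 : ((1 : ℂ) - (Complex.normSq w : ℂ)) = ((1 - Complex.normSq w : ℝ) : ℂ) := by
        push_cast; ring
      rw [h1, Complex.norm_real, Real.norm_eq_abs, abs_le]
      constructor <;> nlinarith [Complex.sq_norm w, norm_nonneg w, Complex.normSq_nonneg w]
    have hden : δ ≤ ‖1 + (starRingEnd ℂ) w * z‖ := by
      have h2 : ‖(starRingEnd ℂ) w * z‖ ≤ 1 - δ := by
        rw [norm_mul, Complex.norm_conj]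
        calc ‖w‖ * ‖z‖ ≤ 1 * (1 - δ) := by
              apply mul_le_mul hw hz (norm_nonneg z) zero_le_one
        _ = 1 - δ := one_mul _
      calc δ = 1 - (1 - δ) := by ring
      _ ≤ ‖(1:ℂ)‖ - ‖(starRingEnd ℂ) w * z‖ := by
            simp only [norm_one]; linarith
      _ ≤ ‖1 + (starRingEnd ℂ) w * z‖ := by
            have h3 := norm_add_le (1 + (starRingEnd ℂ) w * z) (-((starRingEnd ℂ) w * z))
            simp only [add_neg_cancel_right, norm_neg, norm_one] at h3
            simp only [norm_one]
            linarith
    rw [norm_div, norm_pow]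
    have hd2 : δ ^ 2 ≤ ‖1 + (starRingEnd ℂ) w * z‖ ^ 2 := by nlinarith
    exact div_le_div₀ zero_le_one hnum (by positivity) hd2

lemma continuousAt_bl {w z : ℂ} (hw : ‖w‖ ≤ 1) (hz : ‖z‖ ≤ 1) :
    ContinuousAt (bl w) z := by
  unfold bl; split_ifs with h
  · exact continuousAt_const
  · have hw1 : ‖w‖ < 1 := lt_of_le_of_ne hw h
    have hden := bl_denom_ne hw1 hz
    exact ContinuousAt.div (by fun_prop) (by fun_prop) hden

lemma measurable_bl {η : ℝ → ℂ} (hη : Measurable η) (z : ℂ) :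
    Measurable (fun θ => bl (η θ) z) := by
  unfold bl
  apply Measurable.ite
  · exact (continuous_norm.measurable.comp hη) (measurableSet_singleton 1)
  · exact hη
  · exact (measurable_const.add hη).div
      (measurable_const.add ((Complex.continuous_conj.measurable.comp hη).mul measurable_const))

lemma measurable_bl' {η : ℝ → ℂ} (hη : Measurable η) (z : ℂ) :
    Measurable (fun θ => bl' (η θ) z) := by
  unfold bl'
  apply Measurable.ite
  · exact (continuous_norm.measurable.comp hη) (measurableSet_singleton 1)
  · exact measurable_const
  · exact (measurable_const.sub ((Complex.continuous_conj.measurable.comp hη).mul hη)).div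
      (((measurable_const.add ((Complex.continuous_conj.measurable.comp hη).mul measurable_const))).pow_const 2)

section IntBl

variable {ν : Measure ℝ} [IsFiniteMeasure ν] {η : ℝ → ℂ}

lemma continuousOn_intBl (hη : Measurable η) (hb : ∀ θ, ‖η θ‖ ≤ 1) :
    ContinuousOn (fun z => ∫ θ, bl (η θ) z ∂ν) (Metric.closedBall (0:ℂ) 1) := by
  intro z0 hz0
  rw [mem_closedBall_zero_iff] at hz0
  apply continuousWithinAt_of_dominated (bound := fun _ => 1)
  · exact Filter.Eventually.of_forall fun z => (measurable_bl hη z).aestronglyMeasurable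
  · filter_upwards [eventually_mem_nhdsWithin] with z hz
    rw [mem_closedBall_zero_iff] at hz
    exact ae_of_all _ fun θ => by
      simpa using abs_bl_le (hb θ) hz
  · exact integrable_const 1
  · exact ae_of_all _ fun θ =>
      (continuousAt_bl (hb θ) hz0).continuousWithinAt

lemma hasDerivAt_intBl (hη : Measurable η) (hb : ∀ θ, ‖η θ‖ ≤ 1)
    {z0 : ℂ} (hz0 : z0 ∈ Metric.ball (0:ℂ) 1) :
    HasDerivAt (fun z => ∫ θ, bl (η θ) z ∂ν) (∫ θ, bl' (η θ) z0 ∂ν) z0 := by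
  rw [mem_ball_zero_iff] at hz0
  set ε := (1 - ‖z0‖) / 2 with hε_def
  have hε : 0 < ε := by
    have := norm_nonneg z0
    simp only [hε_def]; linarith
  have hball : ∀ z ∈ Metric.ball z0 ε, ‖z‖ ≤ 1 - ε := by
    intro z hz
    rw [Metric.mem_ball, dist_eq_norm] at hz
    have : ‖z‖ - ‖z0‖ ≤ ‖z - z0‖ := norm_sub_norm_le z z0
    simp only [hε_def] at *
    linarith
  refine (hasDerivAt_integral_of_dominated_loc_of_deriv_le (Metric.ball_mem_nhds z0 hε)
    (F' := fun z θ => bl' (η θ) z)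
    (bound := fun _ => 1 / ε ^ 2)
    (Filter.Eventually.of_forall fun z => (measurable_bl hη z).aestronglyMeasurable)
    ?_ ((measurable_bl' hη z0).aestronglyMeasurable) ?_ (integrable_const _) ?_).2
  · refine Integrable.mono' (integrable_const 1)
      (measurable_bl hη z0).aestronglyMeasurable (ae_of_all _ fun θ => ?_)
    simpa using abs_bl_le (hb θ) hz0.le
  · exact ae_of_all _ fun θ => fun z hz => by
      simpa using abs_bl'_le hε (hb θ) (hball z hz)
  · exact ae_of_all _ fun θ => fun z hz =>
      hasDerivAt_bl (hb θ) (lt_of_le_of_lt (hball z hz) (by linarith))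

end IntBl

section Unif

variable {A : Type*} [NormedRing A] [NormedAlgebra ℂ A] [CompleteSpace A]

lemma exists_pow_norm_lt_one (a : A) (ha : spectralRadius ℂ a < 1) :
    ∃ N : ℕ, 0 < N ∧ ‖a ^ N‖ < 1 := by
  have ht := spectrum.pow_nnnorm_pow_one_div_tendsto_nhds_spectralRadius a
  have hev : ∀ᶠ n : ℕ in Filter.atTop,
      ((‖a ^ n‖₊ : ℝ≥0∞) ^ (1 / n : ℝ)) < 1 := ht.eventually_lt_const ha
  obtain ⟨n, hn1, hn⟩ := (hev.and (Filter.eventually_ge_atTop 1)).exists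
  refine ⟨n, hn, ?_⟩
  by_contra hcon
  push_neg at hcon
  have h1 : (1 : ℝ≥0∞) ≤ (‖a ^ n‖₊ : ℝ≥0∞) := by
    rw [ENNReal.one_le_coe_iff]
    exact_mod_cast hcon
  have h2 : (1 : ℝ≥0∞) ≤ ((‖a ^ n‖₊ : ℝ≥0∞)) ^ (1 / n : ℝ) := by
    calc (1 : ℝ≥0∞) = 1 ^ (1 / n : ℝ) := (ENNReal.one_rpow _).symm
    _ ≤ _ := ENNReal.rpow_le_rpow h1 (by positivity)
  exact absurd (lt_of_le_of_lt h2 hn1) (lt_irrefl _)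

lemma uniform_power_bound [NormOneClass A] {s : Set ℂ} (hs : IsCompact s) {T : ℂ → A}
    (hT : ContinuousOn T s) (hρ : ∀ z ∈ s, spectralRadius ℂ (T z) < 1) :
    ∃ C : ℝ, ∀ z ∈ s, ∀ n : ℕ, ‖T z ^ n‖ ≤ C := by
  -- choose exponents
  have hN : ∀ z : s, ∃ N : ℕ, 0 < N ∧ ‖T z ^ N‖ < 1 := fun z =>
    exists_pow_norm_lt_one _ (hρ z z.2)
  choose N hNpos hNlt using hN
  haveI : CompactSpace s := isCompact_iff_compactSpace.mp hs
  have hTc : Continuous fun x : s => T x := hT.restrict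
  -- cover
  have hcov : (Set.univ : Set s) ⊆ ⋃ w : s, {x : s | ‖T x ^ N w‖ < 1} := by
    intro x _
    exact Set.mem_iUnion.mpr ⟨x, hNlt x⟩
  obtain ⟨t, ht⟩ := isCompact_univ.elim_finite_subcover
    (fun w : s => {x : s | ‖T x ^ N w‖ < 1})
    (fun w => isOpen_lt (by continuity) continuous_const) hcov
  -- bound for small exponents
  obtain ⟨B, hB⟩ := hs.exists_bound_of_continuousOn hT
  set M := t.sup N with hM_def
  set C := (max B 1) ^ M with hC_def
  have hC1 : (1:ℝ) ≤ max B 1 := le_max_right _ _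
  have hsmall : ∀ z ∈ s, ∀ m : ℕ, m ≤ M → ‖T z ^ m‖ ≤ C := by
    intro z hz m hm
    rcases Nat.eq_zero_or_pos m with rfl | hmpos
    · simpa [hC_def, norm_one] using one_le_pow₀ hC1 (n := M)
    · calc ‖T z ^ m‖ ≤ ‖T z‖ ^ m := norm_pow_le' _ hmpos
      _ ≤ (max B 1) ^ m := by
          apply pow_le_pow_left₀ (norm_nonneg _) ((hB z hz).trans (le_max_left _ _))
      _ ≤ C := pow_le_pow_right₀ hC1 hm
  refine ⟨C, fun z hz n => ?_⟩
  obtain ⟨w, hwt, hw⟩ : ∃ w ∈ t, ‖T z ^ N w‖ < 1 := by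
    have := ht (Set.mem_univ (⟨z, hz⟩ : s))
    simp only [Set.mem_iUnion, Set.mem_setOf_eq] at this
    obtain ⟨w, hwt, hw⟩ := this
    exact ⟨w, hwt, hw⟩
  have hNM : N w ≤ M := Finset.le_sup hwt
  obtain ⟨q, r, hr, rfl⟩ : ∃ q r, r < N w ∧ N w * q + r = n :=
    ⟨n / N w, n % N w, Nat.mod_lt _ (hNpos w), by rw [Nat.div_add_mod]⟩
  calc ‖T z ^ (N w * q + r)‖ = ‖(T z ^ N w) ^ q * T z ^ r‖ := by rw [pow_add, pow_mul]
  _ ≤ ‖(T z ^ N w) ^ q‖ * ‖T z ^ r‖ := norm_mul_le _ _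
  _ ≤ 1 * C := by
      apply mul_le_mul ?_ (hsmall z hz r (hr.le.trans hNM)) (norm_nonneg _) zero_le_one
      rcases Nat.eq_zero_or_pos q with rfl | hq
      · simp [norm_one]
      · calc ‖(T z ^ N w) ^ q‖ ≤ ‖T z ^ N w‖ ^ q := norm_pow_le' _ hq
        _ ≤ 1 ^ q := pow_le_pow_left₀ (norm_nonneg _) hw.le q
        _ = 1 := one_pow q
  _ = C := one_mul C

end Unif
theorem stmt10 (d : ℕ) (μ : Fin d → Fin d → SignedMeasure ℝ)
    (hfin : measVar μ (-1) 0 ≠ ⊤)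
    (h : rhoHS μ < 1) :
    (⨆ η : {η : ℝ → ℂ // Measurable η ∧ ∀ θ, ‖η θ‖ ≤ 1},
        spectralRadius ℂ (mInt (-1) 0 μ η.1)) ≤ 1 := by
  classical
  refine iSup_le fun ηp => ?_
  obtain ⟨η, hηm, hηb⟩ := ηp
  rcases Nat.eq_zero_or_pos d with rfl | hd
  · haveI : Subsingleton (Matrix (Fin 0) (Fin 0) ℂ) :=
      ⟨fun a b => by ext i j; exact i.elim0⟩
    have hes : spectrum ℂ (mInt (-1) 0 μ η) = ∅ := by
      ext k
      simp [spectrum.mem_iff, isUnit_of_subsingleton]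
    rw [spectralRadius, hes]
    simp
  -- main case
  set Am : ℂ → Matrix (Fin d) (Fin d) ℂ :=
    fun z => mInt (-1) 0 μ (fun θ => bl (η θ) z) with hAm
  have hentry : ∀ i j (z : ℂ), Am z i j
      = (∫ θ, bl (η θ) z ∂((μ i j).toJordanDecomposition.posPart.restrict (Set.Icc (-1) 0)))
        - (∫ θ, bl (η θ) z ∂((μ i j).toJordanDecomposition.negPart.restrict (Set.Icc (-1) 0))) := by
    intro i j z
    simp only [hAm, mInt, Matrix.of_apply, sInt]
  have hcontE : ∀ i j, ContinuousOn (fun z => Am z i j) (Metric.closedBall (0:ℂ) 1) := by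
    intro i j
    have := (continuousOn_intBl (ν := (μ i j).toJordanDecomposition.posPart.restrict (Set.Icc (-1) 0)) hηm hηb).sub
      (continuousOn_intBl (ν := (μ i j).toJordanDecomposition.negPart.restrict (Set.Icc (-1) 0)) hηm hηb)
    refine this.congr fun z hz => hentry i j z
  have hdiffE : ∀ i j, DifferentiableOn ℂ (fun z => Am z i j) (Metric.ball (0:ℂ) 1) := by
    intro i j z0 hz0
    have h1 := (hasDerivAt_intBl (ν := (μ i j).toJordanDecomposition.posPart.restrict (Set.Icc (-1) 0)) hηm hηb hz0)
    have h2 := (hasDerivAt_intBl (ν := (μ i j).toJordanDecomposition.negPart.restrict (Set.Icc (-1) 0)) hηm hηb hz0)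
    have h3 := (h1.sub h2).differentiableAt
    refine DifferentiableAt.differentiableWithinAt (h3.congr_of_eventuallyEq ?_)
    exact Filter.Eventually.of_forall fun z => (hentry i j z)
  have hpow : ∀ n : ℕ, ∀ i j, ContinuousOn (fun z => ((Am z)^n) i j) (Metric.closedBall (0:ℂ) 1)
      ∧ DifferentiableOn ℂ (fun z => ((Am z)^n) i j) (Metric.ball (0:ℂ) 1) := by
    intro n
    induction n with
    | zero =>
      intro i j
      simp only [pow_zero, Matrix.one_apply]
      exact ⟨continuousOn_const, differentiableOn_const _⟩
    | succ n ih =>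
      intro i j
      simp only [pow_succ, Matrix.mul_apply]
      constructor
      · exact continuousOn_finset_sum _ (fun k _ => ((ih i k).1.mul (hcontE k j)))
      · exact DifferentiableOn.fun_sum (fun k _ => ((ih i k).2.mul ((hdiffE k j))))
  have hmat : ∀ n : ℕ, DiffContOnCl ℂ (fun z => (Am z)^n) (Metric.ball (0:ℂ) 1) := by
    intro n
    have hrep : (fun z => (Am z)^n)
        = fun z => ∑ i, ∑ j, ((Am z ^ n) i j) • Matrix.single i j (1:ℂ) := by
      funext z
      conv_lhs => rw [Matrix.matrix_eq_sum_single ((Am z)^n)]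
      simp [Matrix.smul_single]
    rw [hrep]
    constructor
    · exact DifferentiableOn.fun_sum fun i _ => DifferentiableOn.fun_sum fun j _ =>
        (hpow n i j).2.smul_const _
    · rw [closure_ball (0:ℂ) one_ne_zero]
      exact continuousOn_finset_sum _ fun i _ => continuousOn_finset_sum _ fun j _ =>
        ((hpow n i j).1.smul continuousOn_const)
  have hsph : ∀ z ∈ Metric.sphere (0:ℂ) 1, spectralRadius ℂ (Am z) < 1 := by
    intro z hz
    rw [mem_sphere_zero_iff_norm] at hz
    set ξ : ℝ → ℝ := fun θ => Complex.arg (bl (η θ) z) with hξ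
    have hξm : Measurable ξ := Complex.measurable_arg.comp (measurable_bl hηm z)
    have hfun : (fun θ => Complex.exp (Complex.I * (ξ θ : ℂ))) = fun θ => bl (η θ) z := by
      funext θ
      have h1 : ‖bl (η θ) z‖ = 1 := abs_bl_eq (hηb θ) hz
      have h2 := Complex.norm_mul_exp_arg_mul_I (bl (η θ) z)
      rw [h1] at h2
      simpa [hξ, mul_comm] using h2
    have hAz : Am z = mInt (-1) 0 μ (fun θ => Complex.exp (Complex.I * (ξ θ : ℂ))) := by
      rw [hfun]
    rw [hAz]
    refine lt_of_le_of_lt ?_ h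
    exact le_iSup (fun ξ' : {ξ : ℝ → ℝ // Measurable ξ} =>
      spectralRadius ℂ (mInt (-1) 0 μ (fun θ => Complex.exp (Complex.I * (ξ'.1 θ : ℂ))))) ⟨ξ, hξm⟩
  -- transfer to continuous linear maps
  haveI : Nonempty (Fin d) := ⟨⟨0, hd⟩⟩
  set Φ := Matrix.toEuclideanCLM (𝕜 := ℂ) (n := Fin d) with hΦ
  have hΦsmul : ∀ (c : ℂ) (M : Matrix (Fin d) (Fin d) ℂ), Φ (c • M) = c • Φ M :=
    fun c M => map_smul Φ c M
  let L1 : Matrix (Fin d) (Fin d) ℂ →ₗ[ℂ]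
      (EuclideanSpace ℂ (Fin d) →L[ℂ] EuclideanSpace ℂ (Fin d)) :=
    { toFun := Φ, map_add' := map_add Φ, map_smul' := fun c M => map_smul Φ c M }
  let L2 : (EuclideanSpace ℂ (Fin d) →L[ℂ] EuclideanSpace ℂ (Fin d)) →ₗ[ℂ]
      Matrix (Fin d) (Fin d) ℂ :=
    { toFun := Φ.symm, map_add' := map_add Φ.symm, map_smul' := fun c M => map_smul Φ.symm c M }
  have hL1c : Continuous L1 := L1.continuous_of_finiteDimensional
  obtain ⟨C2, hC2⟩ : ∃ C2 : ℝ, ∀ x, ‖L2 x‖ ≤ C2 * ‖x‖ := by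
    obtain ⟨C, -, hC⟩ := (LinearMap.toContinuousLinearMap L2).bound
    exact ⟨C, hC⟩
  set T : ℂ → (EuclideanSpace ℂ (Fin d) →L[ℂ] EuclideanSpace ℂ (Fin d)) :=
    fun z => Φ (Am z) with hT
  have hAmCont : ContinuousOn Am (Metric.closedBall (0:ℂ) 1) := by
    have h1 := (hmat 1).continuousOn
    rw [closure_ball (0:ℂ) one_ne_zero] at h1
    have : (fun z => (Am z)^1) = Am := by funext z; rw [pow_one]
    rwa [this] at h1
  have hTcont : ContinuousOn T (Metric.sphere (0:ℂ) 1) :=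
    hL1c.comp_continuousOn (hAmCont.mono Metric.sphere_subset_closedBall)
  have hTρ : ∀ z ∈ Metric.sphere (0:ℂ) 1, spectralRadius ℂ (T z) < 1 := by
    intro z hz
    have hspec : spectrum ℂ (T z) = spectrum ℂ (Am z) := AlgEquiv.spectrum_eq Φ (Am z)
    rw [spectralRadius, hspec, ← spectralRadius]
    exact hsph z hz
  obtain ⟨C, hC⟩ := uniform_power_bound (isCompact_sphere (0:ℂ) 1) hTcont hTρ
  -- bound on matrix powers on the sphere
  have hbdry : ∀ z ∈ Metric.sphere (0:ℂ) 1, ∀ n : ℕ, ‖(Am z)^n‖ ≤ (max C2 0) * (max C 0) := by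
    intro z hz n
    have h1 : (Am z)^n = Φ.symm ((T z)^n) := by
      rw [hT, ← map_pow, StarAlgEquiv.symm_apply_apply]
    calc ‖(Am z)^n‖ = ‖L2 ((T z)^n)‖ := by rw [h1]; rfl
    _ ≤ C2 * ‖(T z)^n‖ := hC2 _
    _ ≤ (max C2 0) * (max C 0) := by
        have hn := (hC z hz n)
        have hnn : (0:ℝ) ≤ ‖(T z)^n‖ := norm_nonneg _
        have := le_max_left C2 0
        nlinarith [le_max_left C 0, le_max_right C2 0, le_max_right C 0]
  -- maximum modulus
  have hmax : ∀ n : ℕ, ‖(Am 0)^n‖ ≤ (max C2 0) * (max C 0) := by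
    intro n
    refine Complex.norm_le_of_forall_mem_frontier_norm_le Metric.isBounded_ball (hmat n)
      (fun z hz => ?_) ?_
    · rw [frontier_ball (0:ℂ) one_ne_zero] at hz
      exact hbdry z hz n
    · rw [closure_ball (0:ℂ) one_ne_zero]
      exact Metric.mem_closedBall_self zero_le_one
  -- conclude
  have hfun0 : (fun θ => bl (η θ) (0:ℂ)) = η := funext fun θ => bl_zero
  have hAm0 : Am 0 = mInt (-1) 0 μ η := by
    show mInt (-1) 0 μ (fun θ => bl (η θ) (0:ℂ)) = mInt (-1) 0 μ η
    rw [hfun0]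
  rw [← hAm0, spectralRadius]
  refine iSup₂_le fun k hk => ?_
  rw [← ENNReal.coe_one, ENNReal.coe_le_coe]
  rw [← NNReal.coe_le_coe, coe_nnnorm, NNReal.coe_one]
  by_contra hgt
  push_neg at hgt
  -- k is an eigenvalue
  rw [spectrum.mem_iff] at hk
  have hdet : (algebraMap ℂ (Matrix (Fin d) (Fin d) ℂ) k - Am 0).det = 0 := by
    by_contra hne
    exact hk ((Matrix.isUnit_iff_isUnit_det _).mpr (isUnit_iff_ne_zero.mpr hne))
  obtain ⟨v, hv0, hv⟩ := (Matrix.exists_mulVec_eq_zero_iff).mpr hdet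
  have hAv : Matrix.mulVec (Am 0) v = k • v := by
    have h1 : Matrix.mulVec (algebraMap ℂ (Matrix (Fin d) (Fin d) ℂ) k - Am 0) v
        = k • v - Matrix.mulVec (Am 0) v := by
      rw [Matrix.sub_mulVec]
      congr 1
      rw [Algebra.algebraMap_eq_smul_one, Matrix.smul_mulVec, Matrix.one_mulVec]
    rw [h1] at hv
    exact (sub_eq_zero.mp hv).symm
  have hAnv : ∀ n : ℕ, Matrix.mulVec ((Am 0)^n) v = k^n • v := by
    intro n
    induction n with
    | zero => simp [Matrix.one_mulVec]
    | succ n ih =>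
      rw [pow_succ, ← Matrix.mulVec_mulVec, hAv, Matrix.mulVec_smul, ih, pow_succ,
        smul_smul, mul_comm]
  obtain ⟨i0, hi0⟩ : ∃ i, v i ≠ 0 := by
    by_contra hc
    push_neg at hc
    exact hv0 (funext hc)
  obtain ⟨i, -, hi⟩ := Finset.exists_max_image Finset.univ (fun i => ‖v i‖)
    ⟨i0, Finset.mem_univ i0⟩
  have hvi : 0 < ‖v i‖ :=
    lt_of_lt_of_le (norm_pos_iff.mpr hi0) (hi i0 (Finset.mem_univ i0))
  have hgrow : ∀ n : ℕ, (‖k‖)^n ≤ d * ((max C2 0) * (max C 0)) := by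
    intro n
    have h1 : (Matrix.mulVec ((Am 0)^n) v) i = k^n * v i := by rw [hAnv n]; simp [Pi.smul_apply, smul_eq_mul]
    have h2 : ‖k^n * v i‖ ≤ d * ((max C2 0) * (max C 0)) * ‖v i‖ := by
      rw [← h1]
      have h3 : (Matrix.mulVec ((Am 0)^n) v) i = ∑ j, ((Am 0)^n) i j * v j := rfl
      rw [h3]
      calc ‖∑ j, ((Am 0)^n) i j * v j‖
          ≤ ∑ j, ‖((Am 0)^n) i j * v j‖ := norm_sum_le _ _
      _ ≤ ∑ j : Fin d, ((max C2 0) * (max C 0)) * ‖v i‖ := by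
          refine Finset.sum_le_sum fun j _ => ?_
          rw [norm_mul]
          have hb1 : ‖((Am 0)^n) i j‖ ≤ (max C2 0) * (max C 0) :=
            le_trans (Matrix.norm_entry_le_entrywise_sup_norm ((Am 0)^n)) (hmax n)
          have hb2 : ‖v j‖ ≤ ‖v i‖ := hi j (Finset.mem_univ j)
          exact mul_le_mul hb1 hb2 (norm_nonneg _) (by positivity)
      _ = d * (((max C2 0) * (max C 0)) * ‖v i‖) := by
          rw [Finset.sum_const, Finset.card_univ, Fintype.card_fin, nsmul_eq_mul]
      _ = d * ((max C2 0) * (max C 0)) * ‖v i‖ := by ring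
    rw [norm_mul, norm_pow] at h2
    exact le_of_mul_le_mul_right h2 hvi
  obtain ⟨n, hn⟩ := pow_unbounded_of_one_lt (d * ((max C2 0) * (max C 0))) hgt
  exact absurd (hgrow n) (not_le.mpr hn)
end

section
/- Let $\mu$ be a matrix-valued Borel measure with finite total variation on $[-1,0]$. Then $\sup_{\xi \in \mathfrak{C}} \rho\left(\int_{-1}^0 e^{i\xi(\theta)}\, d\mu(\theta)\right) = \sup_{\eta \in \mathfrak{D}} \rho\left(\int_{-1}^0 \eta(\theta)\, d\mu(\theta)\right)$, where $\mathfrak{C}$ is the set of Borel-measurable functions $[-1,0] \to \mathbb{R}$ and $\mathfrak{D}$ is the set of Borel-measurable functions $[-1,0] \to \overline{B}_1(0)$. -/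
open MeasureTheory Set ENNReal NNReal Complex
open Polynomial Finset Metric

attribute [local instance] Matrix.normedAddCommGroup Matrix.normedSpace

lemma coeff_bound {q : ℂ[X]} {d : ℕ} (hd : q.natDegree ≤ d) {R M : ℝ} (hR : 0 < R)
    (h : ∀ w : ℂ, ‖w‖ = R → ‖q.eval w‖ ≤ M) {k : ℕ} (hk : k ≤ d) :
    ‖q.coeff k‖ * R ^ k ≤ M := by
  set N := d + 1 with hN
  set c : ℂ := Complex.exp (2 * Real.pi * Complex.I / N) with hc
  have hprim : IsPrimitiveRoot c N := Complex.isPrimitiveRoot_exp N (Nat.succ_ne_zero d)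
  have hc0 : c ≠ 0 := hprim.ne_zero (Nat.succ_ne_zero d)
  have hcabs : ‖c‖ = 1 := by
    rw [hc, Complex.norm_exp]
    norm_num [Complex.div_re, Complex.mul_I_re]
  have hcN : c ^ N = 1 := hprim.pow_eq_one
  have key : ∑ j ∈ Finset.range N, q.eval (R * c ^ j) * (c ^ (j * k))⁻¹
      = N * (q.coeff k * R ^ k) := by
    have hdeg : q.natDegree < N := Nat.lt_succ_of_le hd
    calc ∑ j ∈ Finset.range N, q.eval (R * c ^ j) * (c ^ (j * k))⁻¹
        = ∑ j ∈ Finset.range N, ∑ m ∈ Finset.range N,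
            q.coeff m * (R:ℂ) ^ m * ((c ^ m / c ^ k) ^ j) := by
          refine Finset.sum_congr rfl fun j _ => ?_
          rw [Polynomial.eval_eq_sum_range' hdeg, Finset.sum_mul]
          refine Finset.sum_congr rfl fun m _ => ?_
          rw [mul_pow, div_pow, ← pow_mul, ← pow_mul, ← pow_mul]
          rw [Nat.mul_comm j k, Nat.mul_comm j m]
          field_simp
      _ = ∑ m ∈ Finset.range N, q.coeff m * (R:ℂ) ^ m *
            (∑ j ∈ Finset.range N, (c ^ m / c ^ k) ^ j) := by
          rw [Finset.sum_comm]
          exact Finset.sum_congr rfl fun m _ => by rw [Finset.mul_sum]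
      _ = N * (q.coeff k * R ^ k) := by
          have hinner : ∀ m ∈ Finset.range N,
              (∑ j ∈ Finset.range N, (c ^ m / c ^ k) ^ j) = if m = k then (N:ℂ) else 0 := by
            intro m hm
            rcases eq_or_ne m k with rfl | hmk
            · rw [if_pos rfl, div_self (pow_ne_zero _ hc0)]; simp
            · rw [if_neg hmk]
              have ht1 : c ^ m / c ^ k ≠ 1 := by
                rw [Ne, div_eq_one_iff_eq (pow_ne_zero _ hc0)]
                exact fun hEq => hmk (hprim.pow_inj (Finset.mem_range.mp hm)
                  (Nat.lt_succ_of_le hk) hEq)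
              rw [geom_sum_eq ht1, div_pow, ← pow_mul, ← pow_mul,
                Nat.mul_comm m N, Nat.mul_comm k N, pow_mul, pow_mul, hcN, one_pow, one_pow]
              simp
          rw [Finset.sum_congr rfl (fun m hm => by rw [hinner m hm]),
            Finset.sum_eq_single k (fun m _ hmk => by rw [if_neg hmk, mul_zero])
              (fun hk' => absurd (Finset.mem_range.mpr (Nat.lt_succ_of_le hk)) hk')]
          rw [if_pos rfl]; ring
  have hb : ‖∑ j ∈ Finset.range N, q.eval (R * c ^ j) * (c ^ (j * k))⁻¹‖ ≤ N * M := by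
    refine le_trans (norm_sum_le _ _) ?_
    have hterm : ∀ j ∈ Finset.range N, ‖q.eval (R * c ^ j) * (c ^ (j * k))⁻¹‖ ≤ M := by
      intro j _
      rw [norm_mul, norm_inv, norm_pow, hcabs, one_pow, inv_one, mul_one]
      refine h _ ?_
      rw [norm_mul, norm_pow, hcabs, one_pow, mul_one, Complex.norm_real,
        Real.norm_eq_abs, abs_of_pos hR]
    refine le_trans (Finset.sum_le_sum hterm) ?_
    rw [Finset.sum_const, Finset.card_range, nsmul_eq_mul]
  have hNpos : (0:ℝ) < N := by positivity
  have h2 := key ▸ hb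
  rw [norm_mul, Complex.norm_natCast, norm_mul, norm_pow, Complex.norm_real,
    Real.norm_eq_abs, abs_of_pos hR] at h2
  exact (mul_le_mul_iff_right₀ hNpos).mp h2

lemma root_bound {q : ℂ[X]} {d : ℕ} (hd : 0 < d) (hq : q.Monic) (hdeg : q.natDegree = d)
    {R : ℝ} (hR : 0 < R) (hcf : ∀ k, k < d → ‖q.coeff k‖ * R ^ k ≤ (2*R) ^ d)
    {x : ℂ} (hx : q.IsRoot x) : ‖x‖ ≤ 2 ^ d * d * R := by
  have hK : (1:ℝ) ≤ 2 ^ d * d := by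
    have : (1:ℝ) ≤ 2 ^ d := one_le_pow₀ (by norm_num)
    have hd1 : (1:ℝ) ≤ d := by exact_mod_cast hd
    nlinarith
  rcases le_or_gt ‖x‖ R with hxR | hxR
  · calc ‖x‖ ≤ R := hxR
      _ = 1 * R := (one_mul R).symm
      _ ≤ 2 ^ d * d * R := by nlinarith
  · -- ‖x‖ > R
    have hu0 : (0:ℝ) < ‖x‖ := lt_trans hR hxR
    have heval : q.eval x = ∑ m ∈ Finset.range (d+1), q.coeff m * x ^ m :=
      Polynomial.eval_eq_sum_range' (by omega) x
    have hxd : x ^ d = -∑ m ∈ Finset.range d, q.coeff m * x ^ m := by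
      have h0 : (0:ℂ) = ∑ m ∈ Finset.range (d+1), q.coeff m * x ^ m := by
        rw [← heval]; exact hx.symm
      rw [Finset.sum_range_succ] at h0
      have hcd : q.coeff d = 1 := by rw [← hdeg]; exact hq.coeff_natDegree
      rw [hcd, one_mul] at h0
      linear_combination -h0
    set u : ℝ := ‖x‖ with hu
    have hterm : ∀ m ∈ Finset.range d, ‖q.coeff m * x ^ m‖ ≤ 2 ^ d * R * u ^ (d-1) := by
      intro m hm
      have hmd : m < d := Finset.mem_range.mp hm
      have hRm : (0:ℝ) < R ^ m := pow_pos hR m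
      rw [norm_mul, norm_pow]
      rw [← mul_le_mul_iff_left₀ hRm]
      have h1 : ‖q.coeff m‖ * u ^ m * R ^ m = (‖q.coeff m‖ * R ^ m) * u ^ m := by ring
      rw [h1]
      calc (‖q.coeff m‖ * R ^ m) * u ^ m ≤ (2*R) ^ d * u ^ m := by
            have hum : (0:ℝ) ≤ u ^ m := pow_nonneg (norm_nonneg x) m
            exact mul_le_mul_of_nonneg_right (hcf m hmd) hum
        _ = (2 ^ d * R ^ (m+1)) * (R ^ (d-1-m) * u ^ m) := by
            rw [mul_pow]
            have hre : R ^ (m+1) * R ^ (d-1-m) = R ^ d := by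
              rw [← pow_add]; congr 1; omega
            rw [← hre]; ring
        _ ≤ (2 ^ d * R ^ (m+1)) * (u ^ (d-1-m) * u ^ m) := by
            refine mul_le_mul_of_nonneg_left (mul_le_mul_of_nonneg_right
              (pow_le_pow_left₀ hR.le hxR.le _) (pow_nonneg (norm_nonneg x) m)) ?_
            positivity
        _ = 2 ^ d * R * u ^ (d-1) * R ^ m := by
            rw [← pow_add]
            have : d - 1 - m + m = d - 1 := by omega
            rw [this, pow_succ]
            ring
    have hsum : u ^ d ≤ d * (2 ^ d * R * u ^ (d-1)) := by
      have h2 : u ^ d = ‖x ^ d‖ := (norm_pow x d).symm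
      rw [h2, hxd, norm_neg]
      refine le_trans (norm_sum_le _ _) ?_
      refine le_trans (Finset.sum_le_sum hterm) ?_
      rw [Finset.sum_const, Finset.card_range, nsmul_eq_mul]
    have hud : u ^ d = u * u ^ (d-1) := by
      rw [← pow_succ']
      congr 1
      omega
    rw [hud] at hsum
    have hup : (0:ℝ) < u ^ (d-1) := pow_pos hu0 _
    have := (mul_le_mul_iff_left₀ hup).mp (by linarith [hsum] : u * u ^ (d-1) ≤ (↑d * (2 ^ d * R)) * u ^ (d-1))
    linarith

lemma dcc_mul {f g : ℂ → ℂ} {t : Set ℂ} (hf : DiffContOnCl ℂ f t) (hg : DiffContOnCl ℂ g t) :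
    DiffContOnCl ℂ (fun z => f z * g z) t :=
  ⟨hf.differentiableOn.mul hg.differentiableOn, hf.continuousOn.mul hg.continuousOn⟩

lemma dcc_sum {ι : Type*} (s : Finset ι) (f : ι → ℂ → ℂ) {t : Set ℂ}
    (h : ∀ i ∈ s, DiffContOnCl ℂ (f i) t) :
    DiffContOnCl ℂ (fun z => ∑ i ∈ s, f i z) t := by
  classical
  induction s using Finset.cons_induction with
  | empty => simpa using diffContOnCl_const
  | cons a s ha ih =>
    simp only [Finset.sum_cons]
    exact (h a (Finset.mem_cons_self a s)).add
      (ih fun i hi => h i (Finset.mem_cons_of_mem hi))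

lemma dcc_prod {ι : Type*} (s : Finset ι) (f : ι → ℂ → ℂ) {t : Set ℂ}
    (h : ∀ i ∈ s, DiffContOnCl ℂ (f i) t) :
    DiffContOnCl ℂ (fun z => ∏ i ∈ s, f i z) t := by
  classical
  induction s using Finset.cons_induction with
  | empty => simpa using diffContOnCl_const
  | cons a s ha ih =>
    simp only [Finset.prod_cons]
    exact dcc_mul (h a (Finset.mem_cons_self a s))
      (ih fun i hi => h i (Finset.mem_cons_of_mem hi))

lemma dcc_pow_entry {d : ℕ} {B : ℂ → Matrix (Fin d) (Fin d) ℂ} {t : Set ℂ}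
    (hB : ∀ i j, DiffContOnCl ℂ (fun z => B z i j) t) (n : ℕ) :
    ∀ i j, DiffContOnCl ℂ (fun z => (B z ^ n) i j) t := by
  induction n with
  | zero => intro i j; simpa using diffContOnCl_const
  | succ n ih =>
    intro i j
    have : (fun z => (B z ^ (n+1)) i j) = fun z => ∑ k, (B z ^ n) i k * B z k j := by
      funext z
      rw [pow_succ, Matrix.mul_apply]
    rw [this]
    exact dcc_sum _ _ fun k _ => dcc_mul (ih i k) (hB k j)

lemma dcc_det {d : ℕ} {B : ℂ → Matrix (Fin d) (Fin d) ℂ} {t : Set ℂ}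
    (hB : ∀ i j, DiffContOnCl ℂ (fun z => B z i j) t) :
    DiffContOnCl ℂ (fun z => (B z).det) t := by
  have : (fun z => (B z).det)
      = fun z => ∑ σ : Equiv.Perm (Fin d), (Equiv.Perm.sign σ : ℂ) * ∏ i, B z (σ i) i := by
    funext z
    rw [Matrix.det_apply]
    exact Finset.sum_congr rfl fun σ _ => by rw [Units.smul_def, zsmul_eq_mul]
  rw [this]
  exact dcc_sum _ _ fun σ _ => dcc_mul diffContOnCl_const (dcc_prod _ _ fun i _ => hB (σ i) i)

lemma evalCharpoly {d : ℕ} (M : Matrix (Fin d) (Fin d) ℂ) (w : ℂ) :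
    (M.charpoly).eval w = Matrix.det (w • (1 : Matrix (Fin d) (Fin d) ℂ) - M) := by
  rw [Matrix.charpoly, eval_det, Matrix.matPolyEquiv_charmatrix]
  simp only [Matrix.scalar, Matrix.smul_one_eq_diagonal]
  rw [Polynomial.eval_sub, Polynomial.eval_X, Polynomial.eval_C]
  rfl

lemma rootSpec {d : ℕ} {M : Matrix (Fin d) (Fin d) ℂ} {r : ℂ}
    (hr : (M.charpoly).IsRoot r) : r ∈ spectrum ℂ M := by
  rw [spectrum.mem_iff, Algebra.algebraMap_eq_smul_one]
  rw [Polynomial.IsRoot, evalCharpoly] at hr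
  intro hu
  rw [Matrix.isUnit_iff_isUnit_det, hr, isUnit_zero_iff] at hu
  exact one_ne_zero hu.symm

lemma specRoot {d : ℕ} {M : Matrix (Fin d) (Fin d) ℂ} {w : ℂ}
    (hw : w ∈ spectrum ℂ M) : (M.charpoly).IsRoot w := by
  rw [spectrum.mem_iff, Algebra.algebraMap_eq_smul_one] at hw
  rw [Polynomial.IsRoot, evalCharpoly]
  by_contra h
  exact hw ((Matrix.isUnit_iff_isUnit_det _).mpr (Ne.isUnit h))

lemma multiset_prod_le {s : Multiset ℝ} {B : ℝ} (hB : 0 ≤ B)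
    (h : ∀ y ∈ s, 0 ≤ y ∧ y ≤ B) : s.prod ≤ B ^ Multiset.card s := by
  induction s using Multiset.induction with
  | empty => simp
  | cons a s ih =>
    simp only [Multiset.prod_cons, Multiset.card_cons, pow_succ']
    have ha := h a (Multiset.mem_cons_self a s)
    have hs := ih (fun y hy => h y (Multiset.mem_cons_of_mem hy))
    have hsnn : (0:ℝ) ≤ s.prod :=
      Multiset.prod_nonneg fun y hy => (h y (Multiset.mem_cons_of_mem hy)).1
    exact mul_le_mul ha.2 hs hsnn hB

set_option maxHeartbeats 1000000 in
lemma charpoly_eval_bound {d : ℕ} (M : Matrix (Fin d) (Fin d) ℂ) {B : ℝ} (hB : 0 ≤ B)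
    (h : ∀ r ∈ spectrum ℂ M, ‖r‖ ≤ B) (w : ℂ) :
    ‖(M.charpoly).eval w‖ ≤ (‖w‖ + B) ^ d := by
  have hmonic := M.charpoly_monic
  have hsplits : (M.charpoly).Splits := IsAlgClosed.splits _
  have hcard : Multiset.card (M.charpoly).roots = d := by
    have h1 := hsplits.natDegree_eq_card_roots
    rw [← h1, Matrix.charpoly_natDegree_eq_dim, Fintype.card_fin]
  conv_lhs => rw [hsplits.eq_prod_roots_of_monic hmonic]
  rw [Polynomial.eval_multiset_prod]
  have habs : ‖(Multiset.map (eval w) (Multiset.map (fun a => X - C a) M.charpoly.roots)).prod‖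
      = ((Multiset.map (eval w) (Multiset.map (fun a => X - C a) M.charpoly.roots)).map norm).prod := by
    exact map_multiset_prod (normHom : ℂ →*₀ ℝ) _
  rw [habs]
  have hle : ∀ y ∈ (Multiset.map (eval w) (Multiset.map (fun a => X - C a) M.charpoly.roots)).map norm,
      0 ≤ y ∧ y ≤ ‖w‖ + B := by
    intro y hy
    rw [Multiset.mem_map] at hy
    obtain ⟨v, hv, rfl⟩ := hy
    rw [Multiset.mem_map] at hv
    obtain ⟨u, hu, rfl⟩ := hv
    rw [Multiset.mem_map] at hu
    obtain ⟨r, hr, rfl⟩ := hu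
    have hrs : r ∈ spectrum ℂ M := rootSpec (Polynomial.isRoot_of_mem_roots hr)
    rw [Polynomial.eval_sub, Polynomial.eval_X, Polynomial.eval_C]
    refine ⟨norm_nonneg _, ?_⟩
    calc ‖w - r‖ ≤ ‖w‖ + ‖r‖ := norm_sub_le w r
      _ ≤ ‖w‖ + B := by linarith [h r hrs]
  calc ((Multiset.map (eval w) (Multiset.map (fun a => X - C a) M.charpoly.roots)).map norm).prod
      ≤ (‖w‖ + B) ^ Multiset.card ((Multiset.map (eval w) (Multiset.map (fun a => X - C a) M.charpoly.roots)).map norm) :=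
        multiset_prod_le (by positivity) hle
    _ = (‖w‖ + B) ^ d := by simp [Multiset.card_map, hcard]
section MaxMod
lemma maxmod_spectrum {d : ℕ} {A : ℂ → Matrix (Fin d) (Fin d) ℂ}
    (hA : ∀ i j, DiffContOnCl ℂ (fun z => A z i j) (Metric.ball (0:ℂ) 1))
    {T : ℝ} (hT : 0 < T)
    (hb : ∀ z : ℂ, ‖z‖ = 1 → ∀ r ∈ spectrum ℂ (A z), ‖r‖ ≤ T)
    {lam : ℂ} (hlam : lam ∈ spectrum ℂ (A 0)) : ‖lam‖ ≤ T := by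
  rcases Nat.eq_zero_or_pos d with rfl | hd
  · haveI : Subsingleton (Matrix (Fin 0) (Fin 0) ℂ) :=
      ⟨fun a b => by ext i; exact i.elim0⟩
    rw [spectrum.mem_iff] at hlam
    exact absurd (isUnit_of_subsingleton _) hlam
  have key : ∀ n : ℕ, 0 < n → ‖lam‖ ^ n ≤ 2 ^ d * d * T ^ n := by
    intro n hn
    set q := ((A 0) ^ n).charpoly with hq
    have hmon : q.Monic := Matrix.charpoly_monic _
    have hqdeg : q.natDegree = d := by
      rw [hq, Matrix.charpoly_natDegree_eq_dim, Fintype.card_fin]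
    have hglobal : ∀ w : ℂ, ‖q.eval w‖ ≤ (‖w‖ + T ^ n) ^ d := by
      intro w
      have hfun : (fun z => (((A z) ^ n).charpoly).eval w)
          = fun z => (w • (1 : Matrix (Fin d) (Fin d) ℂ) - (A z) ^ n).det := by
        funext z; rw [evalCharpoly]
      have hdcc : DiffContOnCl ℂ (fun z => (((A z) ^ n).charpoly).eval w)
          (Metric.ball (0:ℂ) 1) := by
        rw [hfun]
        refine dcc_det fun i j => ?_
        have h2 : (fun z => (w • (1 : Matrix (Fin d) (Fin d) ℂ) - (A z) ^ n) i j)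
            = fun z => (w • (1 : Matrix (Fin d) (Fin d) ℂ)) i j - ((A z) ^ n) i j := by
          funext z; simp [Matrix.sub_apply]
        rw [h2]
        exact DiffContOnCl.const_sub (dcc_pow_entry hA n i j) _
      have hbdry : ∀ z ∈ frontier (Metric.ball (0:ℂ) 1),
          ‖(((A z) ^ n).charpoly).eval w‖ ≤ (‖w‖ + T ^ n) ^ d := by
        intro z hz
        rw [frontier_ball (0:ℂ) one_ne_zero, mem_sphere_zero_iff_norm] at hz
        refine charpoly_eval_bound _ (by positivity) (fun r hr => ?_) w
        rw [spectrum.map_pow_of_pos (A z) hn] at hr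
        obtain ⟨k, hk, rfl⟩ := hr
        rw [norm_pow]
        calc ‖k‖ ^ n ≤ T ^ n := pow_le_pow_left₀ (norm_nonneg k) (hb z hz k hk) n
          _ = T ^ n := rfl
      have h0 : (0:ℂ) ∈ closure (Metric.ball (0:ℂ) 1) :=
        subset_closure (mem_ball_self one_pos)
      have := Complex.norm_le_of_forall_mem_frontier_norm_le
        Metric.isBounded_ball hdcc hbdry h0
      simpa [hq] using this
    have hRpos : (0:ℝ) < T ^ n := by positivity
    have hcoef : ∀ k, k < d → ‖q.coeff k‖ * (T ^ n) ^ k ≤ (2 * T ^ n) ^ d := by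
      intro k hk
      refine coeff_bound (le_of_eq hqdeg) hRpos (fun w hw => ?_) (le_of_lt hk)
      calc ‖q.eval w‖ ≤ (‖w‖ + T ^ n) ^ d := hglobal w
        _ = (2 * T ^ n) ^ d := by rw [hw]; ring_nf
    have hroot : q.IsRoot (lam ^ n) :=
      specRoot (spectrum.pow_image_subset (A 0) n ⟨lam, hlam, rfl⟩)
    have hrb := root_bound hd hmon hqdeg hRpos hcoef hroot
    rw [norm_pow] at hrb
    exact hrb
  by_contra hgt
  push_neg at hgt
  have hratio : 1 < ‖lam‖ / T := (one_lt_div hT).mpr hgt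
  obtain ⟨n, hn⟩ := pow_unbounded_of_one_lt (2 ^ d * (d:ℝ)) hratio
  have hn0 : 0 < n := by
    rcases Nat.eq_zero_or_pos n with rfl | h
    · exfalso
      rw [pow_zero] at hn
      have : (1:ℝ) ≤ 2 ^ d * d := by
        have h1 : (1:ℝ) ≤ 2 ^ d := one_le_pow₀ (by norm_num)
        have h2 : (1:ℝ) ≤ d := by exact_mod_cast hd
        nlinarith
      linarith
    · exact h
  have hk := key n hn0
  have : (‖lam‖ / T) ^ n ≤ 2 ^ d * d := by
    rw [div_pow, div_le_iff₀ (by positivity)]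
    linarith
  linarith
end MaxMod


noncomputable def phiF (η : ℝ → ℂ) (z : ℂ) (θ : ℝ) : ℂ :=
  if ‖η θ‖ = 1 then η θ
  else Complex.exp ((η θ).arg * Complex.I) *
    ((z + (‖η θ‖ : ℂ)) / (1 + (‖η θ‖ : ℂ) * z))

noncomputable def phiF' (η : ℝ → ℂ) (z : ℂ) (θ : ℝ) : ℂ :=
  if ‖η θ‖ = 1 then 0
  else Complex.exp ((η θ).arg * Complex.I) *
    ((1 - ((‖η θ‖ : ℂ)) ^ 2) / (1 + (‖η θ‖ : ℂ) * z) ^ 2)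

lemma den_ne {r : ℝ} (hr0 : 0 ≤ r) {z : ℂ} (hrz : r * ‖z‖ < 1) :
    (1 : ℂ) + (r : ℂ) * z ≠ 0 := by
  intro h
  have h1 : (r : ℂ) * z = -1 := by linear_combination h
  have h2 : ‖(r : ℂ) * z‖ = 1 := by rw [h1]; simp
  rw [norm_mul, Complex.norm_real, Real.norm_eq_abs, _root_.abs_of_nonneg hr0] at h2
  linarith

lemma phiF_zero (η : ℝ → ℂ) (θ : ℝ) : phiF η 0 θ = η θ := by
  unfold phiF
  split_ifs with h
  · rfl
  · rw [mul_zero, add_zero, zero_add, div_one, mul_comm]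
    exact Complex.norm_mul_exp_arg_mul_I (η θ)

lemma phiF_meas {η : ℝ → ℂ} (hη : Measurable η) (z : ℂ) :
    Measurable (fun θ => phiF η z θ) := by
  unfold phiF
  have habs : Measurable (fun θ => ‖η θ‖) :=
    continuous_norm.measurable.comp hη
  refine Measurable.ite (habs (measurableSet_singleton 1)) hη ?_
  refine Measurable.mul ?_ ?_
  · exact Complex.measurable_exp.comp
      ((Complex.measurable_ofReal.comp (Complex.measurable_arg.comp hη)).mul measurable_const)
  · exact ((measurable_const.add (Complex.measurable_ofReal.comp habs)).div
      (measurable_const.add ((Complex.measurable_ofReal.comp habs).mul measurable_const)))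

lemma phiF'_meas {η : ℝ → ℂ} (hη : Measurable η) (z : ℂ) :
    Measurable (fun θ => phiF' η z θ) := by
  unfold phiF'
  have habs : Measurable (fun θ => ‖η θ‖) :=
    continuous_norm.measurable.comp hη
  refine Measurable.ite (habs (measurableSet_singleton 1)) measurable_const ?_
  refine Measurable.mul ?_ ?_
  · exact Complex.measurable_exp.comp
      ((Complex.measurable_ofReal.comp (Complex.measurable_arg.comp hη)).mul measurable_const)
  · exact ((measurable_const.sub ((Complex.measurable_ofReal.comp habs).pow measurable_const)).div
      ((measurable_const.add ((Complex.measurable_ofReal.comp habs).mul measurable_const)).pow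
        measurable_const))

lemma normSq_le {r : ℝ} (hr0 : 0 ≤ r) (hr1 : r ≤ 1) {z : ℂ} (hz : ‖z‖ ≤ 1) :
    ‖z + (r : ℂ)‖ ≤ ‖1 + (r : ℂ) * z‖ := by
  have hz2 : z.re ^ 2 + z.im ^ 2 ≤ 1 := by
    have h1 : Complex.normSq z ≤ 1 := by
      rw [← Complex.sq_norm]
      nlinarith [norm_nonneg z, hz]
    simpa [Complex.normSq_apply, sq] using h1
  rw [Complex.norm_def, Complex.norm_def]
  apply Real.sqrt_le_sqrt
  simp only [Complex.normSq_apply, Complex.add_re, Complex.add_im, Complex.mul_re,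
    Complex.mul_im, Complex.ofReal_re, Complex.ofReal_im, Complex.one_re, Complex.one_im]
  have key : (0:ℝ) ≤ (1 - r^2) * (1 - (z.re^2 + z.im^2)) :=
    mul_nonneg (by nlinarith) (by linarith)
  nlinarith [key]

lemma normSq_eq {r : ℝ} {z : ℂ} (hz : ‖z‖ = 1) :
    ‖z + (r : ℂ)‖ = ‖1 + (r : ℂ) * z‖ := by
  have hz2 : z.re ^ 2 + z.im ^ 2 = 1 := by
    have h1 : Complex.normSq z = 1 := by
      rw [← Complex.sq_norm, hz]; norm_num
    simpa [Complex.normSq_apply, sq] using h1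
  rw [Complex.norm_def, Complex.norm_def]
  congr 1
  simp only [Complex.normSq_apply, Complex.add_re, Complex.add_im, Complex.mul_re,
    Complex.mul_im, Complex.ofReal_re, Complex.ofReal_im, Complex.one_re, Complex.one_im]
  linear_combination (1 - r^2) * hz2

lemma phiF_norm_le {η : ℝ → ℂ} (hη1 : ∀ θ, ‖η θ‖ ≤ 1) {z : ℂ}
    (hz : ‖z‖ ≤ 1) (θ : ℝ) : ‖phiF η z θ‖ ≤ 1 := by
  unfold phiF
  split_ifs with h
  · exact hη1 θ
  · set r : ℝ := ‖η θ‖ with hr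
    have hr0 : 0 ≤ r := norm_nonneg _
    have hr1 : r < 1 := lt_of_le_of_ne (hη1 θ) h
    have hden : (1 : ℂ) + (r : ℂ) * z ≠ 0 :=
      den_ne hr0 (by nlinarith [norm_nonneg z])
    rw [norm_mul, Complex.norm_exp_ofReal_mul_I, one_mul,
      norm_div]
    exact div_le_one_of_le₀ (normSq_le hr0 hr1.le hz) (norm_nonneg _)

lemma phiF_norm_eq {η : ℝ → ℂ} (hη1 : ∀ θ, ‖η θ‖ ≤ 1) {z : ℂ}
    (hz : ‖z‖ = 1) (θ : ℝ) : ‖phiF η z θ‖ = 1 := by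
  unfold phiF
  split_ifs with h
  · exact h
  · set r : ℝ := ‖η θ‖ with hr
    have hr0 : 0 ≤ r := norm_nonneg _
    have hr1 : r < 1 := lt_of_le_of_ne (hη1 θ) h
    have hden : (1 : ℂ) + (r : ℂ) * z ≠ 0 :=
      den_ne hr0 (by nlinarith)
    rw [norm_mul, Complex.norm_exp_ofReal_mul_I, one_mul, norm_div]
    rw [div_eq_one_iff_eq (norm_ne_zero_iff.mpr hden)]
    have := normSq_eq (r := r) hz
    exact this

lemma phiF_contAt {η : ℝ → ℂ} (hη1 : ∀ θ, ‖η θ‖ ≤ 1) {z₀ : ℂ}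
    (hz : ‖z₀‖ ≤ 1) (θ : ℝ) : ContinuousAt (fun z => phiF η z θ) z₀ := by
  unfold phiF
  split_ifs with h
  · exact continuousAt_const
  · set r : ℝ := ‖η θ‖ with hr
    have hr0 : 0 ≤ r := norm_nonneg _
    have hr1 : r < 1 := lt_of_le_of_ne (hη1 θ) h
    have hden : (1 : ℂ) + (r : ℂ) * z₀ ≠ 0 :=
      den_ne hr0 (by nlinarith [norm_nonneg z₀])
    exact continuousAt_const.mul
      (((continuousAt_id.add continuousAt_const)).div
        (continuousAt_const.add (continuousAt_const.mul continuousAt_id)) hden)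

lemma phiF_hasDeriv {η : ℝ → ℂ} (hη1 : ∀ θ, ‖η θ‖ ≤ 1) {z : ℂ}
    (hz : ‖z‖ < 1) (θ : ℝ) : HasDerivAt (fun y => phiF η y θ) (phiF' η z θ) z := by
  unfold phiF phiF'
  split_ifs with h
  · exact hasDerivAt_const z _
  · set r : ℝ := ‖η θ‖ with hr
    have hr0 : 0 ≤ r := norm_nonneg _
    have hr1 : r ≤ 1 := hη1 θ
    have hden : (1 : ℂ) + (r : ℂ) * z ≠ 0 :=
      den_ne hr0 (by nlinarith [norm_nonneg z])
    have h1 : HasDerivAt (fun y : ℂ => y + (r:ℂ)) 1 z := (hasDerivAt_id z).add_const _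
    have h2 : HasDerivAt (fun y : ℂ => (1:ℂ) + (r:ℂ) * y) (r:ℂ) z := by
      simpa using ((hasDerivAt_id z).const_mul (r:ℂ)).const_add (1:ℂ)
    have h3 := (h1.div h2 hden).const_mul (Complex.exp ((η θ).arg * Complex.I))
    refine h3.congr_deriv ?_
    ring

lemma phiF'_norm_le {η : ℝ → ℂ} (hη1 : ∀ θ, ‖η θ‖ ≤ 1) {c : ℝ} (hc : c < 1)
    {z : ℂ} (hz : ‖z‖ ≤ c) (θ : ℝ) : ‖phiF' η z θ‖ ≤ 1 / (1 - c) ^ 2 := by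
  have hc0 : 0 ≤ c := le_trans (norm_nonneg z) hz
  unfold phiF'
  split_ifs with h
  · rw [norm_zero]
    exact div_nonneg zero_le_one (sq_nonneg _)
  · set r : ℝ := ‖η θ‖ with hr
    have hr0 : 0 ≤ r := norm_nonneg _
    have hr1 : r ≤ 1 := hη1 θ
    have hden : 1 - c ≤ ‖(1:ℂ) + (r:ℂ) * z‖ := by
      have h1 : ‖(r:ℂ) * z‖ ≤ c := by
        rw [norm_mul, Complex.norm_real, Real.norm_eq_abs, _root_.abs_of_nonneg hr0]
        nlinarith [norm_nonneg z]
      have h2 : (1:ℝ) ≤ ‖(1:ℂ) + (r:ℂ) * z‖ + ‖(r:ℂ) * z‖ := by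
        calc (1:ℝ) = ‖((1:ℂ) + (r:ℂ) * z) - (r:ℂ) * z‖ := by norm_num
          _ ≤ ‖(1:ℂ) + (r:ℂ) * z‖ + ‖(r:ℂ) * z‖ := norm_sub_le _ _
      linarith
    rw [norm_mul, Complex.norm_exp_ofReal_mul_I, one_mul,
      norm_div, norm_pow]
    have hnum : ‖1 - ((r:ℝ):ℂ) ^ 2‖ ≤ 1 := by
      have : ((1:ℂ) - ((r:ℝ):ℂ)^2) = (((1 - r^2 : ℝ)):ℂ) := by push_cast; ring
      rw [this, Complex.norm_real, Real.norm_eq_abs, _root_.abs_of_nonneg (by nlinarith)]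
      nlinarith
    have hdenpos : (0:ℝ) < (1 - c) ^ 2 := pow_pos (by linarith) 2
    have hden2 : (1 - c) ^ 2 ≤ ‖(1:ℂ) + (r:ℂ) * z‖ ^ 2 := by
      have h0 : (0:ℝ) ≤ 1 - c := by linarith
      nlinarith [hden]
    exact div_le_div₀ zero_le_one hnum hdenpos hden2

lemma integrable_phiF {η : ℝ → ℂ} (hη : Measurable η) (hη1 : ∀ θ, ‖η θ‖ ≤ 1)
    (ν : Measure ℝ) [IsFiniteMeasure ν] {z : ℂ} (hz : ‖z‖ ≤ 1) :
    Integrable (fun θ => phiF η z θ) ν := by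
  refine Integrable.mono' (integrable_const 1) (phiF_meas hη z).aestronglyMeasurable ?_
  exact Filter.Eventually.of_forall fun θ => phiF_norm_le hη1 hz θ

lemma integral_dcc {η : ℝ → ℂ} (hη : Measurable η) (hη1 : ∀ θ, ‖η θ‖ ≤ 1)
    (ν : Measure ℝ) [IsFiniteMeasure ν] :
    DiffContOnCl ℂ (fun z => ∫ θ, phiF η z θ ∂ν) (ball (0:ℂ) 1) := by
  constructor
  · -- DifferentiableOn
    intro z₀ hz₀
    rw [mem_ball, dist_zero_right] at hz₀
    set ε := (1 - ‖z₀‖) / 2 with hε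
    have hεpos : 0 < ε := by rw [hε]; linarith
    set c := ‖z₀‖ + ε with hc
    have hc1 : c < 1 := by rw [hc, hε]; linarith
    have key := hasDerivAt_integral_of_dominated_loc_of_deriv_le (μ := ν)
      (F := fun z θ => phiF η z θ) (F' := fun z θ => phiF' η z θ)
      (bound := fun _ => 1 / (1 - c) ^ 2) (ball_mem_nhds z₀ hεpos)
      (Filter.Eventually.of_forall fun z => (phiF_meas hη z).aestronglyMeasurable)
      (integrable_phiF hη hη1 ν hz₀.le)
      (phiF'_meas hη z₀).aestronglyMeasurable
      (Filter.Eventually.of_forall fun θ => ?_)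
      (integrable_const _)
      (Filter.Eventually.of_forall fun θ => ?_)
    · exact key.2.differentiableAt.differentiableWithinAt
    · intro z hzb
      rw [mem_ball] at hzb
      have : ‖z‖ ≤ c := by
        have := norm_sub_norm_le z z₀
        rw [← dist_eq_norm] at this
        rw [hc]; linarith
      exact phiF'_norm_le hη1 hc1 this θ
    · intro z hzb
      rw [mem_ball] at hzb
      have : ‖z‖ < 1 := by
        have := norm_sub_norm_le z z₀
        rw [← dist_eq_norm] at this
        linarith [hc1, hc ▸ (by linarith : ‖z‖ ≤ c)]
      exact phiF_hasDeriv hη1 this θ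
  · -- ContinuousOn closure
    rw [closure_ball (0:ℂ) one_ne_zero]
    intro z₀ hz₀
    rw [mem_closedBall, dist_zero_right] at hz₀
    have := tendsto_integral_filter_of_dominated_convergence (μ := ν)
      (F := fun (z : ℂ) θ => phiF η z θ) (f := fun θ => phiF η z₀ θ)
      (l := nhdsWithin z₀ (closedBall (0:ℂ) 1)) (bound := fun _ => 1)
      (Filter.Eventually.of_forall fun z => (phiF_meas hη z).aestronglyMeasurable)
      ?_ (integrable_const 1)
      (Filter.Eventually.of_forall fun θ =>
        ((phiF_contAt hη1 hz₀ θ).tendsto).mono_left nhdsWithin_le_nhds)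
    · exact this
    · refine Filter.eventually_iff_exists_mem.mpr ⟨closedBall (0:ℂ) 1, self_mem_nhdsWithin, ?_⟩
      intro z hzb
      rw [mem_closedBall, dist_zero_right] at hzb
      exact Filter.Eventually.of_forall fun θ => phiF_norm_le hη1 hzb θ

theorem stmt11 (d : ℕ) (μ : Fin d → Fin d → SignedMeasure ℝ)
    (hfin : measVar μ (-1) 0 ≠ ⊤) :
    rhoHS μ =
      ⨆ η : {η : ℝ → ℂ // Measurable η ∧ ∀ θ, ‖η θ‖ ≤ 1},
        spectralRadius ℂ (mInt (-1) 0 μ η.1) := by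
  apply le_antisymm
  · -- easy direction
    refine iSup_le fun ξ => ?_
    have hm : Measurable (fun θ => Complex.exp (Complex.I * (ξ.1 θ : ℂ))) :=
      Complex.measurable_exp.comp ((Complex.measurable_ofReal.comp ξ.2).const_mul Complex.I)
    have hb : ∀ θ, ‖Complex.exp (Complex.I * (ξ.1 θ : ℂ))‖ ≤ 1 := by
      intro θ
      rw [mul_comm, Complex.norm_exp_ofReal_mul_I]
    exact le_iSup (fun η : {η : ℝ → ℂ // Measurable η ∧ ∀ θ, ‖η θ‖ ≤ 1} =>
      spectralRadius ℂ (mInt (-1) 0 μ η.1)) ⟨fun θ => Complex.exp (Complex.I * (ξ.1 θ : ℂ)), hm, hb⟩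
  · -- hard direction
    refine iSup_le fun η => ?_
    rcases eq_or_ne (rhoHS μ) ⊤ with htop | htop
    · rw [htop]; exact le_top
    set S : ℝ≥0 := (rhoHS μ).toNNReal with hSdef
    have hS : rhoHS μ = (S : ℝ≥0∞) := (ENNReal.coe_toNNReal htop).symm
    obtain ⟨hηm, hη1⟩ := η.2
    set A : ℂ → Matrix (Fin d) (Fin d) ℂ := fun z => mInt (-1) 0 μ (phiF η.1 z) with hA
    have hA0 : A 0 = mInt (-1) 0 μ η.1 := by
      rw [hA]
      exact congrArg _ (funext fun θ => phiF_zero η.1 θ)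
    -- entries are DiffContOnCl
    have hAdcc : ∀ i j, DiffContOnCl ℂ (fun z => A z i j) (Metric.ball (0:ℂ) 1) := by
      intro i j
      have h1 : (fun z => A z i j)
          = fun z => (∫ θ in Set.Icc (-1:ℝ) 0, phiF η.1 z θ
              ∂(μ i j).toJordanDecomposition.posPart) -
            (∫ θ in Set.Icc (-1:ℝ) 0, phiF η.1 z θ
              ∂(μ i j).toJordanDecomposition.negPart) := rfl
      rw [h1]
      exact (integral_dcc hηm hη1 ((μ i j).toJordanDecomposition.posPart.restrict
        (Set.Icc (-1) 0))).sub (integral_dcc hηm hη1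
        ((μ i j).toJordanDecomposition.negPart.restrict (Set.Icc (-1) 0)))
    -- boundary spectral bound
    have hbdry : ∀ z : ℂ, ‖z‖ = 1 → ∀ r ∈ spectrum ℂ (A z), ‖r‖ ≤ (S : ℝ) := by
      intro z hz r hr
      have hAz : A z = mInt (-1) 0 μ
          (fun θ => Complex.exp (Complex.I * ((phiF η.1 z θ).arg : ℂ))) := by
        rw [hA]
        refine congrArg _ (funext fun θ => ?_)
        have h1 : ‖phiF η.1 z θ‖ = 1 := phiF_norm_eq hη1 hz θ
        have h2 := Complex.norm_mul_exp_arg_mul_I (phiF η.1 z θ)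
        rw [h1, Complex.ofReal_one, one_mul] at h2
        rw [mul_comm]
        exact h2.symm
      have hmz : Measurable (fun θ => (phiF η.1 z θ).arg) :=
        Complex.measurable_arg.comp (phiF_meas hηm z)
      have hsr : spectralRadius ℂ (A z) ≤ rhoHS μ := by
        rw [hAz]
        exact le_iSup (fun ξ : {ξ : ℝ → ℝ // Measurable ξ} =>
          spectralRadius ℂ (mInt (-1) 0 μ (fun θ => Complex.exp (Complex.I * (ξ.1 θ : ℂ)))))
          ⟨fun θ => (phiF η.1 z θ).arg, hmz⟩
      have hrS : (‖r‖₊ : ℝ≥0∞) ≤ (S : ℝ≥0∞) := by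
        refine le_trans ?_ (hS ▸ hsr)
        exact le_iSup₂ (f := fun k (_ : k ∈ spectrum ℂ (A z)) => (‖k‖₊ : ℝ≥0∞)) r hr
      have := ENNReal.coe_le_coe.mp hrS
      exact_mod_cast this
    -- bound each spectrum element of A 0
    have hkey : ∀ lam ∈ spectrum ℂ (mInt (-1) 0 μ η.1), ‖lam‖ ≤ (S : ℝ) := by
      intro lam hlam
      rw [← hA0] at hlam
      refine le_of_forall_pos_le_add fun ε hε => ?_
      have hT : (0:ℝ) < (S : ℝ) + ε := by positivity
      refine maxmod_spectrum hAdcc hT (fun z hz r hr => ?_) hlam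
      exact le_trans (hbdry z hz r hr) (by linarith)
    rw [hS]
    have : spectralRadius ℂ (mInt (-1) 0 μ η.1)
        = ⨆ k ∈ spectrum ℂ (mInt (-1) 0 μ η.1), (‖k‖₊ : ℝ≥0∞) := rfl
    rw [this]
    refine iSup₂_le fun lam hlam => ?_
    rw [ENNReal.coe_le_coe]
    have := hkey lam hlam
    rw [← NNReal.coe_le_coe]
    rw [coe_nnnorm]
    exact this
end

section
/- Let $\mu$ be a matrix-valued Borel measure with finite total variation on $[-1,0]$. Then the supremum $\sup_{\eta \in \mathfrak{D}} \rho\left(\int_{-1}^0 \eta(\theta)\, d\mu(\theta)\right)$ is attained: there exists a Borel-measurable $\eta_* \colon [-1,0] \to \overline{B}_1(0)$ with $\rho\left(\int_{-1}^0 \eta_*(\theta)\, d\mu(\theta)\right) = \sup_{\eta \in \mathfrak{D}} \rho\left(\int_{-1}^0 \eta(\theta)\, d\mu(\theta)\right)$. -/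
open MeasureTheory Set ENNReal NNReal Complex

attribute [local instance] Matrix.normedAddCommGroup Matrix.normedSpace

section AuxProofs

open Filter Topology

attribute [local instance] Matrix.linftyOpNormedRing Matrix.linftyOpNormedAlgebra

lemma gelfand_inf {d : ℕ} [Nonempty (Fin d)] (A : Matrix (Fin d) (Fin d) ℂ) :
    spectralRadius ℂ A = ⨅ n : ℕ, (‖A ^ (n + 1)‖₊ : ℝ≥0∞) ^ (1 / ((n : ℝ) + 1)) := by
  apply le_antisymm
  · refine le_iInf fun n => ?_
    have h := @spectrum.spectralRadius_le_pow_nnnorm_pow_one_div ℂ _ _ _ _ (by letI : NormedAddCommGroup (Matrix (Fin d) (Fin d) ℂ) := Matrix.linftyOpNormedAddCommGroup; letI : NormedSpace ℂ (Matrix (Fin d) (Fin d) ℂ) := Matrix.linftyOpNormedSpace; exact FiniteDimensional.complete ℂ _) A n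
    simpa [nnnorm_one] using h
  · have h := @spectrum.pow_nnnorm_pow_one_div_tendsto_nhds_spectralRadius _ _ _ (by letI : NormedAddCommGroup (Matrix (Fin d) (Fin d) ℂ) := Matrix.linftyOpNormedAddCommGroup; letI : NormedSpace ℂ (Matrix (Fin d) (Fin d) ℂ) := Matrix.linftyOpNormedSpace; exact FiniteDimensional.complete ℂ _) A
    refine ge_of_tendsto h ?_
    filter_upwards [eventually_ge_atTop 1] with n hn
    obtain ⟨m, rfl⟩ := Nat.exists_eq_add_of_le hn
    have := iInf_le (fun n : ℕ => (‖A ^ (n + 1)‖₊ : ℝ≥0∞) ^ (1 / ((n : ℝ) + 1))) m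
    refine le_trans this ?_
    have h1 : m + 1 = 1 + m := by omega
    rw [h1]
    have h2 : (1 / ((m : ℝ) + 1)) = (1 / ((1 + m : ℕ) : ℝ)) := by push_cast; ring_nf
    rw [h2]

lemma exists_max_specRad {X : Type*} [TopologicalSpace X] {d : ℕ} (hd : 0 < d)
    {K : Set X} (hK : IsCompact K) (hKc : IsClosed K) (hne : K.Nonempty)
    {g : X → Matrix (Fin d) (Fin d) ℂ} (hg : ∀ i j, Continuous fun x => g x i j) :
    ∃ x ∈ K, ∀ y ∈ K, spectralRadius ℂ (g y) ≤ spectralRadius ℂ (g x) := by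
  haveI : Nonempty (Fin d) := ⟨⟨0, hd⟩⟩
  have hgc : Continuous g := continuous_pi fun i => continuous_pi fun j => hg i j
  set F : X → ℝ≥0∞ := fun x => spectralRadius ℂ (g x) with hF
  have hFeq : ∀ x, F x = ⨅ n : ℕ, (‖(g x) ^ (n + 1)‖₊ : ℝ≥0∞) ^ (1 / ((n : ℝ) + 1)) :=
    fun x => gelfand_inf _
  have hcont : ∀ n : ℕ, Continuous fun x => (‖(g x) ^ (n + 1)‖₊ : ℝ≥0∞) ^ (1 / ((n : ℝ) + 1)) := by
    intro n
    exact ENNReal.continuous_rpow_const.comp (ENNReal.continuous_coe.comp (hgc.pow (n + 1)).nnnorm)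
  obtain ⟨x0, hx0⟩ := hne
  set s : ℝ≥0∞ := ⨆ y ∈ K, F y with hs
  by_cases hs0 : s = 0
  · refine ⟨x0, hx0, fun y hy => ?_⟩
    have : F y ≤ s := le_biSup F hy
    simp only [hs0, le_zero_iff] at this
    simp [hF] at this ⊢
    exact this ▸ zero_le
  · haveI hne' : Nonempty (Iio s) := ⟨⟨0, pos_iff_ne_zero.mpr hs0⟩⟩
    set Z : Iio s → Set X := fun t =>
      K ∩ ⋂ n : ℕ, {x | (t : ℝ≥0∞) ≤ (‖(g x) ^ (n + 1)‖₊ : ℝ≥0∞) ^ (1 / ((n : ℝ) + 1))} with hZ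
    have hZmem : ∀ (t : Iio s) (x : X), x ∈ Z t ↔ x ∈ K ∧ (t : ℝ≥0∞) ≤ F x := by
      intro t x
      simp only [hZ, Set.mem_inter_iff, Set.mem_iInter, Set.mem_setOf_eq, hFeq x, le_iInf_iff]
    have hZclosed : ∀ t : Iio s, IsClosed (Z t) :=
      fun t => hKc.inter (isClosed_iInter fun n => isClosed_le continuous_const (hcont n))
    have hZcompact : ∀ t : Iio s, IsCompact (Z t) :=
      fun t => hK.of_isClosed_subset (hZclosed t) (Set.inter_subset_left)
    have hZnonempty : ∀ t : Iio s, (Z t).Nonempty := by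
      intro ⟨t, ht⟩
      have ht2 : t < s := ht
      rw [hs, lt_iSup_iff] at ht2
      obtain ⟨y, hy⟩ := ht2
      rw [lt_iSup_iff] at hy
      obtain ⟨hyK, hty⟩ := hy
      exact ⟨y, (hZmem _ y).mpr ⟨hyK, hty.le⟩⟩
    have hZdir : Directed (· ⊇ ·) Z := by
      intro t1 t2
      refine ⟨⟨max t1.1 t2.1, mem_Iio.mpr (max_lt (mem_Iio.mp t1.2) (mem_Iio.mp t2.2))⟩, ?_, ?_⟩ <;>
        · intro x hx
          rw [hZmem] at hx ⊢
          exact ⟨hx.1, le_trans (by simp) hx.2⟩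
    obtain ⟨x, hx⟩ := IsCompact.nonempty_iInter_of_directed_nonempty_isCompact_isClosed
      Z hZdir hZnonempty hZcompact hZclosed
    rw [Set.mem_iInter] at hx
    have hxK : x ∈ K := ((hZmem ⟨0, pos_iff_ne_zero.mpr hs0⟩ x).mp (hx _)).1
    refine ⟨x, hxK, fun y hy => ?_⟩
    have h1 : F y ≤ s := le_biSup F hy
    have h2 : s ≤ F x := by
      refine le_of_forall_lt_imp_le_of_dense fun t ht => ?_
      exact ((hZmem ⟨t, mem_Iio.mpr ht⟩ x).mp (hx _)).2
    exact h1.trans h2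

end AuxProofs

lemma ae_abs_le_one_of_setIntegral {ν : Measure ℝ} [IsFiniteMeasure ν] {h : ℝ → ℂ}
    (hm : Measurable h) (hint : Integrable h ν)
    (hb : ∀ E : Set ℝ, MeasurableSet E → ‖∫ θ in E, h θ ∂ν‖ ≤ (ν E).toReal) :
    ∀ᵐ θ ∂ν, ‖h θ‖ ≤ 1 := by
  have key : ∀ (q : ℚ) (n : ℕ),
      ν {θ | 1 + 1 / ((n : ℝ) + 1) ≤ (Complex.exp (Complex.I * (q : ℝ)) * h θ).re} = 0 := by
    intro q n
    set c : ℂ := Complex.exp (Complex.I * (q : ℝ)) with hc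
    have hcabs : ‖c‖ = 1 := by
      rw [hc, Complex.norm_exp]
      simp [Complex.mul_re]
    set E := {θ | 1 + 1 / ((n : ℝ) + 1) ≤ (c * h θ).re} with hE
    have hEm : MeasurableSet E :=
      measurableSet_le measurable_const (Complex.measurable_re.comp (measurable_const.mul hm))
    have hintE : IntegrableOn (fun θ => (c * h θ).re) E ν :=
      ((hint.const_mul c).re).integrableOn
    have h1 : (1 + 1 / ((n : ℝ) + 1)) * (ν E).toReal ≤ ∫ θ in E, (c * h θ).re ∂ν :=
      by have := setIntegral_ge_of_const_le_real hEm (measure_ne_top ν E) (fun x hx => hx) hintE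
         rwa [measureReal_def] at this
    have h2 : ∫ θ in E, (c * h θ).re ∂ν = (c * ∫ θ in E, h θ ∂ν).re := by
      have h2' := integral_re (μ := ν.restrict E) (hint.integrableOn.const_mul c)
      simp only [RCLike.re_to_complex] at h2'
      rw [h2']
      congr 1
      exact integral_const_mul c (fun θ => h θ)
    have h3 : (c * ∫ θ in E, h θ ∂ν).re ≤ (ν E).toReal := by
      refine le_trans (Complex.re_le_norm _) ?_
      rw [norm_mul, hcabs, one_mul]
      exact hb E hEm
    have h4 : (0:ℝ) ≤ (ν E).toReal := ENNReal.toReal_nonneg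
    have h5 : (0:ℝ) < 1 / ((n : ℝ) + 1) := by positivity
    have h6 : (ν E).toReal = 0 := by nlinarith [h1, h2 ▸ h3]
    exact (ENNReal.toReal_eq_zero_iff _).mp h6 |>.resolve_right (measure_ne_top ν E)
  rw [ae_iff]
  have cover : {θ | ¬ ‖h θ‖ ≤ 1} ⊆
      ⋃ (q : ℚ) (n : ℕ),
        {θ | 1 + 1 / ((n : ℝ) + 1) ≤ (Complex.exp (Complex.I * (q : ℝ)) * h θ).re} := by
    intro θ hθ
    simp only [Set.mem_setOf_eq, not_le] at hθ
    set z := h θ with hz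
    obtain ⟨n, hn⟩ := exists_nat_one_div_lt (show (0:ℝ) < (‖z‖ - 1) / 2 by linarith)
    have hgcont : Continuous fun t : ℝ => (Complex.exp (Complex.I * t) * z).re := by
      fun_prop
    set w := Complex.exp ((z.arg : ℂ) * Complex.I) with hwdef
    have hwne : w ≠ 0 := Complex.exp_ne_zero _
    have hw : (‖z‖ : ℂ) * w = z := Complex.norm_mul_exp_arg_mul_I z
    have hexp : Complex.exp (Complex.I * ((-z.arg : ℝ) : ℂ)) = w⁻¹ := by
      rw [hwdef, ← Complex.exp_neg]; congr 1; push_cast; ring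
    have hval : (Complex.exp (Complex.I * ((-z.arg : ℝ) : ℂ)) * z).re = ‖z‖ := by
      rw [hexp]
      conv_lhs => rw [← hw]
      rw [show w⁻¹ * ((‖z‖ : ℂ) * w) = (‖z‖ : ℂ) * (w⁻¹ * w) by ring,
        inv_mul_cancel₀ hwne, mul_one, Complex.ofReal_re]
    set U : Set ℝ := {t | (1 + ‖z‖) / 2 < (Complex.exp (Complex.I * t) * z).re} with hU
    have hUopen : IsOpen U := isOpen_lt continuous_const hgcont
    have hUmem : (-z.arg) ∈ U := by
      simp only [hU, Set.mem_setOf_eq, hval]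
      linarith
    obtain ⟨q, hq⟩ := Rat.denseRange_cast.exists_mem_open hUopen ⟨_, hUmem⟩
    refine Set.mem_iUnion.mpr ⟨q, Set.mem_iUnion.mpr ⟨n, ?_⟩⟩
    simp only [Set.mem_setOf_eq]
    have h7 : (1:ℝ) + 1 / ((n:ℝ) + 1) ≤ (1 + ‖z‖) / 2 := by linarith
    exact le_trans h7 (le_of_lt hq)
  refine measure_mono_null cover ?_
  exact measure_iUnion_null fun q => measure_iUnion_null fun n => key q n


set_option maxHeartbeats 1000000 in
theorem stmt12 (d : ℕ) (μ : Fin d → Fin d → SignedMeasure ℝ)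
    (hfin : measVar μ (-1) 0 ≠ ⊤) :
    ∃ ηstar : ℝ → ℂ, Measurable ηstar ∧ (∀ θ, ‖ηstar θ‖ ≤ 1) ∧
      spectralRadius ℂ (mInt (-1) 0 μ ηstar) =
        ⨆ η : {η : ℝ → ℂ // Measurable η ∧ ∀ θ, ‖η θ‖ ≤ 1},
          spectralRadius ℂ (mInt (-1) 0 μ η.1) := by
  classical
  rcases Nat.eq_zero_or_pos d with hd0 | hd
  · subst hd0
    refine ⟨fun _ => 0, measurable_const, by simp, le_antisymm ?_ ?_⟩
    · exact le_iSup (fun η : {η : ℝ → ℂ // Measurable η ∧ ∀ θ, ‖η θ‖ ≤ 1} =>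
        spectralRadius ℂ (mInt (-1) 0 μ η.1)) ⟨fun _ => 0, measurable_const, by simp⟩
    · refine iSup_le fun η => ?_
      have hEq : mInt (-1) 0 μ η.1 = mInt (-1) 0 μ (fun _ => 0) := by
        ext i j; exact i.elim0
      rw [hEq]
  -- main case
  obtain ⟨Pm, hPm⟩ : ∃ Pm : Fin d → Fin d → Measure ℝ,
      ∀ i j, Pm i j = ((μ i j).toJordanDecomposition.posPart).restrict (Icc (-1) 0) :=
    ⟨_, fun _ _ => rfl⟩
  obtain ⟨Nm, hNm⟩ : ∃ Nm : Fin d → Fin d → Measure ℝ,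
      ∀ i j, Nm i j = ((μ i j).toJordanDecomposition.negPart).restrict (Icc (-1) 0) :=
    ⟨_, fun _ _ => rfl⟩
  haveI hPf : ∀ i j, IsFiniteMeasure (Pm i j) := fun i j => (hPm i j) ▸ inferInstance
  haveI hNf : ∀ i j, IsFiniteMeasure (Nm i j) := fun i j => (hNm i j) ▸ inferInstance
  obtain ⟨ν, hν⟩ : ∃ ν : Measure ℝ, ν = ∑ p : Fin d × Fin d, (Pm p.1 p.2 + Nm p.1 p.2) :=
    ⟨_, rfl⟩
  haveI : IsFiniteMeasure ν := by
    constructor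
    rw [hν, Measure.finset_sum_apply]
    exact ENNReal.sum_lt_top.mpr fun p _ =>
      @measure_lt_top _ _ _ (by exact inferInstance) _
  have hPle : ∀ i j, Pm i j ≤ ν := by
    intro i j
    rw [Measure.le_iff]
    intro s hs
    rw [hν, Measure.finset_sum_apply]
    have step1 : Pm i j s ≤ (Pm i j + Nm i j) s := by
      rw [Measure.add_apply]; exact le_self_add
    have step2 : (Pm i j + Nm i j) s ≤ ∑ p : Fin d × Fin d, (Pm p.1 p.2 + Nm p.1 p.2) s :=
      Finset.single_le_sum (f := fun p : Fin d × Fin d => (Pm p.1 p.2 + Nm p.1 p.2) s)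
        (fun p _ => zero_le) (Finset.mem_univ (i, j))
    exact le_trans step1 step2
  have hNle : ∀ i j, Nm i j ≤ ν := by
    intro i j
    rw [Measure.le_iff]
    intro s hs
    rw [hν, Measure.finset_sum_apply]
    have step1 : Nm i j s ≤ (Pm i j + Nm i j) s := by
      rw [Measure.add_apply]; exact le_add_self
    have step2 : (Pm i j + Nm i j) s ≤ ∑ p : Fin d × Fin d, (Pm p.1 p.2 + Nm p.1 p.2) s :=
      Finset.single_le_sum (f := fun p : Fin d × Fin d => (Pm p.1 p.2 + Nm p.1 p.2) s)
        (fun p _ => zero_le) (Finset.mem_univ (i, j))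
    exact le_trans step1 step2
  obtain ⟨G, hG⟩ : ∃ G : Fin d → Fin d → ℝ → ℂ, ∀ i j,
      G i j = fun θ =>
        ((((Pm i j).rnDeriv ν θ).toReal - ((Nm i j).rnDeriv ν θ).toReal : ℝ) : ℂ) :=
    ⟨_, fun _ _ => rfl⟩
  have hGmem : ∀ i j, MemLp (G i j) 2 ν := by
    intro i j
    have hmeas : Measurable (G i j) := by
      rw [hG i j]
      exact Complex.measurable_ofReal.comp
        (((Measure.measurable_rnDeriv _ _).ennreal_toReal).sub
          ((Measure.measurable_rnDeriv _ _).ennreal_toReal))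
    refine MemLp.of_bound hmeas.aestronglyMeasurable 1 ?_
    filter_upwards [Measure.rnDeriv_le_one_of_le (hPle i j),
      Measure.rnDeriv_le_one_of_le (hNle i j)] with θ h1 h2
    have h1' : ((Pm i j).rnDeriv ν θ).toReal ≤ 1 := by
      simpa using ENNReal.toReal_mono one_ne_top h1
    have h2' : ((Nm i j).rnDeriv ν θ).toReal ≤ 1 := by
      simpa using ENNReal.toReal_mono one_ne_top h2
    have h3 : (0:ℝ) ≤ ((Pm i j).rnDeriv ν θ).toReal := ENNReal.toReal_nonneg
    have h4 : (0:ℝ) ≤ ((Nm i j).rnDeriv ν θ).toReal := ENNReal.toReal_nonneg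
    rw [hG i j]
    simp only [Complex.norm_real, Real.norm_eq_abs]
    rw [abs_le]
    constructor <;> linarith
  obtain ⟨GL2, hGL2⟩ : ∃ GL2 : Fin d → Fin d → Lp ℂ 2 ν,
      ∀ i j, GL2 i j = (hGmem i j).toLp (G i j) := ⟨_, fun _ _ => rfl⟩
  have hGL2coe : ∀ i j, (GL2 i j : ℝ → ℂ) =ᵐ[ν] G i j := by
    intro i j; rw [hGL2 i j]; exact (hGmem i j).coeFn_toLp
  -- membership and integrability facts for admissible symbols
  have hmemη : ∀ (η : ℝ → ℂ), Measurable η → (∀ θ, ‖η θ‖ ≤ 1) → MemLp η 2 ν :=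
    fun η hm hb => MemLp.of_bound hm.aestronglyMeasurable 1
      (ae_of_all _ fun θ => by simpa using hb θ)
  have hηint : ∀ (η : ℝ → ℂ), Measurable η → (∀ θ, ‖η θ‖ ≤ 1) →
      ∀ (Q : Measure ℝ), IsFiniteMeasure Q → Integrable η Q := by
    intro η hm hb Q hQ
    exact memLp_one_iff_integrable.mp (MemLp.of_bound hm.aestronglyMeasurable 1
      (ae_of_all _ fun θ => by simpa using hb θ))
  -- the key identity: sInt = inner product in L²(ν)
  have key : ∀ (η : ℝ → ℂ) (hm : Measurable η) (hb : ∀ θ, ‖η θ‖ ≤ 1)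
      (hmem : MemLp η 2 ν) (i j : Fin d),
      sInt (-1) 0 (μ i j) η = (inner ℂ (GL2 i j) (hmem.toLp η) : ℂ) := by
    intro η hm hb hmem i j
    have int1 : Integrable (fun θ => ((Pm i j).rnDeriv ν θ).toReal • η θ) ν :=
      (integrable_rnDeriv_smul_iff (hPle i j).absolutelyContinuous).mpr
        (hηint η hm hb (Pm i j) inferInstance)
    have int2 : Integrable (fun θ => ((Nm i j).rnDeriv ν θ).toReal • η θ) ν :=
      (integrable_rnDeriv_smul_iff (hNle i j).absolutelyContinuous).mpr
        (hηint η hm hb (Nm i j) inferInstance)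
    have e1 : (∫ θ in Icc (-1:ℝ) 0, η θ ∂(μ i j).toJordanDecomposition.posPart) =
        ∫ θ, ((Pm i j).rnDeriv ν θ).toReal • η θ ∂ν := by
      rw [integral_rnDeriv_smul (hPle i j).absolutelyContinuous, hPm i j]
    have e2 : (∫ θ in Icc (-1:ℝ) 0, η θ ∂(μ i j).toJordanDecomposition.negPart) =
        ∫ θ, ((Nm i j).rnDeriv ν θ).toReal • η θ ∂ν := by
      rw [integral_rnDeriv_smul (hNle i j).absolutelyContinuous, hNm i j]
    rw [sInt, e1, e2, ← integral_sub int1 int2, L2.inner_def]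
    refine integral_congr_ae ?_
    filter_upwards [hGL2coe i j, hmem.coeFn_toLp] with θ h1 h2
    rw [h1, h2, RCLike.inner_apply, hG i j]
    rw [Complex.conj_ofReal]
    push_cast
    simp only [Complex.real_smul]
    ring
  -- the compact set of the Banach-Alaoglu argument
  obtain ⟨R, hRdef⟩ : ∃ R : ℝ,
      R = (measureUnivNNReal ν : ℝ) ^ ((2:ℝ≥0∞).toReal)⁻¹ * 1 := ⟨_, rfl⟩
  have hR0 : (0:ℝ) ≤ R := by
    rw [hRdef]
    exact mul_nonneg (Real.rpow_nonneg (measureUnivNNReal ν).coe_nonneg _) zero_le_one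
  obtain ⟨K, hKdef⟩ : ∃ K : Set (WeakDual ℂ (Lp ℂ 2 ν)),
      K = (WeakDual.toStrongDual ⁻¹' Metric.closedBall 0 R) ∩
        ⋂ (E : Set ℝ) (hE : MeasurableSet E),
          {φ | ‖φ (indicatorConstLp 2 hE (measure_ne_top ν E) (1:ℂ))‖ ≤ (ν E).toReal} :=
    ⟨_, rfl⟩
  have hKmem : ∀ φ : WeakDual ℂ (Lp ℂ 2 ν), φ ∈ K ↔
      (‖WeakDual.toStrongDual φ‖ ≤ R ∧ ∀ (E : Set ℝ) (hE : MeasurableSet E),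
        ‖φ (indicatorConstLp 2 hE (measure_ne_top ν E) (1:ℂ))‖ ≤ (ν E).toReal) := by
    intro φ
    rw [hKdef]
    simp only [Set.mem_inter_iff, Set.mem_preimage, Metric.mem_closedBall, dist_zero_right,
      Set.mem_iInter, Set.mem_setOf_eq]
  have hKclosed : IsClosed K := by
    rw [hKdef]
    refine IsClosed.inter (WeakDual.isClosed_closedBall 0 R) ?_
    exact isClosed_iInter fun E => isClosed_iInter fun hE =>
      isClosed_le ((WeakDual.eval_continuous _).norm) continuous_const
  have hKcompact : IsCompact K :=
    (WeakDual.isCompact_closedBall (𝕜 := ℂ) 0 R).of_isClosed_subset hKclosed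
      (by rw [hKdef]; exact Set.inter_subset_left)
  -- the embedding of admissible symbols
  obtain ⟨Jmap, hJmap⟩ : ∃ Jmap : Lp ℂ 2 ν → WeakDual ℂ (Lp ℂ 2 ν),
      ∀ f x, (Jmap f) x = (inner ℂ f x : ℂ) :=
    ⟨fun f => StrongDual.toWeakDual (InnerProductSpace.toDual ℂ (Lp ℂ 2 ν) f),
      fun f x => rfl⟩
  have hJnorm : ∀ f, ‖WeakDual.toStrongDual (Jmap f)‖ ≤ ‖f‖ := by
    intro f
    have h1 : ∀ x, (WeakDual.toStrongDual (Jmap f)) x = (InnerProductSpace.toDual ℂ (Lp ℂ 2 ν) f) x := by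
      intro x
      rw [show (WeakDual.toStrongDual (Jmap f)) x = (Jmap f) x from rfl, hJmap,
        InnerProductSpace.toDual_apply_apply]
    have h2 : WeakDual.toStrongDual (Jmap f) = InnerProductSpace.toDual ℂ (Lp ℂ 2 ν) f :=
      ContinuousLinearMap.ext h1
    rw [h2, (InnerProductSpace.toDual ℂ (Lp ℂ 2 ν)).norm_map]
  have hmemK : ∀ (η : ℝ → ℂ) (hm : Measurable η) (hb : ∀ θ, ‖η θ‖ ≤ 1),
      Jmap ((hmemη η hm hb).toLp η) ∈ K := by
    intro η hm hb
    rw [hKmem]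
    constructor
    · refine le_trans (hJnorm _) ?_
      rw [hRdef]
      refine Lp.norm_le_of_ae_bound zero_le_one ?_
      filter_upwards [(hmemη η hm hb).coeFn_toLp] with θ hθ
      rw [hθ]
      simpa using hb θ
    · intro E hE
      rw [hJmap]
      rw [← RCLike.norm_conj, inner_conj_symm,
        L2.inner_indicatorConstLp_one hE (measure_ne_top ν E)]
      have hsub : (∫ θ in E, ((hmemη η hm hb).toLp η : ℝ → ℂ) θ ∂ν) = ∫ θ in E, η θ ∂ν :=
        setIntegral_congr_ae hE ((hmemη η hm hb).coeFn_toLp.mono fun θ hθ _ => hθ)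
      rw [hsub]
      calc ‖∫ θ in E, η θ ∂ν‖ ≤ ∫ θ in E, ‖η θ‖ ∂ν := norm_integral_le_integral_norm _
        _ ≤ ∫ θ in E, (1:ℝ) ∂ν := by
            refine setIntegral_mono_on ((hηint η hm hb ν inferInstance).norm.integrableOn)
              ((integrableOn_const_iff).mpr (Or.inr (measure_lt_top ν E))) hE ?_
            intro θ _
            simpa using hb θ
        _ = (ν E).toReal := by rw [setIntegral_const, smul_eq_mul, mul_one, measureReal_def]
  have hKne : K.Nonempty :=
    ⟨_, hmemK (fun _ => 0) measurable_const (by simp)⟩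
  -- maximize the spectral radius over K
  obtain ⟨φs, hφsK, hmax⟩ := exists_max_specRad (X := WeakDual ℂ (Lp ℂ 2 ν)) hd
    hKcompact hKclosed hKne
    (g := fun φ => Matrix.of fun i j => (starRingEnd ℂ) (φ (GL2 i j)))
    (fun i j => by
      simp only [Matrix.of_apply, starRingEnd_apply]
      exact (WeakDual.eval_continuous (GL2 i j)).star)
  -- identify the maximizer with an admissible symbol
  obtain ⟨η₀, hη₀⟩ : ∃ η₀ : Lp ℂ 2 ν,
      η₀ = (InnerProductSpace.toDual ℂ (Lp ℂ 2 ν)).symm (WeakDual.toStrongDual φs) :=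
    ⟨_, rfl⟩
  have happ : ∀ x, φs x = (inner ℂ η₀ x : ℂ) := by
    intro x
    have h := (InnerProductSpace.toDual ℂ (Lp ℂ 2 ν)).apply_symm_apply
      (WeakDual.toStrongDual φs)
    calc φs x = (WeakDual.toStrongDual φs) x := rfl
      _ = (InnerProductSpace.toDual ℂ (Lp ℂ 2 ν) η₀) x := by rw [hη₀, h]
      _ = (inner ℂ η₀ x : ℂ) := InnerProductSpace.toDual_apply_apply
  have hEb : ∀ (E : Set ℝ) (hE : MeasurableSet E),
      ‖∫ θ in E, (η₀ : ℝ → ℂ) θ ∂ν‖ ≤ (ν E).toReal := by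
    intro E hE
    have h2 := ((hKmem φs).mp hφsK).2 E hE
    rw [happ] at h2
    have h3 : ‖(inner ℂ (indicatorConstLp 2 hE (measure_ne_top ν E) (1:ℂ)) η₀ : ℂ)‖ ≤
        (ν E).toReal := by
      rw [← RCLike.norm_conj, inner_conj_symm]; exact h2
    rw [L2.inner_indicatorConstLp_one hE (measure_ne_top ν E) η₀] at h3
    simpa using h3
  -- a measurable representative
  obtain ⟨h, hhm, hhae⟩ : ∃ h : ℝ → ℂ, Measurable h ∧ (η₀ : ℝ → ℂ) =ᵐ[ν] h :=
    ⟨(Lp.aestronglyMeasurable η₀).mk _,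
      (Lp.aestronglyMeasurable η₀).stronglyMeasurable_mk.measurable,
      (Lp.aestronglyMeasurable η₀).ae_eq_mk⟩
  have hint : Integrable h ν :=
    ((Lp.memLp η₀).integrable one_le_two).congr hhae
  have hb' : ∀ (E : Set ℝ), MeasurableSet E →
      ‖∫ θ in E, h θ ∂ν‖ ≤ (ν E).toReal := by
    intro E hE
    have : (∫ θ in E, h θ ∂ν) = ∫ θ in E, (η₀ : ℝ → ℂ) θ ∂ν :=
      (setIntegral_congr_ae hE (hhae.mono fun θ hθ _ => hθ)).symm
    rw [this]
    exact hEb E hE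
  have hae1 : ∀ᵐ θ ∂ν, ‖h θ‖ ≤ 1 :=
    ae_abs_le_one_of_setIntegral hhm hint hb'
  obtain ⟨ηstar, hηstar⟩ : ∃ ηstar : ℝ → ℂ,
      ηstar = fun θ => if ‖h θ‖ ≤ 1 then h θ else 0 := ⟨_, rfl⟩
  have hstarm : Measurable ηstar := by
    rw [hηstar]
    exact Measurable.ite (measurableSet_le hhm.norm measurable_const) hhm measurable_const
  have hηstarθ : ∀ θ, ηstar θ = if ‖h θ‖ ≤ 1 then h θ else 0 := by
    intro θ; rw [hηstar]
  have hstarb : ∀ θ, ‖ηstar θ‖ ≤ 1 := by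
    intro θ
    rw [hηstarθ θ]
    split_ifs with hc
    · simpa using hc
    · simp
  have hstar_ae : ηstar =ᵐ[ν] (η₀ : ℝ → ℂ) := by
    filter_upwards [hae1, hhae] with θ h1 h2
    rw [hηstarθ θ]
    rw [if_pos (show ‖h θ‖ ≤ 1 by simpa using h1)]
    exact h2.symm
  have hstarmem : MemLp ηstar 2 ν := hmemη ηstar hstarm hstarb
  have htoLp : hstarmem.toLp ηstar = η₀ := by
    have h1 : hstarmem.toLp ηstar = (Lp.memLp η₀).toLp (η₀ : ℝ → ℂ) :=
      (MemLp.toLp_eq_toLp_iff _ _).mpr hstar_ae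
    rw [h1, Lp.toLp_coeFn]
  -- matrix identities
  have hmm : ∀ (η : ℝ → ℂ) (hm : Measurable η) (hb : ∀ θ, ‖η θ‖ ≤ 1),
      mInt (-1) 0 μ η =
        Matrix.of fun i j => (starRingEnd ℂ) ((Jmap ((hmemη η hm hb).toLp η)) (GL2 i j)) := by
    intro η hm hb
    ext i j
    rw [mInt, Matrix.of_apply, Matrix.of_apply, key η hm hb (hmemη η hm hb) i j, hJmap,
      ← inner_conj_symm]
  have hstar_matrix : mInt (-1) 0 μ ηstar =
      Matrix.of fun i j => (starRingEnd ℂ) (φs (GL2 i j)) := by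
    ext i j
    rw [mInt, Matrix.of_apply, Matrix.of_apply, key ηstar hstarm hstarb hstarmem i j, htoLp,
      happ, ← inner_conj_symm]
  -- conclusion
  refine ⟨ηstar, hstarm, hstarb, le_antisymm ?_ ?_⟩
  · exact le_iSup (fun η : {η : ℝ → ℂ // Measurable η ∧ ∀ θ, ‖η θ‖ ≤ 1} =>
      spectralRadius ℂ (mInt (-1) 0 μ η.1)) ⟨ηstar, hstarm, hstarb⟩
  · refine iSup_le fun η => ?_
    rw [hmm η.1 η.2.1 η.2.2, hstar_matrix]
    exact hmax _ (hmemK η.1 η.2.1 η.2.2)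
end

section
/- Let $M$ be a normalized function of bounded variation on $[-1,0]$ with values in $\mathcal{M}_d(\mathbb{R})$, with associated measure $\mu$, and suppose $\rho_{\mathrm{HS}}(M) := \sup_{\xi \text{ Borel}, \xi \colon [-1,0] \to \mathbb{R}} \rho\left(\int_{-1}^0 e^{i\xi(\theta)}\, dM(\theta)\right) < 1$. Then there exists $\nu > 0$ such that for every Borel-measurable $\varphi \colon [-1,0] \to [-1,0]$ and every $s = a + ib$ with $|a| \le \nu$, one has $\det\left(I - \int_{-1}^0 e^{s\varphi(\theta)}\, dM(\theta)\right) \ne 0$. -/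
open MeasureTheory Set ENNReal NNReal Complex

attribute [local instance] Matrix.normedAddCommGroup Matrix.normedSpace

section Aux
open Polynomial

lemma eval_charpoly_eq {d : ℕ} (B : Matrix (Fin d) (Fin d) ℂ) (r : ℂ) :
    (Matrix.charpoly B).eval r = (Matrix.scalar (Fin d) r - B).det := by
  rw [Matrix.charpoly, _root_.eval_det, Matrix.matPolyEquiv_charmatrix]
  simp

lemma multiset_pow_le_prod {ρ : ℝ} (hρ : ρ ≤ 1) (s : Multiset ℝ)
    (h : ∀ x ∈ s, (1 - ρ) ≤ x) : (1 - ρ) ^ Multiset.card s ≤ s.prod := by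
  induction s using Multiset.induction_on with
  | empty => simp
  | cons a s ih =>
    have ha : (1 - ρ) ≤ a := h a (Multiset.mem_cons_self a s)
    have hs : ∀ x ∈ s, (1 - ρ) ≤ x := fun x hx => h x (Multiset.mem_cons_of_mem hx)
    have h0 : (0:ℝ) ≤ 1 - ρ := by linarith
    rw [Multiset.card_cons, Multiset.prod_cons, pow_succ, mul_comm]
    exact mul_le_mul ha (ih hs) (pow_nonneg h0 _) (le_trans h0 ha)

lemma det_one_sub_lb {d : ℕ} (B : Matrix (Fin d) (Fin d) ℂ) {ρ : ℝ}
    (hρ0 : 0 ≤ ρ) (hρ1 : ρ < 1)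
    (hsp : ∀ z ∈ spectrum ℂ B, ‖z‖ ≤ ρ) :
    (1 - ρ) ^ d ≤ ‖(1 - B).det‖ := by
  set p := Matrix.charpoly B with hp
  have hmonic : p.Monic := Matrix.charpoly_monic B
  have hsplits : p.Splits := IsAlgClosed.splits p
  have hdeg : p.natDegree = d := by
    rw [hp, Matrix.charpoly_natDegree_eq_dim, Fintype.card_fin]
  have hcard : Multiset.card p.roots = d := by
    rw [← hdeg]; exact (Polynomial.splits_iff_card_roots.mp hsplits)
  have hfac : p = (p.roots.map fun a => X - C a).prod :=
    hsplits.eq_prod_roots_of_monic hmonic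
  have hroot_spec : ∀ a ∈ p.roots, a ∈ spectrum ℂ B := by
    intro a ha
    have hr : p.eval a = 0 := Polynomial.isRoot_of_mem_roots ha
    rw [eval_charpoly_eq] at hr
    rw [spectrum.mem_iff]
    intro hU
    have halg : (algebraMap ℂ (Matrix (Fin d) (Fin d) ℂ)) a = Matrix.scalar (Fin d) a := rfl
    rw [halg] at hU
    have := (Matrix.isUnit_iff_isUnit_det _).mp hU
    rw [hr] at this
    simp at this
  have heval : (1 - B).det = p.eval 1 := by
    rw [eval_charpoly_eq]
    congr 1
  rw [heval, hfac, Polynomial.eval_multiset_prod, Multiset.map_map]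
  have hmapeq : Multiset.map (Polynomial.eval 1 ∘ fun a : ℂ => X - C a) p.roots
      = Multiset.map (fun a : ℂ => 1 - a) p.roots :=
    Multiset.map_congr rfl (by intro a _; simp)
  rw [hmapeq]
  have hnorm : ‖(Multiset.map (fun a : ℂ => 1 - a) p.roots).prod‖
      = (Multiset.map (fun a : ℂ => ‖(1:ℂ) - a‖) p.roots).prod := by
    rw [show (fun a : ℂ => ‖(1:ℂ) - a‖) = (fun z : ℂ => ‖z‖) ∘ (fun a : ℂ => 1 - a) from rfl]
    rw [← Multiset.map_map]
    exact map_multiset_prod (normHom : ℂ →*₀ ℝ) _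
  rw [hnorm]
  have := multiset_pow_le_prod (le_of_lt hρ1)
    (Multiset.map (fun a : ℂ => ‖(1:ℂ) - a‖) p.roots) ?_
  · rwa [Multiset.card_map, hcard] at this
  · intro x hx
    obtain ⟨a, ha, rfl⟩ := Multiset.mem_map.mp hx
    have h1 : ‖a‖ ≤ ρ := hsp a (hroot_spec a ha)
    calc 1 - ρ ≤ 1 - ‖a‖ := by linarith
      _ = ‖(1:ℂ)‖ - ‖a‖ := by simp
      _ ≤ ‖(1:ℂ) - a‖ := norm_sub_norm_le 1 a


noncomputable def detCLM (d : ℕ) :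
    ContinuousMultilinearMap ℂ (fun _ : Fin d => (Fin d → ℂ)) ℂ :=
  MultilinearMap.mkContinuous
    ((Matrix.detRowAlternating : (Fin d → ℂ) [⋀^Fin d]→ₗ[ℂ] ℂ).toMultilinearMap)
    (d.factorial) (by
      intro m
      have h1 : (Matrix.detRowAlternating : (Fin d → ℂ) [⋀^Fin d]→ₗ[ℂ] ℂ).toMultilinearMap m
          = Matrix.det (Matrix.of m) := rfl
      rw [h1, Matrix.det_apply]
      calc ‖∑ σ : Equiv.Perm (Fin d), Equiv.Perm.sign σ • ∏ i, Matrix.of m (σ i) i‖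
          ≤ ∑ σ : Equiv.Perm (Fin d), ‖Equiv.Perm.sign σ • ∏ i, Matrix.of m (σ i) i‖ :=
            norm_sum_le _ _
        _ ≤ ∑ _σ : Equiv.Perm (Fin d), ∏ i, ‖m i‖ := by
            refine Finset.sum_le_sum fun σ _ => ?_
            have hs : ‖Equiv.Perm.sign σ • ∏ i, Matrix.of m (σ i) i‖
                = ‖∏ i, Matrix.of m (σ i) i‖ := by
              rcases Int.units_eq_one_or (Equiv.Perm.sign σ) with h | h <;>
                simp [h, Units.smul_def]
            rw [hs]
            rw [norm_prod]
            calc ∏ i, ‖Matrix.of m (σ i) i‖ ≤ ∏ i, ‖m (σ i)‖ := by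
                  refine Finset.prod_le_prod (fun i _ => norm_nonneg _) fun i _ => ?_
                  exact norm_le_pi_norm (m (σ i)) i
              _ = ∏ i, ‖m i‖ := Equiv.prod_comp σ fun i => ‖m i‖
        _ = (d.factorial : ℝ) * ∏ i, ‖m i‖ := by
            rw [Finset.sum_const, Finset.card_univ, Fintype.card_perm, Fintype.card_fin,
              nsmul_eq_mul]
            )

lemma detCLM_apply {d : ℕ} (A : Matrix (Fin d) (Fin d) ℂ) :
    detCLM d (fun i => A i) = A.det := rfl

lemma detCLM_norm_le (d : ℕ) : ‖detCLM d‖ ≤ (d.factorial : ℝ) :=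
  MultilinearMap.mkContinuous_norm_le _ (by positivity) _


lemma det_sub_det {d : ℕ} {K ε : ℝ} (hK : 0 ≤ K) (hε : 0 ≤ ε)
    (A B : Matrix (Fin d) (Fin d) ℂ)
    (hA : ∀ i j, ‖A i j‖ ≤ K) (hB : ∀ i j, ‖B i j‖ ≤ K)
    (hAB : ∀ i j, ‖A i j - B i j‖ ≤ ε) :
    ‖A.det - B.det‖ ≤ (d.factorial : ℝ) * d * K ^ (d - 1) * ε := by
  have mA : ∀ i : Fin d, ‖(fun i => A i) i‖ ≤ K := fun i =>
    pi_norm_le_iff_of_nonneg hK |>.2 fun j => hA i j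
  have hnA : ‖(fun i => A i : ∀ _ : Fin d, Fin d → ℂ)‖ ≤ K :=
    pi_norm_le_iff_of_nonneg hK |>.2 mA
  have hnB : ‖(fun i => B i : ∀ _ : Fin d, Fin d → ℂ)‖ ≤ K :=
    pi_norm_le_iff_of_nonneg hK |>.2 fun i =>
      pi_norm_le_iff_of_nonneg hK |>.2 fun j => hB i j
  have hnAB : ‖(fun i => A i : ∀ _ : Fin d, Fin d → ℂ) - (fun i => B i)‖ ≤ ε :=
    pi_norm_le_iff_of_nonneg hε |>.2 fun i =>
      pi_norm_le_iff_of_nonneg hε |>.2 fun j => hAB i j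
  have h := (detCLM d).norm_image_sub_le (fun i => A i) (fun i => B i)
  rw [detCLM_apply, detCLM_apply] at h
  refine h.trans ?_
  have hcard : (Fintype.card (Fin d) : ℝ) = d := by simp
  have hmax : max ‖(fun i => A i : ∀ _ : Fin d, Fin d → ℂ)‖ ‖(fun i => B i : ∀ _ : Fin d, Fin d → ℂ)‖ ≤ K :=
    max_le hnA hnB
  calc ‖detCLM d‖ * (Fintype.card (Fin d)) *
        max ‖(fun i => A i : ∀ _ : Fin d, Fin d → ℂ)‖ ‖(fun i => B i : ∀ _ : Fin d, Fin d → ℂ)‖ ^ (Fintype.card (Fin d) - 1) *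
        ‖(fun i => A i : ∀ _ : Fin d, Fin d → ℂ) - (fun i => B i)‖
      ≤ (d.factorial : ℝ) * d * K ^ (d - 1) * ε := by
        rw [Fintype.card_fin]
        have h1 : (0:ℝ) ≤ max ‖(fun i => A i : ∀ _ : Fin d, Fin d → ℂ)‖ ‖(fun i => B i : ∀ _ : Fin d, Fin d → ℂ)‖ :=
          le_max_of_le_left (norm_nonneg _)
        exact mul_le_mul (mul_le_mul (mul_le_mul (detCLM_norm_le d) le_rfl (by positivity)
          (by positivity)) (pow_le_pow_left₀ h1 hmax _) (pow_nonneg h1 _) (by positivity))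
          hnAB (norm_nonneg _) (by positivity)



/-- total mass of the Jordan parts on `[a,b]`. -/
noncomputable def jMass (a b : ℝ) (s : SignedMeasure ℝ) : ℝ :=
  (s.toJordanDecomposition.posPart (Set.Icc a b)).toReal +
  (s.toJordanDecomposition.negPart (Set.Icc a b)).toReal

lemma jMass_nonneg (a b : ℝ) (s : SignedMeasure ℝ) : 0 ≤ jMass a b s := by
  unfold jMass; positivity

lemma sInt_norm_le (a b : ℝ) (s : SignedMeasure ℝ) {ψ : ℝ → ℂ} {C : ℝ}
    (hψ : ∀ θ, ‖ψ θ‖ ≤ C) : ‖sInt a b s ψ‖ ≤ C * jMass a b s := by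
  have h1 : ‖∫ θ in Set.Icc a b, ψ θ ∂s.toJordanDecomposition.posPart‖
      ≤ C * (s.toJordanDecomposition.posPart (Set.Icc a b)).toReal := by
    have := norm_integral_le_of_norm_le_const
      (μ := s.toJordanDecomposition.posPart.restrict (Set.Icc a b))
      (f := ψ) (C := C) (Filter.Eventually.of_forall (fun x => hψ x))
    simpa [Measure.restrict_apply_univ, measureReal_def] using this
  have h2 : ‖∫ θ in Set.Icc a b, ψ θ ∂s.toJordanDecomposition.negPart‖
      ≤ C * (s.toJordanDecomposition.negPart (Set.Icc a b)).toReal := by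
    have := norm_integral_le_of_norm_le_const
      (μ := s.toJordanDecomposition.negPart.restrict (Set.Icc a b))
      (f := ψ) (C := C) (Filter.Eventually.of_forall (fun x => hψ x))
    simpa [Measure.restrict_apply_univ, measureReal_def] using this
  calc ‖sInt a b s ψ‖ ≤ _ + _ := norm_sub_le _ _
    _ ≤ C * (s.toJordanDecomposition.posPart (Set.Icc a b)).toReal
        + C * (s.toJordanDecomposition.negPart (Set.Icc a b)).toReal := add_le_add h1 h2
    _ = C * jMass a b s := by rw [jMass]; ring

lemma integrable_of_bdd {ν : Measure ℝ} [IsFiniteMeasure ν] {ψ : ℝ → ℂ} {C : ℝ}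
    (hm : Measurable ψ) (hb : ∀ θ, ‖ψ θ‖ ≤ C) : Integrable ψ ν :=
  (integrable_const C).mono' hm.aestronglyMeasurable
    (Filter.Eventually.of_forall fun x => hb x)

lemma sInt_sub_s13 (a b : ℝ) (s : SignedMeasure ℝ) {ψ₁ ψ₂ : ℝ → ℂ} {C₁ C₂ : ℝ}
    (h1 : Measurable ψ₁) (h2 : Measurable ψ₂)
    (hb1 : ∀ θ, ‖ψ₁ θ‖ ≤ C₁) (hb2 : ∀ θ, ‖ψ₂ θ‖ ≤ C₂) :
    sInt a b s ψ₁ - sInt a b s ψ₂ = sInt a b s (fun θ => ψ₁ θ - ψ₂ θ) := by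
  unfold sInt
  rw [integral_sub (integrable_of_bdd h1 hb1) (integrable_of_bdd h2 hb2),
    integral_sub (integrable_of_bdd h1 hb1) (integrable_of_bdd h2 hb2)]
  ring

end Aux

set_option maxHeartbeats 2000000 in
theorem stmt13 (d : ℕ) (M : ℝ → Matrix (Fin d) (Fin d) ℝ)
    (μ : Fin d → Fin d → SignedMeasure ℝ)
    (hnorm : Normalized M (-1) 0) (hlink : IsLinked M μ (-1) 0)
    (hBV : eVariationOn M (Set.Icc (-1) 0) ≠ ⊤)
    (hrho : rhoHS μ < 1) :
    ∃ ν > (0:ℝ), ∀ φ : ℝ → ℝ, Measurable φ → (∀ θ, φ θ ∈ Set.Icc (-1:ℝ) 0) →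
      ∀ s : ℂ, |s.re| ≤ ν →
        Matrix.det (1 - mInt (-1) 0 μ fun θ => Complex.exp (s * (φ θ : ℂ))) ≠ 0 := by
  have hrho_ne_top : rhoHS μ ≠ ⊤ := (hrho.trans_le le_top).ne
  set ρ₀ : ℝ := (rhoHS μ).toReal with hρ₀def
  have hρ₀0 : 0 ≤ ρ₀ := ENNReal.toReal_nonneg
  have hρ₀1 : ρ₀ < 1 := by
    have h := (ENNReal.toReal_lt_toReal hrho_ne_top (by norm_num : (1:ℝ≥0∞) ≠ ⊤)).mpr hrho
    simpa using h
  set V : ℝ := ∑ i : Fin d, ∑ j : Fin d, jMass (-1) 0 (μ i j) with hVdef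
  have hV0 : 0 ≤ V := Finset.sum_nonneg fun i _ =>
    Finset.sum_nonneg fun j _ => jMass_nonneg _ _ _
  have hVij : ∀ i j : Fin d, jMass (-1) 0 (μ i j) ≤ V := by
    intro i j
    calc jMass (-1) 0 (μ i j) ≤ ∑ j' : Fin d, jMass (-1) 0 (μ i j') :=
          Finset.single_le_sum (fun j' _ => jMass_nonneg _ _ _) (Finset.mem_univ j)
      _ ≤ V := Finset.single_le_sum
          (f := fun i' => ∑ j' : Fin d, jMass (-1) 0 (μ i' j'))
          (fun i' _ => Finset.sum_nonneg fun j' _ => jMass_nonneg _ _ _) (Finset.mem_univ i)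
  set K : ℝ := 1 + Real.exp 1 * V with hKdef
  have hK0 : 0 ≤ K := by positivity
  set Cd : ℝ := (d.factorial : ℝ) * d * K ^ (d - 1) with hCddef
  have hCd0 : 0 ≤ Cd := by positivity
  set δ : ℝ := (1 - ρ₀) ^ d with hδdef
  have hδ0 : 0 < δ := pow_pos (by linarith) d
  have hden : (0:ℝ) < 2 * Cd * V + 1 := by positivity
  refine ⟨min 1 (δ / (2 * Cd * V + 1)), lt_min one_pos (div_pos hδ0 hden), ?_⟩
  set ν : ℝ := min 1 (δ / (2 * Cd * V + 1)) with hνdef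
  have hν1 : ν ≤ 1 := min_le_left _ _
  have hν2 : ν ≤ δ / (2 * Cd * V + 1) := min_le_right _ _
  have hν0 : 0 ≤ ν := le_min zero_le_one (le_of_lt (div_pos hδ0 hden))
  intro φ hφ hφmem s hs
  have hφ1 : ∀ θ, |φ θ| ≤ 1 := by
    intro θ
    obtain ⟨h1, h2⟩ := hφmem θ
    rw [abs_le]; constructor <;> linarith
  have hsre1 : |s.re| ≤ 1 := hs.trans hν1
  set ψA : ℝ → ℂ := fun θ => Complex.exp (s * (φ θ : ℂ)) with hψAdef
  set ψB : ℝ → ℂ := fun θ => Complex.exp (Complex.I * ((s.im * φ θ : ℝ) : ℂ)) with hψBdef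
  have hmA : Measurable ψA :=
    Complex.measurable_exp.comp ((Complex.measurable_ofReal.comp hφ).const_mul s)
  have hmB : Measurable ψB :=
    Complex.measurable_exp.comp
      ((Complex.measurable_ofReal.comp (hφ.const_mul s.im)).const_mul Complex.I)
  have hbB : ∀ θ, ‖ψB θ‖ = 1 := by
    intro θ
    rw [hψBdef]
    simp [Complex.norm_exp]
  have hbA : ∀ θ, ‖ψA θ‖ ≤ Real.exp 1 := by
    intro θ
    rw [hψAdef]
    simp only [Complex.norm_exp]
    apply Real.exp_le_exp.mpr
    have : (s * (φ θ : ℂ)).re = s.re * φ θ := by simp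
    rw [this]
    calc s.re * φ θ ≤ |s.re * φ θ| := le_abs_self _
      _ = |s.re| * |φ θ| := abs_mul _ _
      _ ≤ 1 * 1 := mul_le_mul hsre1 (hφ1 θ) (abs_nonneg _) zero_le_one
      _ = 1 := one_mul 1
  -- pointwise difference bound
  have hdiff : ∀ θ, ‖ψA θ - ψB θ‖ ≤ 2 * ν := by
    intro θ
    have hsplit : s * (φ θ : ℂ) = ((s.re * φ θ : ℝ) : ℂ) + Complex.I * ((s.im * φ θ : ℝ) : ℂ) := by
      apply Complex.ext <;> simp
    have hfact : ψA θ - ψB θ = (Complex.exp ((s.re * φ θ : ℝ) : ℂ) - 1) * ψB θ := by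
      rw [hψAdef, hψBdef]
      simp only [hsplit, Complex.exp_add]
      ring
    rw [hfact, norm_mul, hbB θ, mul_one]
    have hre : Complex.exp ((s.re * φ θ : ℝ) : ℂ) - 1 = ((Real.exp (s.re * φ θ) - 1 : ℝ) : ℂ) := by
      push_cast [Complex.ofReal_exp]
      ring
    rw [hre, Complex.norm_real, Real.norm_eq_abs]
    have habs : |s.re * φ θ| ≤ ν := by
      rw [abs_mul]
      calc |s.re| * |φ θ| ≤ ν * 1 := mul_le_mul hs (hφ1 θ) (abs_nonneg _) hν0
        _ = ν := mul_one ν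
    have := Real.abs_exp_sub_one_le (x := s.re * φ θ) (habs.trans hν1)
    calc |Real.exp (s.re * φ θ) - 1| ≤ 2 * |s.re * φ θ| := this
      _ ≤ 2 * ν := by linarith
  set A := mInt (-1) 0 μ ψA with hAdef
  set B := mInt (-1) 0 μ ψB with hBdef
  -- spectrum bound
  have hsp : ∀ z ∈ spectrum ℂ B, ‖z‖ ≤ ρ₀ := by
    intro z hz
    have h1 : (‖z‖₊ : ℝ≥0∞) ≤ spectralRadius ℂ B :=
      le_iSup₂ (f := fun k (_ : k ∈ spectrum ℂ B) => (‖k‖₊ : ℝ≥0∞)) z hz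
    have h2 : spectralRadius ℂ B ≤ rhoHS μ :=
      le_iSup (fun ξ : {ξ : ℝ → ℝ // Measurable ξ} =>
        spectralRadius ℂ (mInt (-1) 0 μ (fun θ => Complex.exp (Complex.I * (ξ.1 θ : ℂ)))))
        ⟨fun θ => s.im * φ θ, hφ.const_mul s.im⟩
    have h3 : (‖z‖₊ : ℝ≥0∞) ≤ rhoHS μ := h1.trans h2
    calc ‖z‖ = ((‖z‖₊ : ℝ≥0∞)).toReal := by simp
      _ ≤ ρ₀ := ENNReal.toReal_mono hrho_ne_top h3
  have hdetB : δ ≤ ‖(1 - B).det‖ := det_one_sub_lb B hρ₀0 hρ₀1 hsp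
  -- entry bounds
  have hone : ∀ i j : Fin d, ‖(1 : Matrix (Fin d) (Fin d) ℂ) i j‖ ≤ 1 := by
    intro i j
    rw [Matrix.one_apply]
    split <;> simp
  have hexp1 : (1:ℝ) ≤ Real.exp 1 := by
    have := Real.add_one_le_exp (1:ℝ); linarith
  have hentA : ∀ i j, ‖(1 - A) i j‖ ≤ K := by
    intro i j
    rw [Matrix.sub_apply]
    calc ‖(1 : Matrix (Fin d) (Fin d) ℂ) i j - A i j‖
        ≤ ‖(1 : Matrix (Fin d) (Fin d) ℂ) i j‖ + ‖A i j‖ := norm_sub_le _ _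
      _ ≤ 1 + Real.exp 1 * V := by
          refine add_le_add (hone i j) ?_
          have : ‖A i j‖ ≤ Real.exp 1 * jMass (-1) 0 (μ i j) := sInt_norm_le _ _ _ hbA
          refine this.trans ?_
          exact mul_le_mul_of_nonneg_left (hVij i j) (le_of_lt (Real.exp_pos 1))
      _ = K := hKdef.symm
  have hentB : ∀ i j, ‖(1 - B) i j‖ ≤ K := by
    intro i j
    rw [Matrix.sub_apply]
    calc ‖(1 : Matrix (Fin d) (Fin d) ℂ) i j - B i j‖
        ≤ ‖(1 : Matrix (Fin d) (Fin d) ℂ) i j‖ + ‖B i j‖ := norm_sub_le _ _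
      _ ≤ 1 + Real.exp 1 * V := by
          refine add_le_add (hone i j) ?_
          have h1 : ‖B i j‖ ≤ 1 * jMass (-1) 0 (μ i j) :=
            sInt_norm_le _ _ _ (fun θ => le_of_eq (hbB θ))
          rw [one_mul] at h1
          calc ‖B i j‖ ≤ jMass (-1) 0 (μ i j) := h1
            _ ≤ V := hVij i j
            _ ≤ Real.exp 1 * V := le_mul_of_one_le_left hV0 hexp1
      _ = K := hKdef.symm
  have hentAB : ∀ i j, ‖(1 - A) i j - (1 - B) i j‖ ≤ 2 * ν * V := by
    intro i j
    have heq : (1 - A) i j - (1 - B) i j = -(A i j - B i j) := by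
      simp [Matrix.sub_apply]
    rw [heq, norm_neg]
    have hABij : A i j - B i j = sInt (-1) 0 (μ i j) (fun θ => ψA θ - ψB θ) :=
      sInt_sub_s13 _ _ _ hmA hmB hbA (fun θ => le_of_eq (hbB θ))
    rw [hABij]
    have := sInt_norm_le (-1) 0 (μ i j) (ψ := fun θ => ψA θ - ψB θ) (C := 2 * ν) hdiff
    refine this.trans ?_
    exact mul_le_mul_of_nonneg_left (hVij i j) (by linarith)
  -- determinant perturbation
  have hdd : ‖(1 - A).det - (1 - B).det‖ ≤ Cd * (2 * ν * V) := by
    have := det_sub_det hK0 (by positivity) (1 - A) (1 - B) hentA hentB hentAB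
    calc ‖(1 - A).det - (1 - B).det‖
        ≤ (d.factorial : ℝ) * d * K ^ (d - 1) * (2 * ν * V) := this
      _ = Cd * (2 * ν * V) := by rw [hCddef]
  have hsmall : Cd * (2 * ν * V) < δ := by
    have h1 : Cd * (2 * ν * V) = (2 * Cd * V) * ν := by ring
    have h2 : (2 * Cd * V) * ν ≤ (2 * Cd * V) * (δ / (2 * Cd * V + 1)) :=
      mul_le_mul_of_nonneg_left hν2 (by positivity)
    have h3 : (2 * Cd * V) * (δ / (2 * Cd * V + 1)) < δ := by
      rw [mul_div_assoc']
      rw [div_lt_iff₀ hden]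
      nlinarith
    linarith
  intro hdet0
  have : ‖(1 - B).det‖ = ‖(1 - A).det - (1 - B).det‖ := by
    rw [hdet0, zero_sub, norm_neg]
  rw [this] at hdetB
  linarith
end
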